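/- arXiv:1504.03087 — 12 statements merged into one kernel-verified Lean document; each statement's English description precedes it below -/
import Mathlib

section
/- Fix an index i with 1 ≤ i ≤ N−1, matrices A_j ∈ ℝ^{p×n_j} for j = 1,…,N, a vector b ∈ ℝ^p, and vectors x_j ∈ ℝ^{n_j}, x_j^k ∈ ℝ^{n_j}, x_j^{k+1} ∈ ℝ^{n_j}. Then ⟨A_i x_i − A_i x_i^{k+1}, Σ_{j=i+1}^{N} A_j (x_j^k − x_j^{k+1})⟩ ≤ ½ (‖Σ_{j=1}^{i} A_j x_j + Σ_{j=i+1}^{N} A_j x_j^k − b‖² − ‖Σ_{j=1}^{i} A_j x_j + Σ_{j=i+1}^{N} A_j x_j^{k+1} − b‖²) + ½ ‖Σ_{j=1}^{i-1} A_j x_j + Σ_{j=i}^{N} A_j x_j^{k+1} − b‖². -/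
open Finset
open scoped RealInnerProductSpace

theorem stmt_1 (N p : ℕ) (n : ℕ → ℕ) (i : ℕ) (hi1 : 1 ≤ i) (hi2 : i ≤ N - 1)
    (A : (j : ℕ) → EuclideanSpace ℝ (Fin (n j)) →L[ℝ] EuclideanSpace ℝ (Fin p))
    (b : EuclideanSpace ℝ (Fin p))
    (x xk xk1 : (j : ℕ) → EuclideanSpace ℝ (Fin (n j))) :
    ⟪A i (x i) - A i (xk1 i), ∑ j ∈ Icc (i + 1) N, A j (xk j - xk1 j)⟫ ≤
      1 / 2 * (‖(∑ j ∈ Icc 1 i, A j (x j)) + (∑ j ∈ Icc (i + 1) N, A j (xk j)) - b‖ ^ 2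
          - ‖(∑ j ∈ Icc 1 i, A j (x j)) + (∑ j ∈ Icc (i + 1) N, A j (xk1 j)) - b‖ ^ 2)
        + 1 / 2 * ‖(∑ j ∈ Icc 1 (i - 1), A j (x j)) + (∑ j ∈ Icc i N, A j (xk1 j)) - b‖ ^ 2 := by
  have hiN : i ≤ N := by omega
  set u : EuclideanSpace ℝ (Fin p) := A i (x i) - A i (xk1 i) with hu
  set d : EuclideanSpace ℝ (Fin p) := ∑ j ∈ Icc (i + 1) N, (A j (xk j) - A j (xk1 j)) with hd
  set P : EuclideanSpace ℝ (Fin p) :=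
    (∑ j ∈ Icc 1 i, A j (x j)) + (∑ j ∈ Icc (i + 1) N, A j (xk1 j)) - b with hP
  have e1 : ∑ j ∈ Icc (i + 1) N, A j (xk j - xk1 j) = d := by
    simp [hd, map_sub]
  have e2 : (∑ j ∈ Icc 1 i, A j (x j)) + (∑ j ∈ Icc (i + 1) N, A j (xk j)) - b = P + d := by
    rw [hP, hd, Finset.sum_sub_distrib]; abel
  have e3 : (∑ j ∈ Icc 1 (i - 1), A j (x j)) + (∑ j ∈ Icc i N, A j (xk1 j)) - b = P - u := by
    obtain ⟨m, rfl⟩ : ∃ m, i = m + 1 := ⟨i - 1, by omega⟩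
    have h1 : (∑ j ∈ Icc 1 (m + 1), A j (x j))
        = (∑ j ∈ Icc 1 m, A j (x j)) + A (m + 1) (x (m + 1)) := by
      rw [Finset.sum_Icc_succ_top (by omega)]
    have h2 : (∑ j ∈ Icc (m + 1) N, A j (xk1 j))
        = A (m + 1) (xk1 (m + 1)) + ∑ j ∈ Icc (m + 1 + 1) N, A j (xk1 j) := by
      rw [Finset.Icc_eq_cons_Ioc hiN, Finset.sum_cons, ← Finset.Icc_add_one_left_eq_Ioc]
    simp only [Nat.add_sub_cancel, hP, hu, h1, h2]
    abel
  rw [e1, e2, e3]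
  have hsq : (0 : ℝ) ≤ ‖P + d - u‖ ^ 2 := by positivity
  have k1 : ‖P + d‖ ^ 2 = ‖P‖ ^ 2 + 2 * ⟪P, d⟫ + ‖d‖ ^ 2 := norm_add_sq_real P d
  have k2 : ‖P - u‖ ^ 2 = ‖P‖ ^ 2 - 2 * ⟪P, u⟫ + ‖u‖ ^ 2 := norm_sub_sq_real P u
  have k3 : ‖P + d - u‖ ^ 2 = ‖P + d‖ ^ 2 - 2 * ⟪P + d, u⟫ + ‖u‖ ^ 2 := norm_sub_sq_real (P + d) u
  have k4 : ⟪P + d, u⟫ = ⟪P, u⟫ + ⟪d, u⟫ := inner_add_left P d u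
  have k5 : ⟪u, d⟫ = ⟪d, u⟫ := real_inner_comm d u
  linarith
end

section
/- Let N ≥ 3, A_j ∈ ℝ^{p×n_j} (j = 1,…,N), b ∈ ℝ^p, γ > 0, and vectors x_j, x_j^k, x_j^{k+1} ∈ ℝ^{n_j} and λ^k, λ^{k+1} ∈ ℝ^p satisfying the multiplier update λ^{k+1} = λ^k − γ(Σ_{j=1}^N A_j x_j^{k+1} − b). Then γ Σ_{i=1}^{N-1} ⟨A_i x_i − A_i x_i^{k+1}, Σ_{j=i+1}^{N} A_j(x_j^k − x_j^{k+1})⟩ ≤ (γ/2) Σ_{i=1}^{N-1} (‖Σ_{j=1}^{i} A_j x_j + Σ_{j=i+1}^{N} A_j x_j^k − b‖² − ‖Σ_{j=1}^{i} A_j x_j + Σ_{j=i+1}^{N} A_j x_j^{k+1} − b‖²) + (1/(2γ)) ‖λ^{k+1} − λ^k‖² + (γ/2) Σ_{i=2}^{N-1} ‖Σ_{j=1}^{i-1} A_j x_j + Σ_{j=i}^{N} A_j x_j^{k+1} − b‖². -/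
open Finset
open scoped RealInnerProductSpace

theorem stmt_2 (N p : ℕ) (hN : 3 ≤ N) (n : ℕ → ℕ)
    (A : (j : ℕ) → EuclideanSpace ℝ (Fin (n j)) →L[ℝ] EuclideanSpace ℝ (Fin p))
    (b : EuclideanSpace ℝ (Fin p)) (γ : ℝ) (hγ : 0 < γ)
    (x xk xk1 : (j : ℕ) → EuclideanSpace ℝ (Fin (n j)))
    (lamk lamk1 : EuclideanSpace ℝ (Fin p))
    (hlam : lamk1 = lamk - γ • ((∑ j ∈ Icc 1 N, A j (xk1 j)) - b)) :
    γ * ∑ i ∈ Icc 1 (N - 1),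
        ⟪A i (x i) - A i (xk1 i), ∑ j ∈ Icc (i + 1) N, A j (xk j - xk1 j)⟫ ≤
      γ / 2 * ∑ i ∈ Icc 1 (N - 1),
          (‖(∑ j ∈ Icc 1 i, A j (x j)) + (∑ j ∈ Icc (i + 1) N, A j (xk j)) - b‖ ^ 2
            - ‖(∑ j ∈ Icc 1 i, A j (x j)) + (∑ j ∈ Icc (i + 1) N, A j (xk1 j)) - b‖ ^ 2)
        + 1 / (2 * γ) * ‖lamk1 - lamk‖ ^ 2
        + γ / 2 * ∑ i ∈ Icc 2 (N - 1),
            ‖(∑ j ∈ Icc 1 (i - 1), A j (x j)) + (∑ j ∈ Icc i N, A j (xk1 j)) - b‖ ^ 2 := by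
  set v : ℕ → EuclideanSpace ℝ (Fin p) :=
    fun i => (∑ j ∈ Icc 1 i, A j (x j)) + (∑ j ∈ Icc (i + 1) N, A j (xk1 j)) - b with hv
  set u : ℕ → EuclideanSpace ℝ (Fin p) :=
    fun i => (∑ j ∈ Icc 1 i, A j (x j)) + (∑ j ∈ Icc (i + 1) N, A j (xk j)) - b with hu
  set d : ℕ → EuclideanSpace ℝ (Fin p) :=
    fun i => ∑ j ∈ Icc (i + 1) N, A j (xk j - xk1 j) with hd
  have hud : ∀ i, u i = v i + d i := by
    intro i
    simp only [hu, hv, hd]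
    rw [Finset.sum_congr rfl (fun j _ => map_sub (A j) (xk j) (xk1 j)),
      Finset.sum_sub_distrib]
    abel
  have hAv : ∀ i ∈ Icc 1 (N - 1), A i (x i) - A i (xk1 i) = v i - v (i - 1) := by
    intro i hi
    simp only [mem_Icc] at hi
    have hi1 : i - 1 + 1 = i := by omega
    simp only [hv, hi1]
    have e1 : Icc 1 i = insert i (Icc 1 (i - 1)) := by
      ext m; simp only [mem_Icc, mem_insert]; omega
    have e2 : Icc i N = insert i (Icc (i + 1) N) := by
      ext m; simp only [mem_Icc, mem_insert]; omega
    rw [e1, e2, Finset.sum_insert (by simp only [mem_Icc]; omega),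
      Finset.sum_insert (by simp only [mem_Icc]; omega)]
    abel
  have hlamv : ‖lamk1 - lamk‖ ^ 2 = γ ^ 2 * ‖v 0‖ ^ 2 := by
    have : v 0 = (∑ j ∈ Icc 1 N, A j (xk1 j)) - b := by
      simp [hv]
    rw [this, hlam]
    have : lamk - γ • ((∑ j ∈ Icc 1 N, A j (xk1 j)) - b) - lamk
        = -(γ • ((∑ j ∈ Icc 1 N, A j (xk1 j)) - b)) := by abel
    rw [this, norm_neg, norm_smul]
    simp [abs_of_pos hγ]
    ring
  -- termwise inequality
  have key : ∀ i ∈ Icc 1 (N - 1),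
      γ * ⟪A i (x i) - A i (xk1 i), d i⟫ ≤
        γ / 2 * (‖u i‖ ^ 2 - ‖v i‖ ^ 2) + γ / 2 * ‖v (i - 1)‖ ^ 2 := by
    intro i hi
    rw [hAv i hi, hud i]
    have h1 : ‖v i + d i‖ ^ 2 = ‖v i‖ ^ 2 + 2 * ⟪v i, d i⟫ + ‖d i‖ ^ 2 := by
      rw [@norm_add_sq_real]
    have h2 : (0:ℝ) ≤ ‖v (i - 1) + d i‖ ^ 2 := by positivity
    have h3 : ‖v (i - 1) + d i‖ ^ 2
        = ‖v (i - 1)‖ ^ 2 + 2 * ⟪v (i - 1), d i⟫ + ‖d i‖ ^ 2 := by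
      rw [@norm_add_sq_real]
    have h4 : ⟪v i - v (i - 1), d i⟫ = ⟪v i, d i⟫ - ⟪v (i - 1), d i⟫ :=
      inner_sub_left _ _ _
    rw [h4, h1]
    nlinarith [h2, h3, hγ.le]
  -- sum the termwise inequalities
  have hsum : γ * ∑ i ∈ Icc 1 (N - 1), ⟪A i (x i) - A i (xk1 i), d i⟫ ≤
      γ / 2 * ∑ i ∈ Icc 1 (N - 1), (‖u i‖ ^ 2 - ‖v i‖ ^ 2)
        + γ / 2 * ∑ i ∈ Icc 1 (N - 1), ‖v (i - 1)‖ ^ 2 := by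
    rw [Finset.mul_sum, Finset.mul_sum, Finset.mul_sum, ← Finset.sum_add_distrib]
    exact Finset.sum_le_sum key
  -- split the last sum
  have hsplit : ∑ i ∈ Icc 1 (N - 1), ‖v (i - 1)‖ ^ 2
      = ‖v 0‖ ^ 2 + ∑ i ∈ Icc 2 (N - 1), ‖v (i - 1)‖ ^ 2 := by
    have e : Icc 1 (N - 1) = insert 1 (Icc 2 (N - 1)) := by
      ext m; simp only [mem_Icc, mem_insert]; omega
    rw [e, Finset.sum_insert (by simp [mem_Icc])]
  have hlast : ∑ i ∈ Icc 2 (N - 1),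
      ‖(∑ j ∈ Icc 1 (i - 1), A j (x j)) + (∑ j ∈ Icc i N, A j (xk1 j)) - b‖ ^ 2
      = ∑ i ∈ Icc 2 (N - 1), ‖v (i - 1)‖ ^ 2 := by
    refine Finset.sum_congr rfl ?_
    intro i hi
    simp only [mem_Icc] at hi
    have hi1 : i - 1 + 1 = i := by omega
    simp only [hv, hi1]
  calc γ * ∑ i ∈ Icc 1 (N - 1), ⟪A i (x i) - A i (xk1 i), d i⟫
      ≤ γ / 2 * ∑ i ∈ Icc 1 (N - 1), (‖u i‖ ^ 2 - ‖v i‖ ^ 2)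
        + γ / 2 * ∑ i ∈ Icc 1 (N - 1), ‖v (i - 1)‖ ^ 2 := hsum
    _ = γ / 2 * ∑ i ∈ Icc 1 (N - 1), (‖u i‖ ^ 2 - ‖v i‖ ^ 2)
        + 1 / (2 * γ) * ‖lamk1 - lamk‖ ^ 2
        + γ / 2 * ∑ i ∈ Icc 2 (N - 1), ‖v (i - 1)‖ ^ 2 := by
          rw [hsplit, hlamv]; field_simp; ring
    _ = _ := by rw [hlast, hlamv]
end

section
/- (Lemma 3.1) Let N ≥ 3, ε > 0, 0 < γ ≤ ε, and μ = ε(N−2)(N+1). Let A_i ∈ ℝ^{p×n_i}, b ∈ ℝ^p, X_i ⊆ ℝ^{n_i} closed convex, f_i : ℝ^{n_i} → ℝ convex, and x_i^0 ∈ ℝ^{n_i} given points. Suppose x_i^{k+1} ∈ X_i (i = 1,…,N) and λ^k, λ^{k+1} ∈ ℝ^p satisfy: (a) λ^{k+1} = λ^k − γ(Σ_{j=1}^N A_j x_j^{k+1} − b); (b) there exists g_1 ∈ ∂f_1(x_1^{k+1}) with ⟨x_1 − x_1^{k+1}, g_1 − A_1ᵀλ^{k+1} + γ A_1ᵀ Σ_{j=2}^N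 A_j(x_j^k − x_j^{k+1})⟩ ≥ 0 for all x_1 ∈ X_1; (c) for i = 2,…,N there exists g_i ∈ ∂f_i(x_i^{k+1}) with ⟨x_i − x_i^{k+1}, g_i + μ A_iᵀA_i(x_i^{k+1} − x_i^0) − A_iᵀλ^{k+1} + γ A_iᵀ Σ_{j=i+1}^N A_j(x_j^k − x_j^{k+1})⟩ ≥ 0 for all x_i ∈ X_i. Let x_i^* ∈ X_i with Σ_{i=1}^N A_i x_i^* = b and write f(u) := Σ_{i=1}^N f_i(x_i). Then for every λ ∈ ℝ^p: f(u^*) − f(u^{k+1}) + Σ_{i=1}^N ⟨x_i^* − x_i^{k+1}, −A_iᵀλ^{k+1}⟩ + ⟨λ − λ^{k+1}, Σ_{i=1}^N A_i x_i^{k+1} − b⟩ + (1/(2γ))(‖λ − λ^k‖² − ‖λ − λ^{k+1}‖²) + (ε(N−2)(N+1)/2) Σ_{i=2}^N ‖A_i x_i^* − A_i x_i^0‖² + (γ/2) Σ_{i=1}^{N-1} (‖Σ_{j=1}^{i} A_j x_j^* + Σ_{j=i+1}^{N} A_j x_j^k − b‖² − ‖Σ_{j=1}^{i} A_j x_j^*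 + Σ_{j=i+1}^{N} A_j x_j^{k+1} − b‖²) ≥ 0. -/
open Finset
open scoped RealInnerProductSpace

/-- `g` is a subgradient of the convex function `f` at `x`. -/
def IsSubgradientAt {E : Type*} [NormedAddCommGroup E] [InnerProductSpace ℝ E]
    (f : E → ℝ) (g x : E) : Prop :=
  ∀ y, f x + ⟪g, y - x⟫ ≤ f y

section Aux

lemma aux_sum_Icc_split_bot {M : Type*} [AddCommMonoid M] {a N : ℕ} (h : a ≤ N) (f : ℕ → M) :
    ∑ i ∈ Icc a N, f i = f a + ∑ i ∈ Icc (a + 1) N, f i := by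
  rw [Finset.Icc_add_one_left_eq_Ioc, Finset.add_sum_Ioc_eq_sum_Icc h]

lemma aux_sum_Icc_split_top {M : Type*} [AddCommMonoid M] {N : ℕ} (h : 1 ≤ N) (f : ℕ → M) :
    ∑ i ∈ Icc 1 N, f i = (∑ i ∈ Icc 1 (N - 1), f i) + f N := by
  have h1 : Icc 1 N = Ico 1 (N + 1) := by rw [Finset.Ico_add_one_right_eq_Icc]
  have h2 : Icc 1 (N - 1) = Ico 1 N := by
    rw [← Finset.Ico_add_one_right_eq_Icc]; congr 1; omega
  rw [h1, h2, Finset.sum_Ico_succ_top (by omega)]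

lemma aux_sum_Icc_split_mid {M : Type*} [AddCommMonoid M] {i N : ℕ} (h1 : 1 ≤ i) (h2 : i ≤ N)
    (f : ℕ → M) :
    ∑ j ∈ Icc 1 N, f j = (∑ j ∈ Icc 1 (i - 1), f j) + ∑ j ∈ Icc i N, f j := by
  rw [show Icc 1 (i - 1) = Ico 1 i from by rw [← Finset.Ico_add_one_right_eq_Icc]; congr 1; omega,
    show Icc i N = Ico i (N + 1) from (Finset.Ico_add_one_right_eq_Icc _ _).symm,
    show Icc 1 N = Ico 1 (N + 1) from (Finset.Ico_add_one_right_eq_Icc _ _).symm,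
    Finset.sum_Ico_consecutive _ (by omega) (by omega)]

variable {E : Type*} [NormedAddCommGroup E] [InnerProductSpace ℝ E]

lemma aux_norm_sum_sq_le (t : Finset ℕ) (v : ℕ → E) :
    ‖∑ j ∈ t, v j‖ ^ 2 ≤ (t.card : ℝ) * ∑ j ∈ t, ‖v j‖ ^ 2 := by
  calc ‖∑ j ∈ t, v j‖ ^ 2 ≤ (∑ j ∈ t, ‖v j‖) ^ 2 := by
        apply pow_le_pow_left₀ (norm_nonneg _) (norm_sum_le _ _)
    _ ≤ (t.card : ℝ) * ∑ j ∈ t, ‖v j‖ ^ 2 := sq_sum_le_card_mul_sum_sq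

/-- The key quadratic inequality behind Lemma 3.1. -/
lemma aux_key_ineq (N : ℕ) (hN : 3 ≤ N) (γ μ : ℝ) (hγ0 : 0 < γ)
    (hμγ : γ * (((N : ℝ) - 2) * ((N : ℝ) - 1)) ≤ μ)
    (s a w : ℕ → E) (b : E) (hsum : ∑ i ∈ Icc 1 N, s i = b) :
    0 ≤ γ / 2 * ‖(∑ i ∈ Icc 1 N, a i) - b‖ ^ 2
      + γ / 2 * ∑ i ∈ Icc 1 (N - 1),
          (‖(∑ j ∈ Icc 1 i, s j) + (∑ j ∈ Icc (i + 1) N, w j) - b‖ ^ 2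
            - ‖(∑ j ∈ Icc 1 i, s j) + (∑ j ∈ Icc (i + 1) N, a j) - b‖ ^ 2)
      - γ * ∑ i ∈ Icc 1 N, ⟪s i - a i, ∑ j ∈ Icc (i + 1) N, (w j - a j)⟫
      + μ / 2 * ∑ i ∈ Icc 2 N, ‖s i - a i‖ ^ 2 := by
  have hZ : 0 ≤ ∑ i ∈ Icc 2 N, ‖s i - a i‖ ^ 2 :=
    Finset.sum_nonneg fun i _ => sq_nonneg _
  -- the N-th term of the cross sum vanishes
  have hC : ∑ i ∈ Icc 1 N, ⟪s i - a i, ∑ j ∈ Icc (i + 1) N, (w j - a j)⟫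
      = ∑ i ∈ Icc 1 (N - 1), ⟪s i - a i, ∑ j ∈ Icc (i + 1) N, (w j - a j)⟫ := by
    rw [aux_sum_Icc_split_top (by omega)]
    have h0 : (∑ j ∈ Icc (N + 1) N, (w j - a j)) = 0 := by
      rw [Finset.Icc_eq_empty (by omega), Finset.sum_empty]
    rw [h0, inner_zero_right]; ring
  rw [hC]
  -- combine the two sums over `Icc 1 (N-1)` into a single sum
  have hcomb : γ / 2 * ∑ i ∈ Icc 1 (N - 1),
          (‖(∑ j ∈ Icc 1 i, s j) + (∑ j ∈ Icc (i + 1) N, w j) - b‖ ^ 2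
            - ‖(∑ j ∈ Icc 1 i, s j) + (∑ j ∈ Icc (i + 1) N, a j) - b‖ ^ 2)
      - γ * ∑ i ∈ Icc 1 (N - 1), ⟪s i - a i, ∑ j ∈ Icc (i + 1) N, (w j - a j)⟫
      = ∑ i ∈ Icc 1 (N - 1),
          (γ * ⟪(∑ j ∈ Icc 1 i, s j) + (∑ j ∈ Icc (i + 1) N, a j) - b - (s i - a i),
              ∑ j ∈ Icc (i + 1) N, (w j - a j)⟫
            + γ / 2 * ‖∑ j ∈ Icc (i + 1) N, (w j - a j)‖ ^ 2) := by
    rw [Finset.mul_sum, Finset.mul_sum, ← Finset.sum_sub_distrib]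
    refine Finset.sum_congr rfl fun i _ => ?_
    have hTk : (∑ j ∈ Icc 1 i, s j) + (∑ j ∈ Icc (i + 1) N, w j) - b
        = ((∑ j ∈ Icc 1 i, s j) + (∑ j ∈ Icc (i + 1) N, a j) - b)
          + ∑ j ∈ Icc (i + 1) N, (w j - a j) := by
      rw [Finset.sum_sub_distrib]; abel
    rw [hTk, norm_add_sq_real]
    simp only [inner_sub_left]
    ring
  -- split off the `i = 1` term
  have hsplit := aux_sum_Icc_split_bot (show 1 ≤ N - 1 by omega)
    (fun i => γ * ⟪(∑ j ∈ Icc 1 i, s j) + (∑ j ∈ Icc (i + 1) N, a j) - b - (s i - a i),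
        ∑ j ∈ Icc (i + 1) N, (w j - a j)⟫
      + γ / 2 * ‖∑ j ∈ Icc (i + 1) N, (w j - a j)‖ ^ 2)
  beta_reduce at hsplit
  -- the `i = 1` term combines with the residual square
  have hT1 : (∑ j ∈ Icc 1 1, s j) + (∑ j ∈ Icc (1 + 1) N, a j) - b - (s 1 - a 1)
      = (∑ i ∈ Icc 1 N, a i) - b := by
    rw [Finset.Icc_self, Finset.sum_singleton, aux_sum_Icc_split_bot (show 1 ≤ N by omega) a]
    abel
  rw [hT1] at hsplit
  -- bound each term with index in `Icc 2 (N-1)` from below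
  have hbound : ∀ i ∈ Icc (1 + 1) (N - 1),
      -(γ / 2 * (((N : ℝ) - 1) * ∑ j ∈ Icc 2 N, ‖s j - a j‖ ^ 2))
        ≤ γ * ⟪(∑ j ∈ Icc 1 i, s j) + (∑ j ∈ Icc (i + 1) N, a j) - b - (s i - a i),
              ∑ j ∈ Icc (i + 1) N, (w j - a j)⟫
          + γ / 2 * ‖∑ j ∈ Icc (i + 1) N, (w j - a j)‖ ^ 2 := by
    intro i hi
    rw [Finset.mem_Icc] at hi
    obtain ⟨hi2, hiN⟩ := hi
    have hTe : (∑ j ∈ Icc 1 i, s j) + (∑ j ∈ Icc (i + 1) N, a j) - b - (s i - a i)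
        = -∑ j ∈ Icc i N, (s j - a j) := by
      have hs1 : ∑ j ∈ Icc 1 i, s j = (∑ j ∈ Icc 1 (i - 1), s j) + s i :=
        aux_sum_Icc_split_top (by omega) s
      have hs2 : ∑ j ∈ Icc i N, a j = a i + ∑ j ∈ Icc (i + 1) N, a j :=
        aux_sum_Icc_split_bot (by omega) a
      have hs3 : (∑ j ∈ Icc 1 (i - 1), s j) + ∑ j ∈ Icc i N, s j = b := by
        rw [← aux_sum_Icc_split_mid (by omega) (by omega) s]; exact hsum
      have hs4 : ∑ j ∈ Icc i N, s j = b - ∑ j ∈ Icc 1 (i - 1), s j :=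
        eq_sub_of_add_eq' hs3
      rw [Finset.sum_sub_distrib, hs4, hs2, hs1]
      abel
    rw [hTe]
    set v : E := ∑ j ∈ Icc i N, (s j - a j) with hv
    set d : E := ∑ j ∈ Icc (i + 1) N, (w j - a j) with hd
    have h5 : ‖v‖ ^ 2 ≤ ((N : ℝ) - 1) * ∑ j ∈ Icc 2 N, ‖s j - a j‖ ^ 2 := by
      have hc1 : ‖v‖ ^ 2 ≤ ((Icc i N).card : ℝ) * ∑ j ∈ Icc i N, ‖s j - a j‖ ^ 2 :=
        aux_norm_sum_sq_le _ _
      have hc2 : ((Icc i N).card : ℝ) ≤ (N : ℝ) - 1 := by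
        rw [Nat.card_Icc]
        have hle : N + 1 - i ≤ N - 1 := by omega
        calc ((N + 1 - i : ℕ) : ℝ) ≤ ((N - 1 : ℕ) : ℝ) := by exact_mod_cast hle
          _ = (N : ℝ) - 1 := by
            rw [Nat.cast_sub (by omega)]; norm_num
      have hc3 : ∑ j ∈ Icc i N, ‖s j - a j‖ ^ 2 ≤ ∑ j ∈ Icc 2 N, ‖s j - a j‖ ^ 2 :=
        Finset.sum_le_sum_of_subset_of_nonneg
          (Finset.Icc_subset_Icc (by omega) le_rfl) (fun _ _ _ => sq_nonneg _)
      have hc4 : 0 ≤ ∑ j ∈ Icc i N, ‖s j - a j‖ ^ 2 :=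
        Finset.sum_nonneg fun _ _ => sq_nonneg _
      calc ‖v‖ ^ 2 ≤ ((Icc i N).card : ℝ) * ∑ j ∈ Icc i N, ‖s j - a j‖ ^ 2 := hc1
        _ ≤ ((N : ℝ) - 1) * ∑ j ∈ Icc 2 N, ‖s j - a j‖ ^ 2 := by
            apply mul_le_mul hc2 hc3 hc4
            have : (3 : ℝ) ≤ (N : ℝ) := by exact_mod_cast hN
            linarith
    have hexp : ‖d - v‖ ^ 2 = ‖d‖ ^ 2 - 2 * ⟪d, v⟫ + ‖v‖ ^ 2 := norm_sub_sq_real _ _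
    have hdv : (0 : ℝ) ≤ ‖d - v‖ ^ 2 := sq_nonneg _
    have hcomm : ⟪-v, d⟫ = -⟪d, v⟫ := by rw [inner_neg_left, real_inner_comm]
    rw [hcomm]
    nlinarith [mul_le_mul_of_nonneg_left h5 (by linarith : (0 : ℝ) ≤ γ / 2),
      mul_le_mul_of_nonneg_left hdv (by linarith : (0 : ℝ) ≤ γ / 2),
      mul_le_mul_of_nonneg_left hexp.le (by linarith : (0 : ℝ) ≤ γ / 2),
      mul_le_mul_of_nonneg_left hexp.ge (by linarith : (0 : ℝ) ≤ γ / 2)]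
  -- sum the lower bounds
  have hsum2 : ((Icc (1 + 1) (N - 1)).card : ℝ)
        * -(γ / 2 * (((N : ℝ) - 1) * ∑ j ∈ Icc 2 N, ‖s j - a j‖ ^ 2))
      ≤ ∑ i ∈ Icc (1 + 1) (N - 1),
          (γ * ⟪(∑ j ∈ Icc 1 i, s j) + (∑ j ∈ Icc (i + 1) N, a j) - b - (s i - a i),
              ∑ j ∈ Icc (i + 1) N, (w j - a j)⟫
            + γ / 2 * ‖∑ j ∈ Icc (i + 1) N, (w j - a j)‖ ^ 2) := by
    have := Finset.card_nsmul_le_sum (Icc (1 + 1) (N - 1)) _ _ hbound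
    rwa [nsmul_eq_mul] at this
  have hcard : ((Icc (1 + 1) (N - 1)).card : ℝ) = (N : ℝ) - 2 := by
    rw [Nat.card_Icc]
    have h1 : N - 1 + 1 - (1 + 1) = N - 2 := by omega
    rw [h1, Nat.cast_sub (by omega)]; norm_num
  rw [hcard] at hsum2
  -- the `i = 1` piece is a perfect square
  have hsq : 0 ≤ γ / 2 * ‖(∑ i ∈ Icc 1 N, a i) - b‖ ^ 2
      + (γ * ⟪(∑ i ∈ Icc 1 N, a i) - b, ∑ j ∈ Icc (1 + 1) N, (w j - a j)⟫
        + γ / 2 * ‖∑ j ∈ Icc (1 + 1) N, (w j - a j)‖ ^ 2) := by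
    have h := norm_add_sq_real ((∑ i ∈ Icc 1 N, a i) - b) (∑ j ∈ Icc (1 + 1) N, (w j - a j))
    nlinarith [sq_nonneg ‖(∑ i ∈ Icc 1 N, a i) - b + ∑ j ∈ Icc (1 + 1) N, (w j - a j)‖,
      mul_le_mul_of_nonneg_left
        (sq_nonneg ‖(∑ i ∈ Icc 1 N, a i) - b + ∑ j ∈ Icc (1 + 1) N, (w j - a j)‖)
        (by linarith : (0 : ℝ) ≤ γ / 2)]
  -- conclude
  have h3N : (3 : ℝ) ≤ (N : ℝ) := by exact_mod_cast hN
  nlinarith [hcomb, hsplit, hsum2, hsq, hZ, mul_le_mul_of_nonneg_right hμγ hZ]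

end Aux

set_option maxHeartbeats 2000000 in
theorem stmt_3 (N p : ℕ) (hN : 3 ≤ N) (hp : 0 < p) (n : ℕ → ℕ)
    (ε γ : ℝ) (hε : 0 < ε) (hγ0 : 0 < γ) (hγε : γ ≤ ε)
    (μ : ℝ) (hμ : μ = ε * ((N : ℝ) - 2) * ((N : ℝ) + 1))
    (A : (i : ℕ) → EuclideanSpace ℝ (Fin (n i)) →L[ℝ] EuclideanSpace ℝ (Fin p))
    (b : EuclideanSpace ℝ (Fin p))
    (X : (i : ℕ) → Set (EuclideanSpace ℝ (Fin (n i))))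
    (hXc : ∀ i, Convex ℝ (X i)) (hXcl : ∀ i, IsClosed (X i))
    (f : (i : ℕ) → EuclideanSpace ℝ (Fin (n i)) → ℝ)
    (hf : ∀ i, ConvexOn ℝ Set.univ (f i))
    (x0 xk xk1 xs : (i : ℕ) → EuclideanSpace ℝ (Fin (n i)))
    (lamk lamk1 : EuclideanSpace ℝ (Fin p))
    (hmem : ∀ i ∈ Icc 1 N, xk1 i ∈ X i)
    -- (a) multiplier update
    (ha : lamk1 = lamk - γ • ((∑ j ∈ Icc 1 N, A j (xk1 j)) - b))
    -- (b) optimality of the first block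
    (hb : ∃ g, IsSubgradientAt (f 1) g (xk1 1) ∧ ∀ x1 ∈ X 1,
      0 ≤ ⟪x1 - xk1 1, g - ContinuousLinearMap.adjoint (A 1) lamk1
            + γ • ContinuousLinearMap.adjoint (A 1) (∑ j ∈ Icc 2 N, A j (xk j - xk1 j))⟫)
    -- (c) optimality of blocks 2,…,N
    (hc : ∀ i ∈ Icc 2 N, ∃ g, IsSubgradientAt (f i) g (xk1 i) ∧ ∀ xi ∈ X i,
      0 ≤ ⟪xi - xk1 i, g + μ • ContinuousLinearMap.adjoint (A i) (A i (xk1 i - x0 i))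
            - ContinuousLinearMap.adjoint (A i) lamk1
            + γ • ContinuousLinearMap.adjoint (A i) (∑ j ∈ Icc (i + 1) N, A j (xk j - xk1 j))⟫)
    -- feasible point
    (hfeas : ∀ i ∈ Icc 1 N, xs i ∈ X i)
    (hsum : (∑ i ∈ Icc 1 N, A i (xs i)) = b)
    (lam : EuclideanSpace ℝ (Fin p)) :
    0 ≤ (∑ i ∈ Icc 1 N, f i (xs i)) - (∑ i ∈ Icc 1 N, f i (xk1 i))
      + (∑ i ∈ Icc 1 N, ⟪xs i - xk1 i, -(ContinuousLinearMap.adjoint (A i) lamk1)⟫)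
      + ⟪lam - lamk1, (∑ i ∈ Icc 1 N, A i (xk1 i)) - b⟫
      + 1 / (2 * γ) * (‖lam - lamk‖ ^ 2 - ‖lam - lamk1‖ ^ 2)
      + ε * ((N : ℝ) - 2) * ((N : ℝ) + 1) / 2 * ∑ i ∈ Icc 2 N, ‖A i (xs i) - A i (x0 i)‖ ^ 2
      + γ / 2 * ∑ i ∈ Icc 1 (N - 1),
          (‖(∑ j ∈ Icc 1 i, A j (xs j)) + (∑ j ∈ Icc (i + 1) N, A j (xk j)) - b‖ ^ 2
            - ‖(∑ j ∈ Icc 1 i, A j (xs j)) + (∑ j ∈ Icc (i + 1) N, A j (xk1 j)) - b‖ ^ 2) := by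
  have h3N : (3 : ℝ) ≤ (N : ℝ) := by exact_mod_cast hN
  have hμ0 : 0 ≤ μ := by
    rw [hμ]
    exact mul_nonneg (mul_nonneg hε.le (by linarith)) (by linarith)
  -- Step 1: the per-block optimality inequalities, summed
  have h1 : 0 ≤ (f 1 (xs 1) - f 1 (xk1 1))
      + -⟪A 1 (xs 1) - A 1 (xk1 1), lamk1⟫
      + γ * ⟪A 1 (xs 1) - A 1 (xk1 1), ∑ j ∈ Icc (1 + 1) N, (A j (xk j) - A j (xk1 j))⟫ := by
    obtain ⟨g, hg, hineq⟩ := hb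
    have hmem1 : xs 1 ∈ X 1 := hfeas 1 (Finset.mem_Icc.mpr ⟨le_refl 1, by omega⟩)
    have h := hineq (xs 1) hmem1
    simp only [inner_add_right, inner_sub_right, real_inner_smul_right,
      ContinuousLinearMap.adjoint_inner_right, map_sub] at h
    have hsub := hg (xs 1)
    have hcomm : ⟪xs 1 - xk1 1, g⟫ = ⟪g, xs 1 - xk1 1⟫ := real_inner_comm _ _
    have hind : (2 : ℕ) = 1 + 1 := by norm_num
    rw [hind] at h
    linarith
  have h2 : ∀ i ∈ Icc 2 N, 0 ≤ (f i (xs i) - f i (xk1 i))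
      + -⟪A i (xs i) - A i (xk1 i), lamk1⟫
      + γ * ⟪A i (xs i) - A i (xk1 i), ∑ j ∈ Icc (i + 1) N, (A j (xk j) - A j (xk1 j))⟫
      + μ * ⟪A i (xs i) - A i (xk1 i), A i (xk1 i) - A i (x0 i)⟫ := by
    intro i hi
    obtain ⟨g, hg, hineq⟩ := hc i hi
    rw [Finset.mem_Icc] at hi
    have hmemi : xs i ∈ X i := hfeas i (Finset.mem_Icc.mpr ⟨by omega, hi.2⟩)
    have h := hineq (xs i) hmemi
    simp only [inner_add_right, inner_sub_right, real_inner_smul_right,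
      ContinuousLinearMap.adjoint_inner_right, map_sub] at h
    have hsub := hg (xs i)
    have hcomm : ⟪xs i - xk1 i, g⟫ = ⟪g, xs i - xk1 i⟫ := real_inner_comm _ _
    have hconv : ⟪A i (xs i) - A i (xk1 i), A i (xk1 i) - A i (x0 i)⟫
        = ⟪A i (xs i) - A i (xk1 i), A i (xk1 i)⟫
          - ⟪A i (xs i) - A i (xk1 i), A i (x0 i)⟫ := inner_sub_right _ _ _
    rw [← hconv] at h
    linarith
  have hQ : 0 ≤ ((∑ i ∈ Icc 1 N, f i (xs i)) - ∑ i ∈ Icc 1 N, f i (xk1 i))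
      + (∑ i ∈ Icc 1 N, -⟪A i (xs i) - A i (xk1 i), lamk1⟫)
      + γ * (∑ i ∈ Icc 1 N,
          ⟪A i (xs i) - A i (xk1 i), ∑ j ∈ Icc (i + 1) N, (A j (xk j) - A j (xk1 j))⟫)
      + μ * (∑ i ∈ Icc 2 N, ⟪A i (xs i) - A i (xk1 i), A i (xk1 i) - A i (x0 i)⟫) := by
    rw [← Finset.sum_sub_distrib, Finset.mul_sum, Finset.mul_sum,
      ← Finset.sum_add_distrib, ← Finset.sum_add_distrib]
    rw [aux_sum_Icc_split_bot (show 1 ≤ N by omega)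
      (fun i => (f i (xs i) - f i (xk1 i))
        + -⟪A i (xs i) - A i (xk1 i), lamk1⟫
        + γ * ⟪A i (xs i) - A i (xk1 i), ∑ j ∈ Icc (i + 1) N, (A j (xk j) - A j (xk1 j))⟫)]
    have hrest : 0 ≤ ∑ i ∈ Icc (1 + 1) N,
        ((f i (xs i) - f i (xk1 i))
          + -⟪A i (xs i) - A i (xk1 i), lamk1⟫
          + γ * ⟪A i (xs i) - A i (xk1 i), ∑ j ∈ Icc (i + 1) N, (A j (xk j) - A j (xk1 j))⟫)
        + ∑ i ∈ Icc 2 N, μ * ⟪A i (xs i) - A i (xk1 i), A i (xk1 i) - A i (x0 i)⟫ := by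
      have hind : (1 + 1 : ℕ) = 2 := by norm_num
      rw [hind, ← Finset.sum_add_distrib]
      refine Finset.sum_nonneg fun i hi => ?_
      have := h2 i hi
      linarith
    linarith
  -- Step 2: the multiplier identity
  have hlam : ⟪lam - lamk1, (∑ i ∈ Icc 1 N, A i (xk1 i)) - b⟫
      + 1 / (2 * γ) * (‖lam - lamk‖ ^ 2 - ‖lam - lamk1‖ ^ 2)
      = γ / 2 * ‖(∑ i ∈ Icc 1 N, A i (xk1 i)) - b‖ ^ 2 := by
    have hk : lam - lamk = (lam - lamk1) - γ • ((∑ i ∈ Icc 1 N, A i (xk1 i)) - b) := by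
      rw [ha]; abel
    rw [hk, norm_sub_sq_real, real_inner_smul_right, norm_smul, Real.norm_eq_abs,
      mul_pow, sq_abs]
    field_simp
    ring
  -- Step 3: the proximal term bound
  have hμsum : μ * (∑ i ∈ Icc 2 N, ⟪A i (xs i) - A i (xk1 i), A i (xk1 i) - A i (x0 i)⟫)
        + μ / 2 * ∑ i ∈ Icc 2 N, ‖A i (xs i) - A i (xk1 i)‖ ^ 2
      ≤ μ / 2 * ∑ i ∈ Icc 2 N, ‖A i (xs i) - A i (x0 i)‖ ^ 2 := by
    rw [Finset.mul_sum, Finset.mul_sum, Finset.mul_sum, ← Finset.sum_add_distrib]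
    refine Finset.sum_le_sum fun i _ => ?_
    have hid : A i (xs i) - A i (x0 i)
        = (A i (xs i) - A i (xk1 i)) + (A i (xk1 i) - A i (x0 i)) := by abel
    rw [hid, norm_add_sq_real]
    have := mul_nonneg hμ0 (sq_nonneg ‖A i (xk1 i) - A i (x0 i)‖)
    ring_nf
    nlinarith [mul_nonneg hμ0 (sq_nonneg ‖A i (xk1 i) - A i (x0 i)‖)]
  -- Step 4: the key quadratic inequality
  have hNN : (0 : ℝ) ≤ ((N : ℝ) - 2) * ((N : ℝ) - 1) :=
    mul_nonneg (by linarith) (by linarith)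
  have hNN2 : (0 : ℝ) ≤ ε * ((N : ℝ) - 2) * 2 := by
    have := mul_nonneg hε.le (show (0 : ℝ) ≤ (N : ℝ) - 2 by linarith)
    linarith
  have hμγ : γ * (((N : ℝ) - 2) * ((N : ℝ) - 1)) ≤ μ := by
    rw [hμ]
    have h1' := mul_le_mul_of_nonneg_right hγε hNN
    nlinarith [h1', hNN2]
  have hkey := aux_key_ineq N hN γ μ hγ0 hμγ
    (fun i => A i (xs i)) (fun i => A i (xk1 i)) (fun i => A i (xk i)) b hsum
  beta_reduce at hkey
  -- Step 5: rewrite the goal and assemble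
  have hL : (∑ i ∈ Icc 1 N, ⟪xs i - xk1 i, -(ContinuousLinearMap.adjoint (A i) lamk1)⟫)
      = ∑ i ∈ Icc 1 N, -⟪A i (xs i) - A i (xk1 i), lamk1⟫ := by
    refine Finset.sum_congr rfl fun i _ => ?_
    rw [inner_neg_right, ContinuousLinearMap.adjoint_inner_right, map_sub]
  rw [hL, ← hμ]
  linarith
end

section
/- (Theorem 3.1, ergodic bound) Let N ≥ 3, ε > 0, 0 < γ ≤ ε, μ = ε(N−2)(N+1), and let the data and assumptions be as in Lemma 3.1. Suppose that for every k = 0,1,…,t the iterates (x_1^{k+1},…,x_N^{k+1},λ^{k+1}) with x_i^{k+1} ∈ X_i satisfy conditions (a)–(c) of Lemma 3.1 (with index k). Let (x_1^*,…,x_N^*,λ^*) satisfy the KKT conditions: x_i^* ∈ X_i, Σ_i A_i x_i^* = b, and there exist g_i^* ∈ ∂f_i(x_i^*) with ⟨x_i − x_i^*, g_i^* − A_iᵀλ^*⟩ ≥ 0 for all x_i ∈ X_i, i = 1,…,N. Define the ergodic averages x̄_i^t = (1/(t+1)) Σ_{k=0}^{t} x_i^{k+1}, ū^t = (x̄_1^t,…,x̄_N^t),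 f(u) = Σ_i f_i(x_i), and ρ = ‖λ^*‖ + 1. Then 0 ≤ f(ū^t) − f(u^*) + ρ ‖Σ_{i=1}^N A_i x̄_i^t − b‖ ≤ (ρ² + ‖λ^0‖²)/(γ(t+1)) + (γ/(2(t+1))) Σ_{i=1}^{N-1} ‖Σ_{j=i+1}^{N} A_j (x_j^0 − x_j^*)‖² + (ε(N−2)(N+1)/2) Σ_{i=2}^{N} ‖A_i x_i^* − A_i x_i^0‖². -/
open Finset
open scoped RealInnerProductSpace

set_option linter.unusedSectionVars false

section Helpers
variable {E : Type*} [NormedAddCommGroup E] [InnerProductSpace ℝ E]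

lemma helper_norm_sum_sq {ι : Type*} (s : Finset ι) (v : ι → E) :
    ‖∑ i ∈ s, v i‖^2 ≤ (s.card : ℝ) * ∑ i ∈ s, ‖v i‖^2 := by
  calc ‖∑ i ∈ s, v i‖^2 ≤ (∑ i ∈ s, ‖v i‖)^2 := by
        have h := norm_sum_le s v
        have h0 : (0:ℝ) ≤ ‖∑ i ∈ s, v i‖ := norm_nonneg _
        nlinarith
    _ ≤ s.card * ∑ i ∈ s, ‖v i‖^2 := sq_sum_le_card_mul_sum_sq

lemma helper_inner_id (u v v' : E) :
    ⟪v - v', u - v⟫ = (‖u‖^2 - ‖v‖^2)/2 - ‖u - v‖^2/2 - ⟪v', u - v⟫ := by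
  have h1 : ‖u - v‖^2 = ‖u‖^2 - 2*⟪u,v⟫ + ‖v‖^2 := norm_sub_sq_real u v
  have h2 : ⟪v - v', u - v⟫ = ⟪v, u - v⟫ - ⟪v', u - v⟫ := inner_sub_left _ _ _
  have h3 : ⟪v, u - v⟫ = ⟪v, u⟫ - ⟪v,v⟫ := inner_sub_right _ _ _
  have h4 : ⟪v,(v:E)⟫ = ‖v‖^2 := real_inner_self_eq_norm_sq v
  have h5 : ⟪v,u⟫ = ⟪u,v⟫ := real_inner_comm _ _
  linarith

lemma helper_cross (v s : E) : -(‖s‖^2)/2 - ⟪v, s⟫ ≤ ‖v‖^2/2 := by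
  have h := norm_add_sq_real v s
  nlinarith [sq_nonneg ‖v + s‖]

lemma helper_prod (a e : E) : ⟪a, e⟫ ≤ ‖a + e‖^2/2 - ‖a‖^2/2 := by
  have h := norm_add_sq_real a e
  nlinarith [sq_nonneg ‖e‖]

lemma sum_Icc_top_zero {M : Type*} [AddCommMonoid M] {N : ℕ} (hN : 1 ≤ N) (F : ℕ → M) (h : F N = 0) :
    ∑ i ∈ Icc 1 N, F i = ∑ i ∈ Icc 1 (N-1), F i := by
  have hins : Icc 1 N = insert N (Icc 1 (N-1)) := by
    ext m; simp only [Finset.mem_Icc, Finset.mem_insert]; omega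
  rw [hins, Finset.sum_insert (by simp only [Finset.mem_Icc]; omega), h, zero_add]

end Helpers

set_option maxHeartbeats 2000000 in
theorem stmt_4 (N p : ℕ) (hN : 3 ≤ N) (hp : 0 < p) (n : ℕ → ℕ)
    (ε γ : ℝ) (hε : 0 < ε) (hγ0 : 0 < γ) (hγε : γ ≤ ε)
    (μ : ℝ) (hμ : μ = ε * ((N : ℝ) - 2) * ((N : ℝ) + 1))
    (A : (i : ℕ) → EuclideanSpace ℝ (Fin (n i)) →L[ℝ] EuclideanSpace ℝ (Fin p))
    (b : EuclideanSpace ℝ (Fin p))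
    (X : (i : ℕ) → Set (EuclideanSpace ℝ (Fin (n i))))
    (hXc : ∀ i, Convex ℝ (X i)) (hXcl : ∀ i, IsClosed (X i))
    (f : (i : ℕ) → EuclideanSpace ℝ (Fin (n i)) → ℝ)
    (hf : ∀ i, ConvexOn ℝ Set.univ (f i))
    (t : ℕ)
    (x : ℕ → (i : ℕ) → EuclideanSpace ℝ (Fin (n i)))
    (lam : ℕ → EuclideanSpace ℝ (Fin p))
    (hmem : ∀ k ≤ t, ∀ i ∈ Icc 1 N, x (k + 1) i ∈ X i)
    -- (a) multiplier update
    (ha : ∀ k ≤ t, lam (k + 1) = lam k - γ • ((∑ j ∈ Icc 1 N, A j (x (k + 1) j)) - b))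
    -- (b) optimality of the first block
    (hb : ∀ k ≤ t, ∃ g, IsSubgradientAt (f 1) g (x (k + 1) 1) ∧ ∀ x1 ∈ X 1,
      0 ≤ ⟪x1 - x (k + 1) 1, g - ContinuousLinearMap.adjoint (A 1) (lam (k + 1))
            + γ • ContinuousLinearMap.adjoint (A 1)
                (∑ j ∈ Icc 2 N, A j (x k j - x (k + 1) j))⟫)
    -- (c) optimality of blocks 2,…,N
    (hc : ∀ k ≤ t, ∀ i ∈ Icc 2 N, ∃ g, IsSubgradientAt (f i) g (x (k + 1) i) ∧ ∀ xi ∈ X i,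
      0 ≤ ⟪xi - x (k + 1) i, g
            + μ • ContinuousLinearMap.adjoint (A i) (A i (x (k + 1) i - x 0 i))
            - ContinuousLinearMap.adjoint (A i) (lam (k + 1))
            + γ • ContinuousLinearMap.adjoint (A i)
                (∑ j ∈ Icc (i + 1) N, A j (x k j - x (k + 1) j))⟫)
    -- KKT point
    (xs : (i : ℕ) → EuclideanSpace ℝ (Fin (n i))) (lams : EuclideanSpace ℝ (Fin p))
    (hfeas : ∀ i ∈ Icc 1 N, xs i ∈ X i)
    (hsum : (∑ i ∈ Icc 1 N, A i (xs i)) = b)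
    (hkkt : ∀ i ∈ Icc 1 N, ∃ g, IsSubgradientAt (f i) g (xs i) ∧ ∀ xi ∈ X i,
      0 ≤ ⟪xi - xs i, g - ContinuousLinearMap.adjoint (A i) lams⟫)
    -- ergodic averages
    (xbar : (i : ℕ) → EuclideanSpace ℝ (Fin (n i)))
    (hxbar : ∀ i, xbar i = ((t : ℝ) + 1)⁻¹ • ∑ k ∈ range (t + 1), x (k + 1) i)
    (ρ : ℝ) (hρ : ρ = ‖lams‖ + 1) :
    0 ≤ (∑ i ∈ Icc 1 N, f i (xbar i)) - (∑ i ∈ Icc 1 N, f i (xs i))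
        + ρ * ‖(∑ i ∈ Icc 1 N, A i (xbar i)) - b‖
    ∧ (∑ i ∈ Icc 1 N, f i (xbar i)) - (∑ i ∈ Icc 1 N, f i (xs i))
        + ρ * ‖(∑ i ∈ Icc 1 N, A i (xbar i)) - b‖ ≤
      (ρ ^ 2 + ‖lam 0‖ ^ 2) / (γ * ((t : ℝ) + 1))
      + γ / (2 * ((t : ℝ) + 1)) *
          ∑ i ∈ Icc 1 (N - 1), ‖∑ j ∈ Icc (i + 1) N, A j (x 0 j - xs j)‖ ^ 2
      + ε * ((N : ℝ) - 2) * ((N : ℝ) + 1) / 2 *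
          ∑ i ∈ Icc 2 N, ‖A i (xs i) - A i (x 0 i)‖ ^ 2 := by
  have hNR : (3:ℝ) ≤ (N:ℝ) := by exact_mod_cast hN
  set T : ℝ := (t : ℝ) + 1 with hT
  have hT0 : (0:ℝ) < T := by positivity
  set w : ℕ → ℕ → EuclideanSpace ℝ (Fin p) :=
    fun k i => ∑ j ∈ Icc (i+1) N, A j (x k j - xs j) with hw
  set r : ℕ → EuclideanSpace ℝ (Fin p) :=
    fun k => (∑ i ∈ Icc 1 N, A i (x (k+1) i)) - b with hrdef
  have hwN0 : ∀ kk, w kk N = 0 := by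
    intro kk; simp only [hw]
    rw [Finset.Icc_eq_empty (by omega)]; simp
  have hr0 : ∀ kk, w (kk+1) 0 = r kk := by
    intro kk; simp only [hw, hrdef]
    rw [show (0+1) = 1 from rfl]
    simp [map_sub, Finset.sum_sub_distrib, hsum]
  -- the residual of the ergodic average
  set rbar : EuclideanSpace ℝ (Fin p) := (∑ i ∈ Icc 1 N, A i (xbar i)) - b with hrbardef
  have hmem' : ∀ i ∈ Icc 1 N, xbar i ∈ X i := by
    intro i hi
    rw [hxbar i, Finset.smul_sum]
    refine (hXc i).sum_mem (fun k _ => by positivity) ?_ (fun k hk => hmem k (by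
      simp only [Finset.mem_range] at hk; omega) i hi)
    rw [Finset.sum_const, Finset.card_range, nsmul_eq_mul]
    push_cast
    rw [mul_inv_cancel₀ (by positivity)]
  -- lower bound (first conjunct)
  have hlower : 0 ≤ (∑ i ∈ Icc 1 N, f i (xbar i)) - (∑ i ∈ Icc 1 N, f i (xs i)) + ρ * ‖rbar‖ := by
    have hper : ∀ i ∈ Icc 1 N, ⟪A i (xbar i - xs i), lams⟫ ≤ f i (xbar i) - f i (xs i) := by
      intro i hi
      obtain ⟨g, hg, hVI⟩ := hkkt i hi
      have h1 := hVI (xbar i) (hmem' i hi)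
      simp only [inner_sub_right, ContinuousLinearMap.adjoint_inner_right] at h1
      have h2 := hg (xbar i)
      have h3 := real_inner_comm g (xbar i - xs i)
      linarith
    have hsum1 := Finset.sum_le_sum hper
    rw [← sum_inner] at hsum1
    have heq : (∑ i ∈ Icc 1 N, A i (xbar i - xs i)) = rbar := by
      simp [map_sub, Finset.sum_sub_distrib, hsum, hrbardef]
    rw [heq, Finset.sum_sub_distrib] at hsum1
    have habs := abs_real_inner_le_norm rbar lams
    have h4 : -(‖rbar‖ * ‖lams‖) ≤ ⟪rbar, lams⟫ := by
      cases abs_le.mp habs with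
      | intro hl hr => linarith
    have h5 : ‖lams‖ ≤ ρ := by rw [hρ]; linarith
    nlinarith [norm_nonneg rbar]
  -- the per-iteration inequality
  have key : ∀ k ≤ t, ∀ lamb : EuclideanSpace ℝ (Fin p),
      (∑ i ∈ Icc 1 N, f i (x (k + 1) i)) - (∑ i ∈ Icc 1 N, f i (xs i)) - ⟪lamb, r k⟫
      ≤ (‖lam k - lamb‖^2 - ‖lam (k+1) - lamb‖^2) / (2*γ)
        + (γ/2) * ((∑ i ∈ Icc 1 (N-1), ‖w k i‖^2) - (∑ i ∈ Icc 1 (N-1), ‖w (k+1) i‖^2))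
        + (μ/2) * (∑ i ∈ Icc 2 N, ‖A i (xs i - x 0 i)‖^2) := by
    intro k hk lamb
    have h1mem : (1:ℕ) ∈ Icc 1 N := by simp only [Finset.mem_Icc]; omega
    have hsub21 : Icc 2 N ⊆ Icc 1 N := Finset.Icc_subset_Icc (by omega) le_rfl
    have hsub1N : Icc 1 (N-1) ⊆ Icc 1 N := Finset.Icc_subset_Icc le_rfl (by omega)
    have hSrw : ∀ i, (∑ j ∈ Icc (i+1) N, A j (x k j - x (k+1) j)) = w k i - w (k+1) i := by
      intro i
      simp only [hw]
      rw [← Finset.sum_sub_distrib]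
      refine Finset.sum_congr rfl (fun j _ => ?_)
      rw [← map_sub]
      congr 1
      abel
    -- block 1 bound
    have hB1 : f 1 (x (k+1) 1) - f 1 (xs 1)
        ≤ -⟪A 1 (xs 1 - x (k+1) 1), lam (k+1)⟫
          + γ * ⟪A 1 (xs 1 - x (k+1) 1), w k 1 - w (k+1) 1⟫ := by
      obtain ⟨g, hg, hVI⟩ := hb k hk
      have h1 := hVI (xs 1) (hfeas 1 h1mem)
      have hS1 : (∑ j ∈ Icc 2 N, A j (x k j - x (k+1) j)) = w k 1 - w (k+1) 1 := hSrw 1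
      rw [hS1] at h1
      simp only [inner_add_right, inner_sub_right, real_inner_smul_right,
        ContinuousLinearMap.adjoint_inner_right] at h1
      have h2 := hg (xs 1)
      have h3 := real_inner_comm g (xs 1 - x (k+1) 1)
      have h4 : γ * ⟪A 1 (xs 1 - x (k+1) 1), w k 1 - w (k+1) 1⟫
          = γ * ⟪A 1 (xs 1 - x (k+1) 1), w k 1⟫ - γ * ⟪A 1 (xs 1 - x (k+1) 1), w (k+1) 1⟫ := by
        rw [inner_sub_right]; ring
      linarith
    -- blocks 2..N
    have hBi : ∀ i ∈ Icc 2 N, f i (x (k+1) i) - f i (xs i)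
        ≤ -⟪A i (xs i - x (k+1) i), lam (k+1)⟫
          + γ * ⟪A i (xs i - x (k+1) i), w k i - w (k+1) i⟫
          + μ * ⟪A i (xs i - x (k+1) i), A i (x (k+1) i - x 0 i)⟫ := by
      intro i hi
      obtain ⟨g, hg, hVI⟩ := hc k hk i hi
      have h1 := hVI (xs i) (hfeas i (hsub21 hi))
      rw [hSrw i] at h1
      simp only [inner_add_right, inner_sub_right, real_inner_smul_right,
        ContinuousLinearMap.adjoint_inner_right] at h1
      have h2 := hg (xs i)
      have h3 := real_inner_comm g (xs i - x (k+1) i)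
      have h4 : γ * ⟪A i (xs i - x (k+1) i), w k i - w (k+1) i⟫
          = γ * ⟪A i (xs i - x (k+1) i), w k i⟫ - γ * ⟪A i (xs i - x (k+1) i), w (k+1) i⟫ := by
        rw [inner_sub_right]; ring
      linarith
    -- summed block bounds
    have hsplit : Icc 1 N = insert 1 (Icc 2 N) := by
      ext m; simp only [Finset.mem_Icc, Finset.mem_insert]; omega
    have h1notin : (1:ℕ) ∉ Icc 2 N := by simp
    have hFsum : (∑ i ∈ Icc 1 N, f i (x (k + 1) i)) - (∑ i ∈ Icc 1 N, f i (xs i))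
        ≤ -(∑ i ∈ Icc 1 N, ⟪A i (xs i - x (k+1) i), lam (k+1)⟫)
          + γ * (∑ i ∈ Icc 1 N, ⟪A i (xs i - x (k+1) i), w k i - w (k+1) i⟫)
          + μ * (∑ i ∈ Icc 2 N, ⟪A i (xs i - x (k+1) i), A i (x (k+1) i - x 0 i)⟫) := by
      have hs2 := Finset.sum_le_sum hBi
      rw [Finset.sum_sub_distrib, Finset.sum_add_distrib, Finset.sum_add_distrib,
        Finset.sum_neg_distrib, ← Finset.mul_sum, ← Finset.mul_sum] at hs2
      rw [hsplit, Finset.sum_insert h1notin, Finset.sum_insert h1notin,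
        Finset.sum_insert h1notin, Finset.sum_insert h1notin]
      linarith [hB1, hs2]
    have hra : (∑ i ∈ Icc 1 N, A i (xs i - x (k+1) i)) = -(r k) := by
      simp only [hrdef, map_sub, Finset.sum_sub_distrib, hsum]
      rw [neg_sub]
    have hinner1 : (∑ i ∈ Icc 1 N, ⟪A i (xs i - x (k+1) i), lam (k+1)⟫)
        = -⟪r k, lam (k+1)⟫ := by
      rw [← sum_inner, hra, inner_neg_left]
    have hd : lam k - lam (k+1) = γ • r k := by
      rw [ha k hk, sub_sub_cancel]
    have hrk : r k = γ⁻¹ • (lam k - lam (k+1)) := by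
      rw [hd, smul_smul, inv_mul_cancel₀ (ne_of_gt hγ0), one_smul]
    have hnormd : ‖lam k - lam (k+1)‖^2 = γ^2 * ‖r k‖^2 := by
      rw [hd, norm_smul, Real.norm_eq_abs, abs_of_pos hγ0, mul_pow]
    have hlamid : ⟪r k, lam (k+1) - lamb⟫
        = (‖lam k - lamb‖^2 - ‖lam (k+1) - lamb‖^2)/(2*γ) - (γ/2) * ‖r k‖^2 := by
      have hexp : ‖lam k - lamb‖^2 = ‖lam k - lam (k+1)‖^2
          + 2*⟪lam k - lam (k+1), lam (k+1) - lamb⟫ + ‖lam (k+1) - lamb‖^2 := by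
        have e : (lam k - lam (k+1)) + (lam (k+1) - lamb) = lam k - lamb := by abel
        rw [← e, norm_add_sq_real]
      have h5 : ⟪r k, lam (k+1) - lamb⟫
          = γ⁻¹ * ⟪lam k - lam (k+1), lam (k+1) - lamb⟫ := by
        rw [hrk, real_inner_smul_left]
      have h6 : ⟪lam k - lam (k+1), lam (k+1) - lamb⟫
          = (‖lam k - lamb‖^2 - ‖lam (k+1) - lamb‖^2 - γ^2 * ‖r k‖^2)/2 := by
        rw [← hnormd]; linarith [hexp]
      rw [h5, h6]
      field_simp
    -- T1 over Icc 1 (N-1)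
    have hT1red : (∑ i ∈ Icc 1 N, ⟪A i (xs i - x (k+1) i), w k i - w (k+1) i⟫)
        = ∑ i ∈ Icc 1 (N-1), ⟪A i (xs i - x (k+1) i), w k i - w (k+1) i⟫ := by
      refine sum_Icc_top_zero (by omega) _ ?_
      rw [hwN0 k, hwN0 (k+1)]
      simp
    have hav : ∀ i ∈ Icc 1 N, A i (xs i - x (k+1) i) = w (k+1) i - w (k+1) (i-1) := by
      intro i hi
      simp only [Finset.mem_Icc] at hi
      have hwi : w (k+1) (i-1) = A i (x (k+1) i - xs i) + w (k+1) i := by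
        simp only [hw]
        have hic : Icc (i-1+1) N = insert i (Icc (i+1) N) := by
          ext m; simp only [Finset.mem_Icc, Finset.mem_insert]; omega
        rw [hic, Finset.sum_insert (by simp only [Finset.mem_Icc]; omega)]
      rw [hwi, map_sub, map_sub]
      abel
    have hIdent : ∀ i ∈ Icc 1 (N-1), ⟪A i (xs i - x (k+1) i), w k i - w (k+1) i⟫
        = (‖w k i‖^2 - ‖w (k+1) i‖^2)/2 + (-(‖w k i - w (k+1) i‖^2)/2
          - ⟪w (k+1) (i-1), w k i - w (k+1) i⟫) := by
      intro i hi
      rw [hav i (hsub1N hi), helper_inner_id]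
      ring
    have hT1eq : (∑ i ∈ Icc 1 (N-1), ⟪A i (xs i - x (k+1) i), w k i - w (k+1) i⟫)
        = ((∑ i ∈ Icc 1 (N-1), ‖w k i‖^2) - (∑ i ∈ Icc 1 (N-1), ‖w (k+1) i‖^2))/2
          + ∑ i ∈ Icc 1 (N-1), (-(‖w k i - w (k+1) i‖^2)/2
            - ⟪w (k+1) (i-1), w k i - w (k+1) i⟫) := by
      rw [Finset.sum_congr rfl hIdent, Finset.sum_add_distrib, ← Finset.sum_div,
        Finset.sum_sub_distrib]
    have hsplitQ : Icc 1 (N-1) = insert 1 (Icc 2 (N-1)) := by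
      ext m; simp only [Finset.mem_Icc, Finset.mem_insert]; omega
    have h1notinQ : (1:ℕ) ∉ Icc 2 (N-1) := by simp
    set S : ℝ := ∑ j ∈ Icc 2 N, ‖A j (xs j - x (k+1) j)‖^2 with hSdef
    have hS0 : 0 ≤ S := Finset.sum_nonneg (fun j _ => sq_nonneg _)
    have hchunk1 : -(γ/2)*‖r k‖^2
        + γ * (-(‖w k 1 - w (k+1) 1‖^2)/2 - ⟪w (k+1) (1-1), w k 1 - w (k+1) 1⟫) ≤ 0 := by
      have hv0 : w (k+1) (1-1) = r k := by
        rw [show (1-1 : ℕ) = 0 from rfl]; exact hr0 k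
      rw [hv0]
      have h := norm_add_sq_real (r k) (w k 1 - w (k+1) 1)
      have h2 : 0 ≤ γ/2 * ‖r k + (w k 1 - w (k+1) 1)‖^2 := by positivity
      have h3 : γ/2 * ‖r k + (w k 1 - w (k+1) 1)‖^2
          = γ/2*‖r k‖^2 + γ*⟪r k, w k 1 - w (k+1) 1⟫ + γ/2*‖w k 1 - w (k+1) 1‖^2 := by
        rw [h]; ring
      nlinarith [h2, h3]
    have hchunk2 : ∀ i ∈ Icc 2 (N-1),
        -(‖w k i - w (k+1) i‖^2)/2 - ⟪w (k+1) (i-1), w k i - w (k+1) i⟫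
          ≤ ((N:ℝ)-1)/2 * S := by
      intro i hi
      simp only [Finset.mem_Icc] at hi
      have hcross := helper_cross (w (k+1) (i-1)) (w k i - w (k+1) i)
      have hwi : w (k+1) (i-1) = ∑ j ∈ Icc i N, A j (x (k+1) j - xs j) := by
        simp only [hw]
        rw [show i - 1 + 1 = i from by omega]
      have hb1 : ‖w (k+1) (i-1)‖^2
          ≤ ((Icc i N).card : ℝ) * ∑ j ∈ Icc i N, ‖A j (x (k+1) j - xs j)‖^2 := by
        rw [hwi]; exact helper_norm_sum_sq _ _
      have hcard : ((Icc i N).card : ℝ) ≤ (N:ℝ) - 1 := by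
        rw [Nat.card_Icc]
        have h1 : (N + 1 - i : ℕ) ≤ N - 1 := by omega
        calc ((N + 1 - i : ℕ) : ℝ) ≤ ((N - 1 : ℕ) : ℝ) := by exact_mod_cast h1
          _ = (N:ℝ) - 1 := by rw [Nat.cast_sub (by omega)]; norm_num
      have hnormeq : ∀ j, ‖A j (x (k+1) j - xs j)‖ = ‖A j (xs j - x (k+1) j)‖ := by
        intro j
        rw [← neg_sub (xs j) (x (k+1) j), map_neg, norm_neg]
      have hsubS : ∑ j ∈ Icc i N, ‖A j (x (k+1) j - xs j)‖^2 ≤ S := by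
        rw [hSdef]
        simp only [hnormeq]
        exact Finset.sum_le_sum_of_subset_of_nonneg
          (Finset.Icc_subset_Icc (by omega) le_rfl) (fun _ _ _ => sq_nonneg _)
      have hsn : 0 ≤ ∑ j ∈ Icc i N, ‖A j (x (k+1) j - xs j)‖^2 :=
        Finset.sum_nonneg (fun j _ => sq_nonneg _)
      have hNn : (0:ℝ) ≤ (N:ℝ) - 1 := by linarith
      have hb2 : ‖w (k+1) (i-1)‖^2 ≤ ((N:ℝ)-1) * S :=
        hb1.trans (mul_le_mul hcard hsubS hsn hNn)
      linarith
    have hcard2 : ((Icc 2 (N-1)).card : ℝ) = (N:ℝ) - 2 := by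
      rw [Nat.card_Icc, show (N - 1 + 1 - 2 : ℕ) = N - 2 from by omega,
        Nat.cast_sub (by omega)]
      norm_num
    have hchunk2' : ∑ i ∈ Icc 2 (N-1), (-(‖w k i - w (k+1) i‖^2)/2
          - ⟪w (k+1) (i-1), w k i - w (k+1) i⟫)
        ≤ ((N:ℝ)-2) * (((N:ℝ)-1)/2 * S) := by
      calc _ ≤ ∑ _i ∈ Icc 2 (N-1), ((N:ℝ)-1)/2 * S := Finset.sum_le_sum hchunk2
        _ = ((N:ℝ)-2) * (((N:ℝ)-1)/2 * S) := by
          rw [Finset.sum_const, nsmul_eq_mul, hcard2]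
    have hmuS : γ * (((N:ℝ)-2) * (((N:ℝ)-1)/2 * S)) ≤ (μ/2) * S := by
      rw [hμ]
      have h2 : (0:ℝ) ≤ (N:ℝ) - 2 := by linarith
      have key2 : 0 ≤ ε*((N:ℝ)+1) - γ*((N:ℝ)-1) := by nlinarith
      nlinarith [mul_nonneg (mul_nonneg h2 hS0) key2]
    have hμ0 : 0 ≤ μ := by
      rw [hμ]
      have h2a : (0:ℝ) ≤ (N:ℝ) - 2 := by linarith
      have h3a : (0:ℝ) ≤ (N:ℝ) + 1 := by linarith
      have := mul_nonneg (mul_nonneg hε.le h2a) h3a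
      linarith
    have hT2 : μ * (∑ i ∈ Icc 2 N, ⟪A i (xs i - x (k+1) i), A i (x (k+1) i - x 0 i)⟫)
        ≤ (μ/2) * (∑ i ∈ Icc 2 N, ‖A i (xs i - x 0 i)‖^2) - (μ/2) * S := by
      have hper : ∀ i ∈ Icc 2 N, ⟪A i (xs i - x (k+1) i), A i (x (k+1) i - x 0 i)⟫
          ≤ ‖A i (xs i - x 0 i)‖^2/2 - ‖A i (xs i - x (k+1) i)‖^2/2 := by
        intro i hi
        have h := helper_prod (A i (xs i - x (k+1) i)) (A i (x (k+1) i - x 0 i))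
        have he : A i (xs i - x (k+1) i) + A i (x (k+1) i - x 0 i) = A i (xs i - x 0 i) := by
          rw [← map_add]; congr 1; abel
        rw [he] at h
        linarith
      have hsl := Finset.sum_le_sum hper
      rw [Finset.sum_sub_distrib, ← Finset.sum_div, ← Finset.sum_div, ← hSdef] at hsl
      have hml := mul_le_mul_of_nonneg_left hsl hμ0
      nlinarith [hml]
    -- combine
    have hmain1 : (∑ i ∈ Icc 1 N, f i (x (k + 1) i)) - (∑ i ∈ Icc 1 N, f i (xs i))
        - ⟪lamb, r k⟫
        ≤ ⟪r k, lam (k+1) - lamb⟫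
          + γ * (∑ i ∈ Icc 1 (N-1), ⟪A i (xs i - x (k+1) i), w k i - w (k+1) i⟫)
          + μ * (∑ i ∈ Icc 2 N, ⟪A i (xs i - x (k+1) i), A i (x (k+1) i - x 0 i)⟫) := by
      have h1 := hFsum
      rw [hinner1, hT1red] at h1
      have h2 : ⟪lamb, r k⟫ = ⟪r k, lamb⟫ := real_inner_comm _ _
      have h3 : ⟪r k, lam (k+1) - lamb⟫ = ⟪r k, lam (k+1)⟫ - ⟪r k, lamb⟫ :=
        inner_sub_right _ _ _
      linarith
    rw [hT1eq, hlamid] at hmain1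
    have hQsplit : ∑ i ∈ Icc 1 (N-1), (-(‖w k i - w (k+1) i‖^2)/2
          - ⟪w (k+1) (i-1), w k i - w (k+1) i⟫)
        = (-(‖w k 1 - w (k+1) 1‖^2)/2 - ⟪w (k+1) (1-1), w k 1 - w (k+1) 1⟫)
          + ∑ i ∈ Icc 2 (N-1), (-(‖w k i - w (k+1) i‖^2)/2
            - ⟪w (k+1) (i-1), w k i - w (k+1) i⟫) := by
      rw [hsplitQ, Finset.sum_insert h1notinQ]
    have hQγ : γ * (∑ i ∈ Icc 1 (N-1), (-(‖w k i - w (k+1) i‖^2)/2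
          - ⟪w (k+1) (i-1), w k i - w (k+1) i⟫))
        = γ * ((-(‖w k 1 - w (k+1) 1‖^2)/2 - ⟪w (k+1) (1-1), w k 1 - w (k+1) 1⟫)
          + ∑ i ∈ Icc 2 (N-1), (-(‖w k i - w (k+1) i‖^2)/2
            - ⟪w (k+1) (i-1), w k i - w (k+1) i⟫)) := by
      rw [hQsplit]
    have hch2γ := mul_le_mul_of_nonneg_left hchunk2' hγ0.le
    linarith [hmain1, hchunk1, hch2γ, hmuS, hT2, hQγ]

  -- choose the dual vector
  set lamb : EuclideanSpace ℝ (Fin p) := -((ρ * ‖rbar‖⁻¹) • rbar) with hlambdef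
  have hρ0 : 0 < ρ := by rw [hρ]; positivity
  have hinnerlamb : ⟪lamb, rbar⟫ = -(ρ * ‖rbar‖) := by
    by_cases h : rbar = 0
    · simp [hlambdef, h]
    · simp only [hlambdef, inner_neg_left, real_inner_smul_left, real_inner_self_eq_norm_sq]
      have hn : ‖rbar‖ ≠ 0 := norm_ne_zero_iff.mpr h
      field_simp
  have hnormlamb : ‖lamb‖ ≤ ρ := by
    by_cases h : rbar = 0
    · simp [hlambdef, h]; positivity
    · have hn : (0:ℝ) < ‖rbar‖ := norm_pos_iff.mpr h
      rw [hlambdef, norm_neg, norm_smul]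
      rw [Real.norm_eq_abs, abs_of_nonneg (by positivity)]
      rw [mul_assoc, inv_mul_cancel₀ hn.ne', mul_one]
  have hlam0b : ‖lam 0 - lamb‖^2 ≤ 2*(ρ^2 + ‖lam 0‖^2) := by
    have h1 := norm_sub_le (lam 0) lamb
    have h2 : (0:ℝ) ≤ ‖lam 0 - lamb‖ := norm_nonneg _
    have h3 : (0:ℝ) ≤ ‖lam 0‖ := norm_nonneg _
    have h4 : (0:ℝ) ≤ ‖lamb‖ := norm_nonneg _
    have h5 : ‖lam 0 - lamb‖ ≤ ‖lam 0‖ + ρ := by linarith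
    have h6 := pow_le_pow_left₀ h2 h5 2
    nlinarith [sq_nonneg (‖lam 0‖ - ρ)]
  have hTcast : ((t+1:ℕ):ℝ) = T := by rw [hT]; push_cast; ring
  -- sum of residuals
  have hrsum : ∑ k ∈ range (t+1), r k = T • rbar := by
    have h1 : ∑ i ∈ Icc 1 N, A i (xbar i)
        = T⁻¹ • ∑ k ∈ range (t+1), ∑ i ∈ Icc 1 N, A i (x (k+1) i) := by
      simp only [hxbar, map_smul, map_sum]
      rw [← Finset.smul_sum, Finset.sum_comm]
    have h2 : ∑ k ∈ range (t+1), r k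
        = (∑ k ∈ range (t+1), ∑ i ∈ Icc 1 N, A i (x (k+1) i)) - (t+1:ℕ) • b := by
      simp only [hrdef]
      rw [Finset.sum_sub_distrib, Finset.sum_const, Finset.card_range]
    rw [h2, hrbardef, h1, smul_sub, smul_smul, mul_inv_cancel₀ hT0.ne', one_smul]
    congr 1
    rw [← Nat.cast_smul_eq_nsmul ℝ (t+1) b, hTcast]
  -- Jensen
  have hJ : (∑ i ∈ Icc 1 N, f i (xbar i))
      ≤ T⁻¹ * ∑ k ∈ range (t+1), ∑ i ∈ Icc 1 N, f i (x (k+1) i) := by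
    have hi : ∀ i, f i (xbar i) ≤ T⁻¹ * ∑ k ∈ range (t+1), f i (x (k+1) i) := by
      intro i
      have h1 := (hf i).map_sum_le (t := Finset.range (t+1)) (w := fun _ => T⁻¹)
        (p := fun k => x (k+1) i) (fun k _ => by positivity)
        (by rw [Finset.sum_const, Finset.card_range, nsmul_eq_mul, hTcast,
              mul_inv_cancel₀ hT0.ne'])
        (fun k _ => Set.mem_univ _)
      rw [← Finset.smul_sum, ← hxbar i] at h1
      calc f i (xbar i) ≤ ∑ k ∈ range (t+1), T⁻¹ • f i (x (k+1) i) := h1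
        _ = T⁻¹ * ∑ k ∈ range (t+1), f i (x (k+1) i) := by
            simp only [smul_eq_mul]; rw [← Finset.mul_sum]
    calc (∑ i ∈ Icc 1 N, f i (xbar i))
        ≤ ∑ i ∈ Icc 1 N, (T⁻¹ * ∑ k ∈ range (t+1), f i (x (k+1) i)) :=
          Finset.sum_le_sum (fun i _ => hi i)
      _ = T⁻¹ * ∑ k ∈ range (t+1), ∑ i ∈ Icc 1 N, f i (x (k+1) i) := by
          rw [← Finset.mul_sum, Finset.sum_comm]
  -- sum the per-iteration inequalities
  have hsum2 : ∑ k ∈ range (t+1),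
      ((∑ i ∈ Icc 1 N, f i (x (k + 1) i)) - (∑ i ∈ Icc 1 N, f i (xs i)) - ⟪lamb, r k⟫)
      ≤ ‖lam 0 - lamb‖^2/(2*γ) + (γ/2) * (∑ i ∈ Icc 1 (N-1), ‖w 0 i‖^2)
        + T * ((μ/2) * (∑ i ∈ Icc 2 N, ‖A i (xs i - x 0 i)‖^2)) := by
    calc ∑ k ∈ range (t+1),
        ((∑ i ∈ Icc 1 N, f i (x (k + 1) i)) - (∑ i ∈ Icc 1 N, f i (xs i)) - ⟪lamb, r k⟫)
        ≤ ∑ k ∈ range (t+1),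
          ((‖lam k - lamb‖^2 - ‖lam (k+1) - lamb‖^2) / (2*γ)
            + (γ/2) * ((∑ i ∈ Icc 1 (N-1), ‖w k i‖^2) - (∑ i ∈ Icc 1 (N-1), ‖w (k+1) i‖^2))
            + (μ/2) * (∑ i ∈ Icc 2 N, ‖A i (xs i - x 0 i)‖^2)) := by
          refine Finset.sum_le_sum (fun k hk => key k ?_ lamb)
          simp only [Finset.mem_range] at hk; omega
      _ = (‖lam 0 - lamb‖^2 - ‖lam (t+1) - lamb‖^2)/(2*γ)
            + (γ/2) * ((∑ i ∈ Icc 1 (N-1), ‖w 0 i‖^2) - (∑ i ∈ Icc 1 (N-1), ‖w (t+1) i‖^2))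
            + ((t+1:ℕ):ℝ) * ((μ/2) * (∑ i ∈ Icc 2 N, ‖A i (xs i - x 0 i)‖^2)) := by
          rw [Finset.sum_add_distrib, Finset.sum_add_distrib, Finset.sum_const,
            Finset.card_range, ← Finset.sum_div,
            Finset.sum_range_sub' (fun k => ‖lam k - lamb‖^2) (t+1),
            ← Finset.mul_sum,
            Finset.sum_range_sub' (fun k => ∑ i ∈ Icc 1 (N-1), ‖w k i‖^2) (t+1),
            nsmul_eq_mul]
      _ ≤ _ := by
          rw [hTcast]
          have h1 : (0:ℝ) ≤ ‖lam (t+1) - lamb‖^2 := sq_nonneg _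
          have h2 : (0:ℝ) ≤ ∑ i ∈ Icc 1 (N-1), ‖w (t+1) i‖^2 :=
            Finset.sum_nonneg (fun i _ => sq_nonneg _)
          have h4 : (‖lam 0 - lamb‖^2 - ‖lam (t+1) - lamb‖^2)/(2*γ)
              ≤ ‖lam 0 - lamb‖^2/(2*γ) :=
            (div_le_div_iff_of_pos_right (by positivity)).mpr (by linarith)
          have h5 : (γ/2) * ((∑ i ∈ Icc 1 (N-1), ‖w 0 i‖^2)
                - (∑ i ∈ Icc 1 (N-1), ‖w (t+1) i‖^2))
              ≤ (γ/2) * (∑ i ∈ Icc 1 (N-1), ‖w 0 i‖^2) :=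
            mul_le_mul_of_nonneg_left (by linarith) (by positivity)
          linarith
  -- rewrite the left-hand side of hsum2
  have hL : ∑ k ∈ range (t+1),
      ((∑ i ∈ Icc 1 N, f i (x (k + 1) i)) - (∑ i ∈ Icc 1 N, f i (xs i)) - ⟪lamb, r k⟫)
      = (∑ k ∈ range (t+1), ∑ i ∈ Icc 1 N, f i (x (k+1) i))
        - T * (∑ i ∈ Icc 1 N, f i (xs i)) - T * ⟪lamb, rbar⟫ := by
    rw [Finset.sum_sub_distrib, Finset.sum_sub_distrib, Finset.sum_const, Finset.card_range,
      nsmul_eq_mul, hTcast, ← inner_sum, hrsum, real_inner_smul_right]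
  refine ⟨hlower, ?_⟩
  have hQQ : (∑ i ∈ Icc 2 N, ‖A i (xs i - x 0 i)‖^2)
      = ∑ i ∈ Icc 2 N, ‖A i (xs i) - A i (x 0 i)‖^2 := by
    simp only [map_sub]
  have hW0 : (∑ i ∈ Icc 1 (N-1), ‖w 0 i‖^2)
      = ∑ i ∈ Icc 1 (N-1), ‖∑ j ∈ Icc (i+1) N, A j (x 0 j - xs j)‖^2 := by
    simp only [hw]
  have hJ2 : T * (∑ i ∈ Icc 1 N, f i (xbar i))
      ≤ ∑ k ∈ range (t+1), ∑ i ∈ Icc 1 N, f i (x (k+1) i) := by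
    have h := mul_le_mul_of_nonneg_left hJ hT0.le
    rwa [← mul_assoc, mul_inv_cancel₀ hT0.ne', one_mul] at h
  have hmain : T * ((∑ i ∈ Icc 1 N, f i (xbar i)) - (∑ i ∈ Icc 1 N, f i (xs i)) + ρ * ‖rbar‖)
      ≤ T * ((ρ ^ 2 + ‖lam 0‖ ^ 2) / (γ * T)
        + γ / (2 * T) * ∑ i ∈ Icc 1 (N - 1), ‖∑ j ∈ Icc (i + 1) N, A j (x 0 j - xs j)‖ ^ 2
        + ε * ((N : ℝ) - 2) * ((N : ℝ) + 1) / 2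
            * ∑ i ∈ Icc 2 N, ‖A i (xs i) - A i (x 0 i)‖ ^ 2) := by
    have e1 : T * ((ρ ^ 2 + ‖lam 0‖ ^ 2) / (γ * T)
        + γ / (2 * T) * ∑ i ∈ Icc 1 (N - 1), ‖∑ j ∈ Icc (i + 1) N, A j (x 0 j - xs j)‖ ^ 2
        + ε * ((N : ℝ) - 2) * ((N : ℝ) + 1) / 2
            * ∑ i ∈ Icc 2 N, ‖A i (xs i) - A i (x 0 i)‖ ^ 2)
        = (ρ ^ 2 + ‖lam 0‖ ^ 2) / γ
          + (γ/2) * ∑ i ∈ Icc 1 (N - 1), ‖∑ j ∈ Icc (i + 1) N, A j (x 0 j - xs j)‖ ^ 2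
          + T * (ε * ((N : ℝ) - 2) * ((N : ℝ) + 1) / 2
              * ∑ i ∈ Icc 2 N, ‖A i (xs i) - A i (x 0 i)‖ ^ 2) := by
      field_simp
    rw [e1]
    have e2 : T * ((∑ i ∈ Icc 1 N, f i (xbar i)) - (∑ i ∈ Icc 1 N, f i (xs i)) + ρ * ‖rbar‖)
        = T * (∑ i ∈ Icc 1 N, f i (xbar i)) - T * (∑ i ∈ Icc 1 N, f i (xs i))
          - T * ⟪lamb, rbar⟫ := by
      rw [hinnerlamb]; ring
    rw [e2]
    have h6 : ‖lam 0 - lamb‖^2/(2*γ) ≤ (ρ^2 + ‖lam 0‖^2)/γ := by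
      rw [div_le_div_iff₀ (by positivity) (by positivity)]
      nlinarith
    have h7 : T * ((μ/2) * (∑ i ∈ Icc 2 N, ‖A i (xs i - x 0 i)‖^2))
        = T * (ε * ((N : ℝ) - 2) * ((N : ℝ) + 1) / 2
            * ∑ i ∈ Icc 2 N, ‖A i (xs i) - A i (x 0 i)‖ ^ 2) := by
      rw [hQQ, hμ]
    have h8 := hsum2
    rw [hL] at h8
    rw [hW0] at h8
    have h9 : T * (∑ i ∈ Icc 1 N, f i (xbar i)) - T * (∑ i ∈ Icc 1 N, f i (xs i))
        - T * ⟪lamb, rbar⟫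
        ≤ (∑ k ∈ range (t+1), ∑ i ∈ Icc 1 N, f i (x (k+1) i))
          - T * (∑ i ∈ Icc 1 N, f i (xs i)) - T * ⟪lamb, rbar⟫ :=
      sub_le_sub_right (sub_le_sub_right hJ2 _) _
    have h10 := h9.trans h8
    rw [h7] at h10
    exact h10.trans (add_le_add_left (add_le_add_left h6 _) _)
  exact le_of_mul_le_mul_left hmain hT0
end

section
/- (Per-block sufficient decrease) Let f : ℝ^n → ℝ be convex, X ⊆ ℝ^n convex, A ∈ ℝ^{p×n}, λ ∈ ℝ^p, s ∈ ℝ^p, γ > 0, and define φ(x) = f(x) − ⟨λ, Ax⟩ + (γ/2)‖Ax + s‖². Suppose x⁺ ∈ X and there exists g ∈ ∂f(x⁺) such that ⟨x − x⁺, g − Aᵀλ + γAᵀ(Ax⁺ + s)⟩ ≥ 0 for all x ∈ X. Then for every x ∈ X, φ(x) − φ(x⁺) ≥ (γ/2)‖Ax − Ax⁺‖². In particular, for the ADMM applied to min Σ_i f_i(x_i) s.t. Σ_{i<N} A_i x_i + x_N = b, x_i ∈ X_i, if x_i^{k+1} satisfies the first-order optimality condition of the i-th block subproblem then L_γ(x_1^{k+1},…,x_{i-1}^{k+1},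 x_i^k, x_{i+1}^k,…,x_N^k, λ^k) − L_γ(x_1^{k+1},…,x_i^{k+1}, x_{i+1}^k,…,x_N^k, λ^k) ≥ (γ/2)‖A_i x_i^k − A_i x_i^{k+1}‖². -/
open Finset
open scoped RealInnerProductSpace

/-- The augmented Lagrangian of the Scenario-2 (sharing) problem
`min ∑ᵢ fᵢ(xᵢ) + f_N(x_N)  s.t. ∑_{i<N} Aᵢ xᵢ + x_N = b`. -/
noncomputable def augL (N p : ℕ) (n : ℕ → ℕ)
    (f : (i : ℕ) → EuclideanSpace ℝ (Fin (n i)) → ℝ)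
    (fN : EuclideanSpace ℝ (Fin p) → ℝ)
    (A : (i : ℕ) → EuclideanSpace ℝ (Fin (n i)) →L[ℝ] EuclideanSpace ℝ (Fin p))
    (b : EuclideanSpace ℝ (Fin p)) (γ : ℝ)
    (x : (i : ℕ) → EuclideanSpace ℝ (Fin (n i)))
    (xN lam : EuclideanSpace ℝ (Fin p)) : ℝ :=
  (∑ i ∈ Finset.Icc 1 (N - 1), f i (x i)) + fN xN
    - ⟪lam, (∑ i ∈ Finset.Icc 1 (N - 1), A i (x i)) + xN - b⟫
    + γ / 2 * ‖(∑ i ∈ Finset.Icc 1 (N - 1), A i (x i)) + xN - b‖ ^ 2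

lemma key_decrease {nn p : ℕ} (f : EuclideanSpace ℝ (Fin nn) → ℝ)
    (X : Set (EuclideanSpace ℝ (Fin nn)))
    (A : EuclideanSpace ℝ (Fin nn) →L[ℝ] EuclideanSpace ℝ (Fin p))
    (lam s : EuclideanSpace ℝ (Fin p)) (γ : ℝ)
    (xp : EuclideanSpace ℝ (Fin nn))
    (hopt : ∃ g, IsSubgradientAt f g xp ∧ ∀ x ∈ X,
      0 ≤ ⟪x - xp, g - ContinuousLinearMap.adjoint A lam
            + γ • ContinuousLinearMap.adjoint A (A xp + s)⟫) :
    ∀ x ∈ X,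
      (f x - ⟪lam, A x⟫ + γ / 2 * ‖A x + s‖ ^ 2)
        - (f xp - ⟪lam, A xp⟫ + γ / 2 * ‖A xp + s‖ ^ 2) ≥ γ / 2 * ‖A x - A xp‖ ^ 2 := by
  obtain ⟨g, hg, hvi⟩ := hopt
  intro x hx
  have hsub := hg x
  have hv := hvi x hx
  have hinner : ⟪x - xp, g - ContinuousLinearMap.adjoint A lam
      + γ • ContinuousLinearMap.adjoint A (A xp + s)⟫
      = ⟪g, x - xp⟫ - ⟪lam, A x - A xp⟫ + γ * ⟪A xp + s, A x - A xp⟫ := by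
    rw [real_inner_comm]
    rw [inner_add_left, inner_sub_left, inner_smul_left,
      ContinuousLinearMap.adjoint_inner_left, ContinuousLinearMap.adjoint_inner_left,
      map_sub]
    simp only [starRingEnd_apply, star_trivial]
  have hnorm : ‖A x + s‖ ^ 2 = ‖A xp + s‖ ^ 2 + 2 * ⟪A xp + s, A x - A xp⟫ + ‖A x - A xp‖ ^ 2 := by
    have : A x + s = (A xp + s) + (A x - A xp) := by abel
    rw [this, norm_add_sq_real]
  have hlam : ⟪lam, A x⟫ - ⟪lam, A xp⟫ = ⟪lam, A x - A xp⟫ := by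
    rw [inner_sub_right]
  rw [hinner] at hv
  rw [hnorm]
  linarith [hv, hsub, hlam]

lemma sum_split {M : Type*} [AddCommMonoid M] (g : ℕ → M) {i m : ℕ} (h1 : 1 ≤ i) (h2 : i ≤ m) :
    ∑ j ∈ Icc 1 m, g j = ((∑ j ∈ Icc 1 (i-1), g j) + g i) + ∑ j ∈ Icc (i+1) m, g j := by
  have e0 : Icc 1 m = Ioc 0 m := by rw [← Finset.Icc_add_one_left_eq_Ioc]; rfl
  have e1 : Icc 1 (i-1) = Ioc 0 (i-1) := by rw [← Finset.Icc_add_one_left_eq_Ioc]; rfl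
  have e2 : Icc (i+1) m = Ioc i m := by rw [← Finset.Icc_add_one_left_eq_Ioc]
  have e3 : Ioc (i-1) m = insert i (Ioc i m) := by
    rw [Finset.Ioc_insert_left h2, ← Finset.Icc_add_one_left_eq_Ioc]
    congr 1
    omega
  rw [e0, e1, e2, ← Finset.sum_Ioc_consecutive g (Nat.zero_le (i-1))
    (le_trans (Nat.sub_le i 1) h2), e3, Finset.sum_insert (by simp), add_assoc]

theorem stmt_8
    -- general per-block sufficient decrease
    (nn p : ℕ) (f : EuclideanSpace ℝ (Fin nn) → ℝ) (hf : ConvexOn ℝ Set.univ f)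
    (X : Set (EuclideanSpace ℝ (Fin nn))) (hX : Convex ℝ X)
    (A : EuclideanSpace ℝ (Fin nn) →L[ℝ] EuclideanSpace ℝ (Fin p))
    (lam s : EuclideanSpace ℝ (Fin p)) (γ : ℝ) (hγ : 0 < γ)
    (xp : EuclideanSpace ℝ (Fin nn)) (hxp : xp ∈ X)
    (hopt : ∃ g, IsSubgradientAt f g xp ∧ ∀ x ∈ X,
      0 ≤ ⟪x - xp, g - ContinuousLinearMap.adjoint A lam
            + γ • ContinuousLinearMap.adjoint A (A xp + s)⟫)
    -- data for the ADMM instance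
    (N : ℕ) (hN : 3 ≤ N) (n : ℕ → ℕ)
    (fs : (i : ℕ) → EuclideanSpace ℝ (Fin (n i)) → ℝ)
    (hfs : ∀ i, ConvexOn ℝ Set.univ (fs i))
    (fN : EuclideanSpace ℝ (Fin p) → ℝ)
    (Xs : (i : ℕ) → Set (EuclideanSpace ℝ (Fin (n i)))) (hXs : ∀ i, Convex ℝ (Xs i))
    (As : (i : ℕ) → EuclideanSpace ℝ (Fin (n i)) →L[ℝ] EuclideanSpace ℝ (Fin p))
    (b : EuclideanSpace ℝ (Fin p))
    (i : ℕ) (hi1 : 1 ≤ i) (hi2 : i ≤ N - 1)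
    (xk xk1 : (j : ℕ) → EuclideanSpace ℝ (Fin (n j)))
    (xNk lamk : EuclideanSpace ℝ (Fin p))
    (hkmem : xk i ∈ Xs i) (hk1mem : xk1 i ∈ Xs i)
    -- first-order optimality condition of the i-th block subproblem
    (hiopt : ∃ g, IsSubgradientAt (fs i) g (xk1 i) ∧ ∀ xi ∈ Xs i,
      0 ≤ ⟪xi - xk1 i, g - ContinuousLinearMap.adjoint (As i) lamk
            + γ • ContinuousLinearMap.adjoint (As i)
                (As i (xk1 i) + ((∑ j ∈ Icc 1 (i - 1), As j (xk1 j))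
                  + (∑ j ∈ Icc (i + 1) (N - 1), As j (xk j)) + xNk - b))⟫) :
    -- general conclusion
    (∀ x ∈ X,
      (f x - ⟪lam, A x⟫ + γ / 2 * ‖A x + s‖ ^ 2)
        - (f xp - ⟪lam, A xp⟫ + γ / 2 * ‖A xp + s‖ ^ 2) ≥ γ / 2 * ‖A x - A xp‖ ^ 2)
    -- ADMM instance: decrease of the augmented Lagrangian in the i-th block update
    ∧ augL N p n fs fN As b γ (fun j => if j < i then xk1 j else xk j) xNk lamk
        - augL N p n fs fN As b γ (fun j => if j ≤ i then xk1 j else xk j) xNk lamk ≥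
        γ / 2 * ‖As i (xk i) - As i (xk1 i)‖ ^ 2 := by
  constructor
  · exact key_decrease f X A lam s γ xp hopt
  · set s2 : EuclideanSpace ℝ (Fin p) :=
      (∑ j ∈ Icc 1 (i - 1), As j (xk1 j))
        + (∑ j ∈ Icc (i + 1) (N - 1), As j (xk j)) + xNk - b with hs2
    have hkey := key_decrease (fs i) (Xs i) (As i) lamk s2 γ (xk1 i) hiopt (xk i) hkmem
    set x1 : (j : ℕ) → EuclideanSpace ℝ (Fin (n j)) :=
      fun j => if j < i then xk1 j else xk j with hx1
    set x2 : (j : ℕ) → EuclideanSpace ℝ (Fin (n j)) :=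
      fun j => if j ≤ i then xk1 j else xk j with hx2
    -- splitting facts
    have hf1 : ∑ j ∈ Icc 1 (N - 1), fs j (x1 j)
        = ((∑ j ∈ Icc 1 (i - 1), fs j (xk1 j)) + fs i (xk i))
          + ∑ j ∈ Icc (i + 1) (N - 1), fs j (xk j) := by
      rw [sum_split (fun j => fs j (x1 j)) hi1 hi2]
      congr 1
      · congr 1
        · refine Finset.sum_congr rfl fun j hj => ?_
          have := Finset.mem_Icc.mp hj
          simp only [hx1]
          rw [if_pos (by omega)]
        · simp only [hx1, lt_irrefl, if_neg (lt_irrefl i)]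
      · refine Finset.sum_congr rfl fun j hj => ?_
        have := Finset.mem_Icc.mp hj
        simp only [hx1]
        rw [if_neg (by omega)]
    have hf2 : ∑ j ∈ Icc 1 (N - 1), fs j (x2 j)
        = ((∑ j ∈ Icc 1 (i - 1), fs j (xk1 j)) + fs i (xk1 i))
          + ∑ j ∈ Icc (i + 1) (N - 1), fs j (xk j) := by
      rw [sum_split (fun j => fs j (x2 j)) hi1 hi2]
      congr 1
      · congr 1
        · refine Finset.sum_congr rfl fun j hj => ?_
          have := Finset.mem_Icc.mp hj
          simp only [hx2]
          rw [if_pos (by omega)]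
        · simp only [hx2, if_pos (le_refl i)]
      · refine Finset.sum_congr rfl fun j hj => ?_
        have := Finset.mem_Icc.mp hj
        simp only [hx2]
        rw [if_neg (by omega)]
    have hA1 : (∑ j ∈ Icc 1 (N - 1), As j (x1 j)) + xNk - b = As i (xk i) + s2 := by
      rw [sum_split (fun j => As j (x1 j)) hi1 hi2]
      have e1 : ∑ j ∈ Icc 1 (i - 1), As j (x1 j) = ∑ j ∈ Icc 1 (i - 1), As j (xk1 j) := by
        refine Finset.sum_congr rfl fun j hj => ?_
        have := Finset.mem_Icc.mp hj
        simp only [hx1]; rw [if_pos (by omega)]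
      have e2 : ∑ j ∈ Icc (i + 1) (N - 1), As j (x1 j)
          = ∑ j ∈ Icc (i + 1) (N - 1), As j (xk j) := by
        refine Finset.sum_congr rfl fun j hj => ?_
        have := Finset.mem_Icc.mp hj
        simp only [hx1]; rw [if_neg (by omega)]
      have e3 : As i (x1 i) = As i (xk i) := by
        simp only [hx1]; rw [if_neg (lt_irrefl i)]
      rw [e1, e2, e3, hs2]
      abel
    have hA2 : (∑ j ∈ Icc 1 (N - 1), As j (x2 j)) + xNk - b = As i (xk1 i) + s2 := by
      rw [sum_split (fun j => As j (x2 j)) hi1 hi2]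
      have e1 : ∑ j ∈ Icc 1 (i - 1), As j (x2 j) = ∑ j ∈ Icc 1 (i - 1), As j (xk1 j) := by
        refine Finset.sum_congr rfl fun j hj => ?_
        have := Finset.mem_Icc.mp hj
        simp only [hx2]; rw [if_pos (by omega)]
      have e2 : ∑ j ∈ Icc (i + 1) (N - 1), As j (x2 j)
          = ∑ j ∈ Icc (i + 1) (N - 1), As j (xk j) := by
        refine Finset.sum_congr rfl fun j hj => ?_
        have := Finset.mem_Icc.mp hj
        simp only [hx2]; rw [if_neg (by omega)]
      have e3 : As i (x2 i) = As i (xk1 i) := by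
        simp only [hx2]; rw [if_pos (le_refl i)]
      rw [e1, e2, e3, hs2]
      abel
    have hip1 : ⟪lamk, As i (xk i) + s2⟫ = ⟪lamk, As i (xk i)⟫ + ⟪lamk, s2⟫ :=
      inner_add_right _ _ _
    have hip2 : ⟪lamk, As i (xk1 i) + s2⟫ = ⟪lamk, As i (xk1 i)⟫ + ⟪lamk, s2⟫ :=
      inner_add_right _ _ _
    simp only [augL, hf1, hf2, hA1, hA2, hip1, hip2]
    linarith [hkey]
end

section
/- (Lemma A.1, part 2: sufficient decrease) Under the Scenario-2 setup, suppose f_1,…,f_{N-1} are convex, f_N is convex and differentiable with L-Lipschitz gradient, γ > √2·L, and one iteration of the multi-block ADMM is performed: each x_i^{k+1} ∈ X_i (i = 1,…,N−1) satisfies the first-order optimality condition of its block subproblem (there exists g_i ∈ ∂(f_i + 1_{X_i})(x_i^{k+1}) with g_i − A_iᵀλ^k + γA_iᵀ(Σ_{j=1}^{i} A_j x_j^{k+1} + Σ_{j=i+1}^{N-1} A_j x_j^k + x_N^k − b) = 0), x_N^{k+1} satisfies ∇f_N(x_N^{k+1}) − λ^k + γ(Σ_{j=1}^{N-1} A_j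 x_j^{k+1} + x_N^{k+1} − b) = 0, λ^{k+1} = λ^k − γ(Σ_{j=1}^{N-1} A_j x_j^{k+1} + x_N^{k+1} − b), and λ^k = ∇f_N(x_N^k). Then L_γ(x_1^k,…,x_N^k,λ^k) − L_γ(x_1^{k+1},…,x_N^{k+1},λ^{k+1}) ≥ ((γ² − 2L²)/(2γ(1 + L²))) · (Σ_{i=1}^{N-1} ‖A_i x_i^k − A_i x_i^{k+1}‖² + ‖x_N^k − x_N^{k+1}‖² + ‖λ^k − λ^{k+1}‖²). -/
open Finset
open scoped RealInnerProductSpace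

/-- `g` is a subgradient of `f + 1_X` (indicator of `X` added) at `x`. -/
def IsSubgradientOn {E : Type*} [NormedAddCommGroup E] [InnerProductSpace ℝ E]
    (X : Set E) (f : E → ℝ) (g x : E) : Prop :=
  x ∈ X ∧ ∀ y ∈ X, f x + ⟪g, y - x⟫ ≤ f y

lemma grad_ineq {E : Type*} [NormedAddCommGroup E] [InnerProductSpace ℝ E] [CompleteSpace E]
    {f : E → ℝ} (hf : ConvexOn ℝ Set.univ f) {g x : E}
    (hg : HasGradientAt f g x) (y : E) : f x + ⟪g, y - x⟫ ≤ f y := by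
  have hline : ConvexOn ℝ Set.univ (f ∘ (AffineMap.lineMap x y : ℝ →ᵃ[ℝ] E)) := by
    simpa using hf.comp_affineMap (AffineMap.lineMap x y : ℝ →ᵃ[ℝ] E)
  have hpath : HasDerivAt (fun t : ℝ => (AffineMap.lineMap x y : ℝ →ᵃ[ℝ] E) t) (y - x) 0 := by
    simp only [AffineMap.lineMap_apply_module]
    have h1 : HasDerivAt (fun t : ℝ => 1 - t) (-1) 0 := (hasDerivAt_id 0).const_sub 1
    have := (h1.smul_const x).add ((hasDerivAt_id 0).smul_const y)
    simpa [neg_smul, neg_add_eq_sub, Pi.add_def] using this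
  have hfx : HasFDerivAt f (InnerProductSpace.toDual ℝ E g)
      ((AffineMap.lineMap x y : ℝ →ᵃ[ℝ] E) 0) := by
    rw [AffineMap.lineMap_apply_zero]; exact hg.hasFDerivAt
  have hd : HasDerivAt (f ∘ (AffineMap.lineMap x y : ℝ →ᵃ[ℝ] E)) ⟪g, y - x⟫ 0 := by
    have := hfx.comp_hasDerivAt 0 hpath
    simpa [InnerProductSpace.toDual_apply_apply] using this
  have hs := hline.le_slope_of_hasDerivAt (Set.mem_univ (0:ℝ)) (Set.mem_univ (1:ℝ)) one_pos hd
  rw [slope_def_field] at hs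
  simp only [Function.comp_apply, AffineMap.lineMap_apply_zero, AffineMap.lineMap_apply_one] at hs
  have : ⟪g, y - x⟫ ≤ f y - f x := by simpa using hs
  linarith

lemma block_decrease {E F : Type*} [NormedAddCommGroup E] [InnerProductSpace ℝ E] [CompleteSpace E]
    [NormedAddCommGroup F] [InnerProductSpace ℝ F] [CompleteSpace F]
    {X : Set E} {f : E → ℝ} {g xnew : E} (xold : E)
    (hsub : IsSubgradientOn X f g xnew) (hmem : xold ∈ X)
    (A : E →L[ℝ] F) (γ : ℝ) (lam u : F)
    (hopt : g - ContinuousLinearMap.adjoint A lam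
      + γ • ContinuousLinearMap.adjoint A (u + A xnew) = 0) :
    (f xold - ⟪lam, u + A xold⟫ + γ/2 * ‖u + A xold‖^2)
      - (f xnew - ⟪lam, u + A xnew⟫ + γ/2 * ‖u + A xnew‖^2)
      ≥ γ/2 * ‖A xold - A xnew‖^2 := by
  have hsg := hsub.2 xold hmem
  have hg : g = ContinuousLinearMap.adjoint A lam
      - γ • ContinuousLinearMap.adjoint A (u + A xnew) := by
    have h0 : g - (ContinuousLinearMap.adjoint A lam
        - γ • ContinuousLinearMap.adjoint A (u + A xnew)) = 0 := by
      rw [← hopt]; abel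
    exact sub_eq_zero.mp h0
  have hginner : ⟪g, xold - xnew⟫ = ⟪lam, A xold - A xnew⟫
      - γ * ⟪u + A xnew, A xold - A xnew⟫ := by
    rw [hg, inner_sub_left, real_inner_smul_left,
      ContinuousLinearMap.adjoint_inner_left, ContinuousLinearMap.adjoint_inner_left, map_sub]
  have hnorm : ‖u + A xold‖^2 = ‖u + A xnew‖^2
      + 2 * ⟪u + A xnew, A xold - A xnew⟫ + ‖A xold - A xnew‖^2 := by
    have h : u + A xold = (u + A xnew) + (A xold - A xnew) := by abel
    rw [h, norm_add_sq_real]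
  have hinlam : ⟪lam, u + A xold⟫ = ⟪lam, u + A xnew⟫ + ⟪lam, A xold - A xnew⟫ := by
    rw [← inner_add_right]; congr 1; abel
  rw [hginner] at hsg
  rw [hnorm, hinlam]
  ring_nf
  ring_nf at hsg
  linarith

lemma blockN_decrease {F : Type*} [NormedAddCommGroup F] [InnerProductSpace ℝ F]
    {f : F → ℝ} {g xnew : F} (xold : F)
    (hsub : ∀ y, f xnew + ⟪g, y - xnew⟫ ≤ f y)
    (γ : ℝ) (lam u : F)
    (hopt : g - lam + γ • (u + xnew) = 0) :
    (f xold - ⟪lam, u + xold⟫ + γ/2 * ‖u + xold‖^2)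
      - (f xnew - ⟪lam, u + xnew⟫ + γ/2 * ‖u + xnew‖^2)
      ≥ γ/2 * ‖xold - xnew‖^2 := by
  have hsg := hsub xold
  have hg : g = lam - γ • (u + xnew) := by
    have h0 : g - (lam - γ • (u + xnew)) = 0 := by rw [← hopt]; abel
    exact sub_eq_zero.mp h0
  have hginner : ⟪g, xold - xnew⟫ = ⟪lam, xold - xnew⟫
      - γ * ⟪u + xnew, xold - xnew⟫ := by
    rw [hg, inner_sub_left, real_inner_smul_left]
  have hnorm : ‖u + xold‖^2 = ‖u + xnew‖^2
      + 2 * ⟪u + xnew, xold - xnew⟫ + ‖xold - xnew‖^2 := by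
    have h : u + xold = (u + xnew) + (xold - xnew) := by abel
    rw [h, norm_add_sq_real]
  have hinlam : ⟪lam, u + xold⟫ = ⟪lam, u + xnew⟫ + ⟪lam, xold - xnew⟫ := by
    rw [← inner_add_right]; congr 1; abel
  rw [hginner] at hsg
  rw [hnorm, hinlam]
  ring_nf
  ring_nf at hsg
  linarith

lemma arith_key (γ L a t R : ℝ) (hγpos : 0 < γ) (hγ2 : 2*L^2 < γ^2)
    (ha : 0 ≤ a) (ht : 0 ≤ t) (hR : 0 ≤ R) (hs : γ^2*R ≤ L^2*t) :
    (γ^2 - 2*L^2) / (2*γ*(1+L^2)) * (a + t + γ^2*R) ≤ γ/2*a + γ/2*t - γ*R := by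
  rw [div_mul_eq_mul_div, div_le_iff₀ (by positivity : (0:ℝ) < 2*γ*(1+L^2))]
  nlinarith [mul_nonneg (mul_nonneg (by positivity : (0:ℝ) ≤ γ^2+2) (sq_nonneg L)) ha,
    mul_nonneg (by positivity : (0:ℝ) ≤ γ^2+2) (by nlinarith : (0:ℝ) ≤ L^2*t - γ^2*R)]

set_option maxHeartbeats 1000000 in
theorem stmt_10 (N p : ℕ) (hN : 3 ≤ N) (n : ℕ → ℕ)
    (f : (i : ℕ) → EuclideanSpace ℝ (Fin (n i)) → ℝ)
    (hf : ∀ i, ConvexOn ℝ Set.univ (f i))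
    (X : (i : ℕ) → Set (EuclideanSpace ℝ (Fin (n i))))
    (hXc : ∀ i, Convex ℝ (X i)) (hXcl : ∀ i, IsClosed (X i))
    (fN : EuclideanSpace ℝ (Fin p) → ℝ) (hfN : ConvexOn ℝ Set.univ fN)
    (gradfN : EuclideanSpace ℝ (Fin p) → EuclideanSpace ℝ (Fin p))
    (hgrad : ∀ x, HasGradientAt fN (gradfN x) x)
    (L : ℝ) (hL0 : 0 ≤ L) (hLip : ∀ x y, ‖gradfN x - gradfN y‖ ≤ L * ‖x - y‖)
    (A : (i : ℕ) → EuclideanSpace ℝ (Fin (n i)) →L[ℝ] EuclideanSpace ℝ (Fin p))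
    (b : EuclideanSpace ℝ (Fin p))
    (γ : ℝ) (hγ : γ > Real.sqrt 2 * L)
    (xk xk1 : (i : ℕ) → EuclideanSpace ℝ (Fin (n i)))
    (xNk xNk1 lamk lamk1 : EuclideanSpace ℝ (Fin p))
    (hkmem : ∀ i ∈ Icc 1 (N - 1), xk i ∈ X i)
    -- first-order optimality conditions of blocks 1,…,N−1
    (hopt : ∀ i ∈ Icc 1 (N - 1), ∃ g, IsSubgradientOn (X i) (f i) g (xk1 i) ∧
      g - ContinuousLinearMap.adjoint (A i) lamk
        + γ • ContinuousLinearMap.adjoint (A i)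
            ((∑ j ∈ Icc 1 i, A j (xk1 j)) + (∑ j ∈ Icc (i + 1) (N - 1), A j (xk j))
              + xNk - b) = 0)
    -- first-order optimality condition of block N
    (hoptN : gradfN xNk1 - lamk
        + γ • ((∑ j ∈ Icc 1 (N - 1), A j (xk1 j)) + xNk1 - b) = 0)
    -- multiplier update
    (hlam : lamk1 = lamk - γ • ((∑ j ∈ Icc 1 (N - 1), A j (xk1 j)) + xNk1 - b))
    (hlamk : lamk = gradfN xNk) :
    augL N p n f fN A b γ xk xNk lamk - augL N p n f fN A b γ xk1 xNk1 lamk1 ≥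
      (γ ^ 2 - 2 * L ^ 2) / (2 * γ * (1 + L ^ 2)) *
        ((∑ i ∈ Icc 1 (N - 1), ‖A i (xk i) - A i (xk1 i)‖ ^ 2)
          + ‖xNk - xNk1‖ ^ 2 + ‖lamk - lamk1‖ ^ 2) := by
  have hγpos : 0 < γ := lt_of_le_of_lt (mul_nonneg (Real.sqrt_nonneg 2) hL0) hγ
  have hsq2 : Real.sqrt 2 ^ 2 = 2 := Real.sq_sqrt (by norm_num)
  have hγ2 : 2 * L ^ 2 < γ ^ 2 := by
    nlinarith [hγ, mul_nonneg (Real.sqrt_nonneg 2) hL0, hsq2]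
  have hIoc1 : ∀ k : ℕ, Finset.Icc 1 k = Finset.Ioc 0 k := fun k => Finset.Icc_add_one_left_eq_Ioc 0 k
  have hIocS : ∀ a k : ℕ, Finset.Icc (a + 1) k = Finset.Ioc a k := fun a k => Finset.Icc_add_one_left_eq_Ioc a k
  simp only [augL]
  simp only [hIoc1, hIocS] at hopt hoptN hlam hkmem ⊢
  set M := N - 1 with hM
  -- the potential function along the sweep
  set φ : ℕ → ℝ := fun m =>
    ((∑ j ∈ Finset.Ioc 0 m, f j (xk1 j)) + (∑ j ∈ Finset.Ioc m M, f j (xk j))) + fN xNk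
      - ⟪lamk, (∑ j ∈ Finset.Ioc 0 m, A j (xk1 j)) + (∑ j ∈ Finset.Ioc m M, A j (xk j)) + xNk - b⟫
      + γ/2 * ‖(∑ j ∈ Finset.Ioc 0 m, A j (xk1 j)) + (∑ j ∈ Finset.Ioc m M, A j (xk j)) + xNk - b‖^2
    with hφ
  have hstep : ∀ m, m + 1 ≤ M →
      φ m - φ (m+1) ≥ γ/2 * ‖A (m+1) (xk (m+1)) - A (m+1) (xk1 (m+1))‖^2 := by
    intro m hm
    obtain ⟨g, hsub, hgopt⟩ := hopt (m+1) (Finset.mem_Ioc.mpr ⟨Nat.succ_pos m, hm⟩)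
    have hmem := hkmem (m+1) (Finset.mem_Ioc.mpr ⟨Nat.succ_pos m, hm⟩)
    have hA1 : ∑ j ∈ Finset.Ioc 0 (m+1), A j (xk1 j)
        = (∑ j ∈ Finset.Ioc 0 m, A j (xk1 j)) + A (m+1) (xk1 (m+1)) := by
      rw [← Finset.sum_Ioc_consecutive _ (Nat.zero_le m) (Nat.le_succ m),
        Nat.Ioc_succ_singleton, Finset.sum_singleton]
    have hA0 : ∑ j ∈ Finset.Ioc m M, A j (xk j)
        = A (m+1) (xk (m+1)) + ∑ j ∈ Finset.Ioc (m+1) M, A j (xk j) := by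
      rw [← Finset.sum_Ioc_consecutive _ (Nat.le_succ m) hm,
        Nat.Ioc_succ_singleton, Finset.sum_singleton]
    have hf1 : ∑ j ∈ Finset.Ioc 0 (m+1), f j (xk1 j)
        = (∑ j ∈ Finset.Ioc 0 m, f j (xk1 j)) + f (m+1) (xk1 (m+1)) := by
      rw [← Finset.sum_Ioc_consecutive _ (Nat.zero_le m) (Nat.le_succ m),
        Nat.Ioc_succ_singleton, Finset.sum_singleton]
    have hf0 : ∑ j ∈ Finset.Ioc m M, f j (xk j)
        = f (m+1) (xk (m+1)) + ∑ j ∈ Finset.Ioc (m+1) M, f j (xk j) := by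
      rw [← Finset.sum_Ioc_consecutive _ (Nat.le_succ m) hm,
        Nat.Ioc_succ_singleton, Finset.sum_singleton]
    set u : EuclideanSpace ℝ (Fin p) :=
      (∑ j ∈ Finset.Ioc 0 m, A j (xk1 j)) + (∑ j ∈ Finset.Ioc (m+1) M, A j (xk j)) + xNk - b
      with hu
    have hoptu : g - ContinuousLinearMap.adjoint (A (m+1)) lamk
        + γ • ContinuousLinearMap.adjoint (A (m+1)) (u + A (m+1) (xk1 (m+1))) = 0 := by
      have he : u + A (m+1) (xk1 (m+1))
          = (∑ j ∈ Finset.Ioc 0 (m+1), A j (xk1 j))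
            + (∑ j ∈ Finset.Ioc (m+1) M, A j (xk j)) + xNk - b := by
        rw [hu, hA1]; abel
      rw [he]; exact hgopt
    have hB := block_decrease (xk (m+1)) hsub hmem (A (m+1)) γ lamk u hoptu
    have e1 : (∑ j ∈ Finset.Ioc 0 m, A j (xk1 j)) + (∑ j ∈ Finset.Ioc m M, A j (xk j)) + xNk - b
        = u + A (m+1) (xk (m+1)) := by rw [hA0, hu]; abel
    have e2 : (∑ j ∈ Finset.Ioc 0 (m+1), A j (xk1 j))
          + (∑ j ∈ Finset.Ioc (m+1) M, A j (xk j)) + xNk - b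
        = u + A (m+1) (xk1 (m+1)) := by rw [hA1, hu]; abel
    simp only [hφ]
    rw [hf0, hf1, e1, e2]
    linarith [hB]
  have htel : ∀ m, m ≤ M →
      φ 0 - φ m ≥ γ/2 * ∑ i ∈ Finset.Ioc 0 m, ‖A i (xk i) - A i (xk1 i)‖^2 := by
    intro m
    induction m with
    | zero => intro _; simp
    | succ m ih =>
      intro hm
      have h1 := ih (by omega)
      have h2 := hstep m hm
      have hs : ∑ i ∈ Finset.Ioc 0 (m+1), ‖A i (xk i) - A i (xk1 i)‖^2
          = (∑ i ∈ Finset.Ioc 0 m, ‖A i (xk i) - A i (xk1 i)‖^2)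
            + ‖A (m+1) (xk (m+1)) - A (m+1) (xk1 (m+1))‖^2 := by
        rw [← Finset.sum_Ioc_consecutive _ (Nat.zero_le m) (Nat.le_succ m),
          Nat.Ioc_succ_singleton, Finset.sum_singleton]
      rw [hs, mul_add]
      linarith [h1, h2]
  have hfin := htel M le_rfl
  set w : EuclideanSpace ℝ (Fin p) := ∑ j ∈ Finset.Ioc 0 M, A j (xk1 j) with hw
  set r : EuclideanSpace ℝ (Fin p) := w + xNk1 - b with hr
  have hφ0 : φ 0 = (∑ j ∈ Finset.Ioc 0 M, f j (xk j)) + fN xNk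
      - ⟪lamk, (∑ j ∈ Finset.Ioc 0 M, A j (xk j)) + xNk - b⟫
      + γ/2 * ‖(∑ j ∈ Finset.Ioc 0 M, A j (xk j)) + xNk - b‖^2 := by
    simp [hφ]
  have hφM : φ M = (∑ j ∈ Finset.Ioc 0 M, f j (xk1 j)) + fN xNk
      - ⟪lamk, w + xNk - b⟫ + γ/2 * ‖w + xNk - b‖^2 := by
    simp [hφ, hw]
  -- block N decrease
  have hsubN : ∀ y, fN xNk1 + ⟪gradfN xNk1, y - xNk1⟫ ≤ fN y :=
    fun y => grad_ineq hfN (hgrad xNk1) y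
  have hoptNu : gradfN xNk1 - lamk + γ • ((w - b) + xNk1) = 0 := by
    have he : (w - b) + xNk1 = r := by rw [hr]; abel
    rw [he]; exact hoptN
  have hBN := blockN_decrease xNk hsubN γ lamk (w - b) hoptNu
  have ew0 : (w - b) + xNk = w + xNk - b := by abel
  have ew1 : (w - b) + xNk1 = r := by rw [hr]; abel
  rw [ew0, ew1] at hBN
  -- multiplier step
  have hld : lamk - lamk1 = γ • r := by rw [hlam]; abel
  have hinlr : ⟪lamk, r⟫ - ⟪lamk1, r⟫ = γ * ‖r‖^2 := by
    rw [← inner_sub_left, hld, real_inner_smul_left, real_inner_self_eq_norm_sq]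
  have hlamnorm : ‖lamk - lamk1‖^2 = γ^2 * ‖r‖^2 := by
    rw [hld, norm_smul, mul_pow, Real.norm_eq_abs, sq_abs]
  have hlam1 : lamk1 = gradfN xNk1 := by
    have h0 : gradfN xNk1 - (lamk - γ • r) = 0 := by rw [← hoptN]; abel
    rw [hlam]; exact (sub_eq_zero.mp h0).symm
  have hlipn : ‖lamk - lamk1‖ ≤ L * ‖xNk - xNk1‖ := by
    rw [hlamk, hlam1]; exact hLip xNk xNk1
  have hs2 : ‖lamk - lamk1‖^2 ≤ L^2 * ‖xNk - xNk1‖^2 := by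
    nlinarith [norm_nonneg (lamk - lamk1), norm_nonneg (xNk - xNk1), hlipn, hL0,
      mul_nonneg hL0 (norm_nonneg (xNk - xNk1))]
  -- final arithmetic
  have ha0 : 0 ≤ ∑ i ∈ Finset.Ioc 0 M, ‖A i (xk i) - A i (xk1 i)‖^2 :=
    Finset.sum_nonneg fun i _ => sq_nonneg _
  have ht0 : 0 ≤ ‖xNk - xNk1‖^2 := sq_nonneg _
  have hR0 : 0 ≤ ‖r‖^2 := sq_nonneg _
  have hpos : (0:ℝ) < 2 * γ * (1 + L^2) := by positivity
  have hkey : (γ^2 - 2*L^2) / (2*γ*(1+L^2)) *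
        ((∑ i ∈ Finset.Ioc 0 M, ‖A i (xk i) - A i (xk1 i)‖^2)
          + ‖xNk - xNk1‖^2 + ‖lamk - lamk1‖^2)
      ≤ γ/2 * (∑ i ∈ Finset.Ioc 0 M, ‖A i (xk i) - A i (xk1 i)‖^2)
          + γ/2 * ‖xNk - xNk1‖^2 - γ * ‖r‖^2 := by
    rw [hlamnorm]
    exact arith_key γ L _ _ _ hγpos hγ2 ha0 ht0 hR0 (by linarith [hs2, hlamnorm])
  linarith [hfin, hφ0, hφM, hBN, hinlr, hkey]
end

section
/- (Lemma A.1, part 3: lower bound of the augmented Lagrangian) Under the Scenario-2 setup, suppose f_N is differentiable with L-Lipschitz gradient and λ^{k+1} = ∇f_N(x_N^{k+1}). Then L_γ(x_1^{k+1},…,x_N^{k+1},λ^{k+1}) ≥ Σ_{i=1}^{N-1} f_i(x_i^{k+1}) + f_N(b − Σ_{i=1}^{N-1} A_i x_i^{k+1}) + ((γ − L)/2)·‖Σ_{i=1}^{N-1} A_i x_i^{k+1} + x_N^{k+1} − b‖². -/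
open Finset
open scoped RealInnerProductSpace

private lemma descent_lemma {E : Type*} [NormedAddCommGroup E] [InnerProductSpace ℝ E]
    [CompleteSpace E] (f : E → ℝ) (g : E → E) (hg : ∀ x, HasGradientAt f (g x) x)
    (L : ℝ) (hLip : ∀ x y, ‖g x - g y‖ ≤ L * ‖x - y‖) (x y : E) :
    f y ≤ f x + ⟪g x, y - x⟫ + L / 2 * ‖y - x‖ ^ 2 := by
  set v := y - x with hv
  have hgcont : Continuous g := by
    have : LipschitzWith L.toNNReal g := by
      apply LipschitzWith.of_dist_le_mul
      intro a b
      rw [dist_eq_norm, dist_eq_norm]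
      exact (hLip a b).trans
        (mul_le_mul_of_nonneg_right (Real.le_coe_toNNReal L) (norm_nonneg _))
    exact this.continuous
  have hderiv : ∀ t : ℝ, HasDerivAt (fun t : ℝ => f (x + t • v)) ⟪g (x + t • v), v⟫ t := by
    intro t
    have h1 : HasDerivAt (fun t : ℝ => x + t • v) v t := by
      simpa using ((hasDerivAt_id t).smul_const v).const_add x
    have h2 := (hg (x + t • v)).hasFDerivAt.comp_hasDerivAt t h1
    simpa [InnerProductSpace.toDual_apply_apply, Function.comp_def] using h2
  have hcont : Continuous fun t : ℝ => ⟪g (x + t • v), v⟫ :=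
    (Continuous.inner (hgcont.comp (by continuity)) continuous_const)
  have hint : f (x + (1:ℝ) • v) - f (x + (0:ℝ) • v)
      = ∫ t in (0:ℝ)..1, ⟪g (x + t • v), v⟫ :=
    (intervalIntegral.integral_eq_sub_of_hasDerivAt
      (fun t _ => hderiv t) (hcont.intervalIntegrable 0 1)).symm
  have hbound : ∀ t ∈ Set.Icc (0:ℝ) 1,
      ⟪g (x + t • v), v⟫ ≤ ⟪g x, v⟫ + L * t * ‖v‖ ^ 2 := by
    intro t ht
    have h1 : ⟪g (x + t • v) - g x, v⟫ ≤ ‖g (x + t • v) - g x‖ * ‖v‖ :=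
      real_inner_le_norm _ _
    have h2 : ‖g (x + t • v) - g x‖ ≤ L * (t * ‖v‖) := by
      have := hLip (x + t • v) x
      simpa [norm_smul, abs_of_nonneg ht.1, mul_assoc] using this
    have h3 : ‖g (x + t • v) - g x‖ * ‖v‖ ≤ L * (t * ‖v‖) * ‖v‖ :=
      mul_le_mul_of_nonneg_right h2 (norm_nonneg _)
    have h4 : ⟪g (x + t • v), v⟫ = ⟪g x, v⟫ + ⟪g (x + t • v) - g x, v⟫ := by
      rw [inner_sub_left]; ring
    nlinarith [h1, h3]
  have hle : (∫ t in (0:ℝ)..1, ⟪g (x + t • v), v⟫)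
      ≤ ∫ t in (0:ℝ)..1, (⟪g x, v⟫ + L * t * ‖v‖ ^ 2) := by
    apply intervalIntegral.integral_mono_on (by norm_num)
      (hcont.intervalIntegrable 0 1)
      ((by continuity : Continuous fun t : ℝ => ⟪g x, v⟫ + L * t * ‖v‖^2).intervalIntegrable 0 1)
    exact hbound
  have hrhs : (∫ t in (0:ℝ)..1, (⟪g x, v⟫ + L * t * ‖v‖ ^ 2))
      = ⟪g x, v⟫ + L / 2 * ‖v‖ ^ 2 := by
    have heq : (fun t : ℝ => ⟪g x, v⟫ + L * t * ‖v‖ ^ 2)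
        = fun t : ℝ => ⟪g x, v⟫ + (L * ‖v‖ ^ 2) * t := by
      funext t; ring
    rw [heq, intervalIntegral.integral_add intervalIntegrable_const
      ((intervalIntegral.intervalIntegrable_id).const_mul _),
      intervalIntegral.integral_const_mul, integral_id]
    simp; ring
  have hxy : x + (1:ℝ) • v = y := by simp [hv]
  have hx0 : x + (0:ℝ) • v = x := by simp
  rw [hxy, hx0] at hint
  linarith [hint ▸ (hle.trans_eq hrhs), hint]

theorem stmt_11 (N p : ℕ) (hN : 3 ≤ N) (n : ℕ → ℕ)
    (f : (i : ℕ) → EuclideanSpace ℝ (Fin (n i)) → ℝ)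
    (fN : EuclideanSpace ℝ (Fin p) → ℝ)
    (gradfN : EuclideanSpace ℝ (Fin p) → EuclideanSpace ℝ (Fin p))
    (hgrad : ∀ x, HasGradientAt fN (gradfN x) x)
    (L : ℝ) (hLip : ∀ x y, ‖gradfN x - gradfN y‖ ≤ L * ‖x - y‖)
    (A : (i : ℕ) → EuclideanSpace ℝ (Fin (n i)) →L[ℝ] EuclideanSpace ℝ (Fin p))
    (b : EuclideanSpace ℝ (Fin p)) (γ : ℝ) (hγ : 0 < γ)
    (xk1 : (i : ℕ) → EuclideanSpace ℝ (Fin (n i)))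
    (xNk1 lamk1 : EuclideanSpace ℝ (Fin p))
    (hlam : lamk1 = gradfN xNk1) :
    augL N p n f fN A b γ xk1 xNk1 lamk1 ≥
      (∑ i ∈ Icc 1 (N - 1), f i (xk1 i))
        + fN (b - ∑ i ∈ Icc 1 (N - 1), A i (xk1 i))
        + (γ - L) / 2 * ‖(∑ i ∈ Icc 1 (N - 1), A i (xk1 i)) + xNk1 - b‖ ^ 2 := by
  set s := ∑ i ∈ Icc 1 (N - 1), A i (xk1 i) with hs
  set r := s + xNk1 - b with hr
  have hdesc := descent_lemma fN gradfN hgrad L hLip xNk1 (b - s)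
  have hsub : b - s - xNk1 = -r := by rw [hr]; abel
  rw [hsub] at hdesc
  have hnorm : ‖(-r : EuclideanSpace ℝ (Fin p))‖ = ‖r‖ := norm_neg r
  have hinner : ⟪gradfN xNk1, (-r : EuclideanSpace ℝ (Fin p))⟫ = -⟪gradfN xNk1, r⟫ :=
    inner_neg_right _ _
  rw [hnorm, hinner] at hdesc
  unfold augL
  rw [hlam]
  linarith
end

section
/- (Lemma A.1, part 4: subgradient bound) Under the Scenario-2 setup, fix k ≥ 0, iterates x_i^k, x_i^{k+1} and multipliers λ^k, λ^{k+1} with λ^{k+1} = λ^k − γ(Σ_{i=1}^{N-1} A_i x_i^{k+1} + x_N^{k+1} − b). Define r^{k+1} = Σ_{i=1}^{N-1} A_i x_i^{k+1} + x_N^{k+1} − b, and for i = 1,…,N−1 define R_i^{k+1} = γ A_iᵀ r^{k+1} − γ A_iᵀ(Σ_{j=i+1}^{N-1} A_j(x_j^k − x_j^{k+1}) + (x_N^k − x_N^{k+1})), R_N^{k+1} = γ r^{k+1}, R_λ^{k+1} = −r^{k+1}. Then Σ_{i=1}^{N} ‖R_i^{k+1}‖ + ‖R_λ^{k+1}‖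 ≤ M·(Σ_{i=1}^{N-1} ‖A_i x_i^k − A_i x_i^{k+1}‖ + ‖x_N^k − x_N^{k+1}‖ + ‖λ^k − λ^{k+1}‖), where M = max( γ Σ_{i=1}^{N-1} ‖A_iᵀ‖, 1/γ + 1 + Σ_{i=1}^{N-1} ‖A_iᵀ‖ ) and ‖A_iᵀ‖ denotes the operator norm. -/
open Finset

set_option maxHeartbeats 1000000 in
theorem stmt_14 (N p : ℕ) (hN : 3 ≤ N) (n : ℕ → ℕ)
    (A : (i : ℕ) → EuclideanSpace ℝ (Fin (n i)) →L[ℝ] EuclideanSpace ℝ (Fin p))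
    (b : EuclideanSpace ℝ (Fin p)) (γ : ℝ) (hγ : 0 < γ)
    (xk xk1 : (i : ℕ) → EuclideanSpace ℝ (Fin (n i)))
    (xNk xNk1 lamk lamk1 : EuclideanSpace ℝ (Fin p))
    (r1 : EuclideanSpace ℝ (Fin p))
    (hr : r1 = (∑ i ∈ Icc 1 (N - 1), A i (xk1 i)) + xNk1 - b)
    (hlam : lamk1 = lamk - γ • r1)
    (M : ℝ)
    (hM : M = max (γ * ∑ i ∈ Icc 1 (N - 1), ‖ContinuousLinearMap.adjoint (A i)‖)
        (1 / γ + 1 + ∑ i ∈ Icc 1 (N - 1), ‖ContinuousLinearMap.adjoint (A i)‖)) :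
    (∑ i ∈ Icc 1 (N - 1),
        ‖γ • ContinuousLinearMap.adjoint (A i) r1
          - γ • ContinuousLinearMap.adjoint (A i)
              ((∑ j ∈ Icc (i + 1) (N - 1), A j (xk j - xk1 j)) + (xNk - xNk1))‖)
      + ‖γ • r1‖ + ‖-r1‖ ≤
      M * ((∑ i ∈ Icc 1 (N - 1), ‖A i (xk i) - A i (xk1 i)‖)
        + ‖xNk - xNk1‖ + ‖lamk - lamk1‖) := by
  have hlam' : lamk - lamk1 = γ • r1 := by rw [hlam]; abel
  have hnlam : ‖lamk - lamk1‖ = γ * ‖r1‖ := by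
    rw [hlam', norm_smul, Real.norm_eq_abs, abs_of_pos hγ]
  set T := ∑ i ∈ Icc 1 (N - 1), ‖ContinuousLinearMap.adjoint (A i)‖ with hT
  set D := (∑ i ∈ Icc 1 (N - 1), ‖A i (xk i) - A i (xk1 i)‖) + ‖xNk - xNk1‖ with hD
  have hD0 : 0 ≤ D := add_nonneg (Finset.sum_nonneg fun i _ => norm_nonneg _) (norm_nonneg _)
  have hT0 : 0 ≤ T := Finset.sum_nonneg fun i _ => norm_nonneg _
  have hr0 : 0 ≤ ‖r1‖ := norm_nonneg _
  have key : ∀ i ∈ Icc 1 (N - 1),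
      ‖γ • ContinuousLinearMap.adjoint (A i) r1
          - γ • ContinuousLinearMap.adjoint (A i)
              ((∑ j ∈ Icc (i + 1) (N - 1), A j (xk j - xk1 j)) + (xNk - xNk1))‖
        ≤ γ * ‖ContinuousLinearMap.adjoint (A i)‖ * (‖r1‖ + D) := by
    intro i hi
    set S := (∑ j ∈ Icc (i + 1) (N - 1), A j (xk j - xk1 j)) + (xNk - xNk1) with hS
    have hSle : ‖S‖ ≤ D := by
      calc ‖S‖ ≤ ‖∑ j ∈ Icc (i + 1) (N - 1), A j (xk j - xk1 j)‖ + ‖xNk - xNk1‖ :=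
            norm_add_le _ _
        _ ≤ (∑ j ∈ Icc (i + 1) (N - 1), ‖A j (xk j - xk1 j)‖) + ‖xNk - xNk1‖ := by
            exact add_le_add_left (norm_sum_le _ _) _
        _ ≤ (∑ j ∈ Icc 1 (N - 1), ‖A j (xk j - xk1 j)‖) + ‖xNk - xNk1‖ := by
            refine add_le_add_left (Finset.sum_le_sum_of_subset_of_nonneg
              (Finset.Icc_subset_Icc_left ?_) fun j _ _ => norm_nonneg _) _
            simp only [Finset.mem_Icc] at hi; omega
        _ = D := by
            rw [hD]
            congr 1
            exact Finset.sum_congr rfl fun j _ => by rw [map_sub]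
    calc ‖γ • ContinuousLinearMap.adjoint (A i) r1
            - γ • ContinuousLinearMap.adjoint (A i) S‖
        = ‖γ • ContinuousLinearMap.adjoint (A i) (r1 - S)‖ := by
          rw [map_sub, smul_sub]
      _ = γ * ‖ContinuousLinearMap.adjoint (A i) (r1 - S)‖ := by
          rw [norm_smul, Real.norm_eq_abs, abs_of_pos hγ]
      _ ≤ γ * (‖ContinuousLinearMap.adjoint (A i)‖ * ‖r1 - S‖) := by
          gcongr
          exact ContinuousLinearMap.le_opNorm _ _
      _ ≤ γ * (‖ContinuousLinearMap.adjoint (A i)‖ * (‖r1‖ + D)) := by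
          gcongr
          calc ‖r1 - S‖ ≤ ‖r1‖ + ‖S‖ := norm_sub_le _ _
            _ ≤ ‖r1‖ + D := by linarith
      _ = γ * ‖ContinuousLinearMap.adjoint (A i)‖ * (‖r1‖ + D) := by ring
  have hsum : (∑ i ∈ Icc 1 (N - 1),
      ‖γ • ContinuousLinearMap.adjoint (A i) r1
          - γ • ContinuousLinearMap.adjoint (A i)
              ((∑ j ∈ Icc (i + 1) (N - 1), A j (xk j - xk1 j)) + (xNk - xNk1))‖)
      ≤ γ * T * (‖r1‖ + D) := by
    calc _ ≤ ∑ i ∈ Icc 1 (N - 1),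
          γ * ‖ContinuousLinearMap.adjoint (A i)‖ * (‖r1‖ + D) :=
        Finset.sum_le_sum key
      _ = γ * T * (‖r1‖ + D) := by
        rw [hT, Finset.mul_sum, Finset.sum_mul]
  have hγM : γ * T ≤ M := by rw [hM]; exact le_max_left _ _
  have hM2 : 1 / γ + 1 + T ≤ M := by rw [hM]; exact le_max_right _ _
  have hM2' : 1 + γ + γ * T ≤ γ * M := by
    have := mul_le_mul_of_nonneg_left hM2 hγ.le
    have hγγ : γ * (1 / γ) = 1 := by field_simp
    nlinarith
  have hγr : ‖γ • r1‖ = γ * ‖r1‖ := by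
    rw [norm_smul, Real.norm_eq_abs, abs_of_pos hγ]
  rw [hγr, norm_neg, hnlam]
  have hrhs : M * ((∑ i ∈ Icc 1 (N - 1), ‖A i (xk i) - A i (xk1 i)‖)
      + ‖xNk - xNk1‖ + γ * ‖r1‖) = M * D + M * (γ * ‖r1‖) := by
    rw [hD]; ring
  rw [hrhs]
  nlinarith [mul_le_mul_of_nonneg_right hγM hD0,
    mul_le_mul_of_nonneg_right hM2' hr0]
end

section
/- (Scenario-2 cross-term bound) Let N ≥ 3, A_j ∈ ℝ^{p×n_j} for j = 1,…,N−1, b ∈ ℝ^p, γ > 0, vectors x_j, x_j^k, x_j^{k+1} ∈ ℝ^{n_j} (j ≤ N−1), x_N, x_N^k, x_N^{k+1} ∈ ℝ^{n_N}, and λ^k, λ^{k+1} ∈ ℝ^p with λ^{k+1} = λ^k − γ(Σ_{j=1}^{N-1} A_j x_j^{k+1} + x_N^{k+1} − b). Then γ ⟨A_1 x_1 − A_1 x_1^{k+1}, Σ_{j=2}^{N-1} A_j(x_j^k − x_j^{k+1}) + (x_N^k − x_N^{k+1})⟩ + γ Σ_{i=2}^{N-1} ⟨A_i x_i − A_i x_i^{k+1},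 Σ_{j=i+1}^{N-1} A_j(x_j^k − x_j^{k+1}) + (x_N^k − x_N^{k+1})⟩ ≤ (γ/2)(‖A_1 x_1 + Σ_{i=2}^{N-1} A_i x_i^k + x_N^k − b‖² − ‖A_1 x_1 + Σ_{i=2}^{N-1} A_i x_i^{k+1} + x_N^{k+1} − b‖²) + (1/(2γ))‖λ^{k+1} − λ^k‖² + γ (Σ_{i=2}^{N-1} ‖A_i x_i − A_i x_i^{k+1}‖)·(Σ_{i=1}^{N-1} ‖A_i x_i^k − A_i x_i^{k+1}‖ + ‖x_N^k − x_N^{k+1}‖). -/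
open Finset
open scoped RealInnerProductSpace

theorem stmt_16 (N p : ℕ) (hN : 3 ≤ N) (n : ℕ → ℕ)
    (A : (j : ℕ) → EuclideanSpace ℝ (Fin (n j)) →L[ℝ] EuclideanSpace ℝ (Fin p))
    (b : EuclideanSpace ℝ (Fin p)) (γ : ℝ) (hγ : 0 < γ)
    (x xk xk1 : (j : ℕ) → EuclideanSpace ℝ (Fin (n j)))
    (xN xNk xNk1 : EuclideanSpace ℝ (Fin p))
    (lamk lamk1 : EuclideanSpace ℝ (Fin p))
    (hlam : lamk1 = lamk - γ • ((∑ j ∈ Icc 1 (N - 1), A j (xk1 j)) + xNk1 - b)) :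
    γ * ⟪A 1 (x 1) - A 1 (xk1 1),
          (∑ j ∈ Icc 2 (N - 1), A j (xk j - xk1 j)) + (xNk - xNk1)⟫
      + γ * ∑ i ∈ Icc 2 (N - 1),
          ⟪A i (x i) - A i (xk1 i),
            (∑ j ∈ Icc (i + 1) (N - 1), A j (xk j - xk1 j)) + (xNk - xNk1)⟫ ≤
      γ / 2 * (‖A 1 (x 1) + (∑ i ∈ Icc 2 (N - 1), A i (xk i)) + xNk - b‖ ^ 2
          - ‖A 1 (x 1) + (∑ i ∈ Icc 2 (N - 1), A i (xk1 i)) + xNk1 - b‖ ^ 2)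
        + 1 / (2 * γ) * ‖lamk1 - lamk‖ ^ 2
        + γ * (∑ i ∈ Icc 2 (N - 1), ‖A i (x i) - A i (xk1 i)‖) *
            ((∑ i ∈ Icc 1 (N - 1), ‖A i (xk i) - A i (xk1 i)‖) + ‖xNk - xNk1‖) := by
  set v1 := A 1 (x 1) - A 1 (xk1 1) with hv1
  set w := A 1 (x 1) + (∑ i ∈ Icc 2 (N - 1), A i (xk i)) + xNk - b with hw
  set w' := A 1 (x 1) + (∑ i ∈ Icc 2 (N - 1), A i (xk1 i)) + xNk1 - b with hw'
  have h1N : 1 ≤ N - 1 := by omega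
  -- rewrite the first inner product argument
  have hdiff : (∑ j ∈ Icc 2 (N - 1), A j (xk j - xk1 j)) + (xNk - xNk1) = w - w' := by
    simp only [map_sub, Finset.sum_sub_distrib, hw, hw']
    abel
  -- split the sum from 1
  have hsplit : (∑ j ∈ Icc 1 (N - 1), A j (xk1 j))
      = A 1 (xk1 1) + ∑ j ∈ Icc 2 (N - 1), A j (xk1 j) := by
    rw [Finset.Icc_eq_cons_Ioc h1N, Finset.sum_cons, ← Finset.Icc_add_one_left_eq_Ioc]; rfl
  have hlam2 : lamk1 - lamk = -(γ • (w' - v1)) := by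
    rw [hlam]
    have : (∑ j ∈ Icc 1 (N - 1), A j (xk1 j)) + xNk1 - b = w' - v1 := by
      rw [hsplit, hw', hv1]; abel
    rw [this]; abel
  have hnorm : ‖lamk1 - lamk‖ ^ 2 = γ ^ 2 * ‖w' - v1‖ ^ 2 := by
    rw [hlam2, norm_neg, norm_smul, Real.norm_eq_abs, abs_of_pos hγ, mul_pow]
  -- key inequality 1
  have key1 : γ * ⟪v1, w - w'⟫ ≤ γ / 2 * (‖w‖ ^ 2 - ‖w'‖ ^ 2)
      + 1 / (2 * γ) * ‖lamk1 - lamk‖ ^ 2 := by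
    have hc : 1 / (2 * γ) * ‖lamk1 - lamk‖ ^ 2 = γ / 2 * ‖w' - v1‖ ^ 2 := by
      rw [hnorm]; field_simp
    rw [hc]
    have e1 : ‖w - v1‖ ^ 2 = ‖w‖ ^ 2 - 2 * ⟪w, v1⟫ + ‖v1‖ ^ 2 := norm_sub_sq_real w v1
    have e2 : ‖w' - v1‖ ^ 2 = ‖w'‖ ^ 2 - 2 * ⟪w', v1⟫ + ‖v1‖ ^ 2 := norm_sub_sq_real w' v1
    have e3 : ⟪v1, w - w'⟫ = ⟪v1, w⟫ - ⟪v1, w'⟫ := inner_sub_right v1 w w'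
    have e4 : ⟪v1, w⟫ = ⟪w, v1⟫ := real_inner_comm _ _
    have e5 : ⟪v1, w'⟫ = ⟪w', v1⟫ := real_inner_comm _ _
    nlinarith [sq_nonneg ‖w - v1‖, hγ.le, mul_nonneg hγ.le (sq_nonneg ‖w - v1‖)]
  -- key inequality 2
  set B := (∑ i ∈ Icc 1 (N - 1), ‖A i (xk i) - A i (xk1 i)‖) + ‖xNk - xNk1‖ with hB
  have hBeq : B = (∑ i ∈ Icc 1 (N - 1), ‖A i (xk i - xk1 i)‖) + ‖xNk - xNk1‖ := by
    simp only [map_sub, hB]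
  have key2 : ∑ i ∈ Icc 2 (N - 1),
      ⟪A i (x i) - A i (xk1 i),
        (∑ j ∈ Icc (i + 1) (N - 1), A j (xk j - xk1 j)) + (xNk - xNk1)⟫
      ≤ (∑ i ∈ Icc 2 (N - 1), ‖A i (x i) - A i (xk1 i)‖) * B := by
    rw [Finset.sum_mul]
    refine Finset.sum_le_sum fun i hi => ?_
    have hT : ‖(∑ j ∈ Icc (i + 1) (N - 1), A j (xk j - xk1 j)) + (xNk - xNk1)‖ ≤ B := by
      rw [hBeq]
      refine le_trans (norm_add_le _ _) (add_le_add ?_ le_rfl)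
      refine le_trans (norm_sum_le _ _) ?_
      refine Finset.sum_le_sum_of_subset_of_nonneg ?_ (fun j _ _ => norm_nonneg _)
      apply Finset.Icc_subset_Icc_left
      omega
    calc ⟪A i (x i) - A i (xk1 i),
          (∑ j ∈ Icc (i + 1) (N - 1), A j (xk j - xk1 j)) + (xNk - xNk1)⟫
        ≤ ‖A i (x i) - A i (xk1 i)‖ *
            ‖(∑ j ∈ Icc (i + 1) (N - 1), A j (xk j - xk1 j)) + (xNk - xNk1)‖ :=
          real_inner_le_norm _ _
      _ ≤ ‖A i (x i) - A i (xk1 i)‖ * B := by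
          exact mul_le_mul_of_nonneg_left hT (norm_nonneg _)
  rw [hdiff]
  have key2' : γ * ∑ i ∈ Icc 2 (N - 1),
      ⟪A i (x i) - A i (xk1 i),
        (∑ j ∈ Icc (i + 1) (N - 1), A j (xk j - xk1 j)) + (xNk - xNk1)⟫
      ≤ γ * (∑ i ∈ Icc 2 (N - 1), ‖A i (x i) - A i (xk1 i)‖) * B := by
    calc _ ≤ γ * ((∑ i ∈ Icc 2 (N - 1), ‖A i (x i) - A i (xk1 i)‖) * B) :=
          mul_le_mul_of_nonneg_left key2 hγ.le
      _ = _ := by ring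
  exact add_le_add key1 key2'
end

section
/- (Lemma 4.2) Under the Scenario-2 setup, suppose f_1,…,f_{N-1} are convex, f_N is convex and differentiable, and x_i^{k+1} ∈ X_i (i ≤ N−1), x_N^{k+1} ∈ ℝ^{n_N}, λ^{k+1} ∈ ℝ^p satisfy: λ^{k+1} = λ^k − γ(Σ_{j=1}^{N-1} A_j x_j^{k+1} + x_N^{k+1} − b); there exist g_i ∈ ∂(f_i + 1_{X_i})(x_i^{k+1}) with g_1 − A_1ᵀλ^{k+1} + γA_1ᵀ(Σ_{j=2}^{N-1} A_j(x_j^k − x_j^{k+1}) + (x_N^k − x_N^{k+1})) = 0, g_i − A_iᵀλ^{k+1} + γA_iᵀ(Σ_{j=i+1}^{N-1} A_j(x_j^k − x_j^{k+1}) + (x_N^k − x_N^{k+1})) = 0 for i = 2,…,N−1, and ∇f_N(x_N^{k+1}) − λ^{k+1} = 0. Let x_i^* ∈ X_i with Σ_{i=1}^{N-1} A_i x_i^* + x_N^* = b, and let D > 0 satisfy ‖A_i x_i^* − A_i x_i^{k+1}‖ ≤ D for i = 2,…,N−1. Write f(u) = Σ_i f_i(x_i). Then for every λ ∈ ℝ^p: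 f(u^*) − f(u^{k+1}) + Σ_{i=1}^{N-1} ⟨x_i^* − x_i^{k+1}, −A_iᵀλ^{k+1}⟩ + ⟨x_N^* − x_N^{k+1}, −λ^{k+1}⟩ + ⟨λ − λ^{k+1}, Σ_{i=1}^{N-1} A_i x_i^{k+1} + x_N^{k+1} − b⟩ + (γ/2)(‖A_1 x_1^* + Σ_{i=2}^{N-1} A_i x_i^k + x_N^k − b‖² − ‖A_1 x_1^* + Σ_{i=2}^{N-1} A_i x_i^{k+1} + x_N^{k+1} − b‖²) + (1/(2γ))(‖λ − λ^k‖² − ‖λ − λ^{k+1}‖²) + γ D (N−2)·(Σ_{i=1}^{N-1} ‖A_i x_i^k − A_i x_i^{k+1}‖ + ‖x_N^k − x_N^{k+1}‖) ≥ 0. -/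
open Finset
open scoped RealInnerProductSpace

lemma convexOn_gradient_ineq {E : Type*} [NormedAddCommGroup E] [InnerProductSpace ℝ E] [CompleteSpace E]
    (f : E → ℝ) (hf : ConvexOn ℝ Set.univ f) {g x : E}
    (h : HasGradientAt f g x) (y : E) : f x + ⟪g, y - x⟫ ≤ f y := by
  set v := y - x with hv
  have hc : HasDerivAt (fun t : ℝ => x + t • v) v 0 := by
    simpa using ((hasDerivAt_id (0:ℝ)).smul_const v).const_add x
  have hfd : HasFDerivAt f (InnerProductSpace.toDual ℝ E g) x := h.hasFDerivAt
  have hd : HasDerivAt (fun t : ℝ => f (x + t • v)) ⟪g, v⟫ 0 := by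
    have h0 : x + (0:ℝ) • v = x := by simp
    have := (h0 ▸ hfd : HasFDerivAt f _ (x + (0:ℝ) • v)).comp_hasDerivAt 0 hc
    simp at this
    exact this
  have hconv : ConvexOn ℝ Set.univ (fun t : ℝ => f (x + t • v)) := by
    have h2 := hf.comp_affineMap (AffineMap.lineMap x y : ℝ →ᵃ[ℝ] E)
    have : (fun t : ℝ => f (x + t • v)) = f ∘ (AffineMap.lineMap x y : ℝ →ᵃ[ℝ] E) := by
      funext t; simp [AffineMap.lineMap_apply, hv, add_comm]
    rw [this]
    simpa using h2
  have hs := hconv.le_slope_of_hasDerivAt (Set.mem_univ (0:ℝ)) (Set.mem_univ (1:ℝ)) one_pos hd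
  have : slope (fun t : ℝ => f (x + t • v)) 0 1 = f (x + v) - f x := by
    simp [slope]
  rw [this] at hs
  have hxy : x + v = y := by rw [hv]; abel
  rw [hxy] at hs
  linarith

set_option maxHeartbeats 2000000 in
theorem stmt_17 (N p : ℕ) (hN : 3 ≤ N) (n : ℕ → ℕ)
    (f : (i : ℕ) → EuclideanSpace ℝ (Fin (n i)) → ℝ)
    (hf : ∀ i, ConvexOn ℝ Set.univ (f i))
    (X : (i : ℕ) → Set (EuclideanSpace ℝ (Fin (n i))))
    (hXc : ∀ i, Convex ℝ (X i)) (hXcl : ∀ i, IsClosed (X i))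
    (fN : EuclideanSpace ℝ (Fin p) → ℝ) (hfN : ConvexOn ℝ Set.univ fN)
    (gradfN : EuclideanSpace ℝ (Fin p) → EuclideanSpace ℝ (Fin p))
    (hgrad : ∀ x, HasGradientAt fN (gradfN x) x)
    (A : (i : ℕ) → EuclideanSpace ℝ (Fin (n i)) →L[ℝ] EuclideanSpace ℝ (Fin p))
    (b : EuclideanSpace ℝ (Fin p)) (γ : ℝ) (hγ : 0 < γ)
    (xk xk1 : (i : ℕ) → EuclideanSpace ℝ (Fin (n i)))
    (xNk xNk1 lamk lamk1 : EuclideanSpace ℝ (Fin p))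
    -- multiplier update
    (hlam : lamk1 = lamk - γ • ((∑ j ∈ Icc 1 (N - 1), A j (xk1 j)) + xNk1 - b))
    -- first-order optimality conditions combined with the update
    (hopt1 : ∃ g, IsSubgradientOn (X 1) (f 1) g (xk1 1) ∧
      g - ContinuousLinearMap.adjoint (A 1) lamk1
        + γ • ContinuousLinearMap.adjoint (A 1)
            ((∑ j ∈ Icc 2 (N - 1), A j (xk j - xk1 j)) + (xNk - xNk1)) = 0)
    (hopti : ∀ i ∈ Icc 2 (N - 1), ∃ g, IsSubgradientOn (X i) (f i) g (xk1 i) ∧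
      g - ContinuousLinearMap.adjoint (A i) lamk1
        + γ • ContinuousLinearMap.adjoint (A i)
            ((∑ j ∈ Icc (i + 1) (N - 1), A j (xk j - xk1 j)) + (xNk - xNk1)) = 0)
    (hoptN : gradfN xNk1 - lamk1 = 0)
    -- feasible point
    (xs : (i : ℕ) → EuclideanSpace ℝ (Fin (n i))) (xNs : EuclideanSpace ℝ (Fin p))
    (hfeas : ∀ i ∈ Icc 1 (N - 1), xs i ∈ X i)
    (hsum : (∑ i ∈ Icc 1 (N - 1), A i (xs i)) + xNs = b)
    (D : ℝ) (hD : 0 < D)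
    (hDb : ∀ i ∈ Icc 2 (N - 1), ‖A i (xs i) - A i (xk1 i)‖ ≤ D)
    (lam : EuclideanSpace ℝ (Fin p)) :
    0 ≤ ((∑ i ∈ Icc 1 (N - 1), f i (xs i)) + fN xNs)
        - ((∑ i ∈ Icc 1 (N - 1), f i (xk1 i)) + fN xNk1)
      + (∑ i ∈ Icc 1 (N - 1), ⟪xs i - xk1 i, -(ContinuousLinearMap.adjoint (A i) lamk1)⟫)
      + ⟪xNs - xNk1, -lamk1⟫
      + ⟪lam - lamk1, (∑ i ∈ Icc 1 (N - 1), A i (xk1 i)) + xNk1 - b⟫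
      + γ / 2 * (‖A 1 (xs 1) + (∑ i ∈ Icc 2 (N - 1), A i (xk i)) + xNk - b‖ ^ 2
          - ‖A 1 (xs 1) + (∑ i ∈ Icc 2 (N - 1), A i (xk1 i)) + xNk1 - b‖ ^ 2)
      + 1 / (2 * γ) * (‖lam - lamk‖ ^ 2 - ‖lam - lamk1‖ ^ 2)
      + γ * D * ((N : ℝ) - 2) *
          ((∑ i ∈ Icc 1 (N - 1), ‖A i (xk i) - A i (xk1 i)‖) + ‖xNk - xNk1‖) := by
  classical
  have hγ0 : γ ≠ 0 := ne_of_gt hγ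
  set r : EuclideanSpace ℝ (Fin p) := (∑ j ∈ Icc 1 (N - 1), A j (xk1 j)) + xNk1 - b with hr
  set s : ℕ → EuclideanSpace ℝ (Fin p) := fun i =>
    (∑ j ∈ Icc (i + 1) (N - 1), A j (xk j - xk1 j)) + (xNk - xNk1) with hs
  set T : ℝ := (∑ i ∈ Icc 1 (N - 1), ‖A i (xk i) - A i (xk1 i)‖) + ‖xNk - xNk1‖ with hT
  have extract : ∀ (i : ℕ) (g : EuclideanSpace ℝ (Fin (n i))),
      g - ContinuousLinearMap.adjoint (A i) lamk1
        + γ • ContinuousLinearMap.adjoint (A i) (s i) = 0 →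
      g = ContinuousLinearMap.adjoint (A i) lamk1
          - γ • ContinuousLinearMap.adjoint (A i) (s i) := by
    intro i g h
    have h3 : g = (g - ContinuousLinearMap.adjoint (A i) lamk1
        + γ • ContinuousLinearMap.adjoint (A i) (s i))
        + ContinuousLinearMap.adjoint (A i) lamk1
        - γ • ContinuousLinearMap.adjoint (A i) (s i) := by abel
    rw [h3, h, zero_add]
  have hsub : ∀ i ∈ Icc 1 (N - 1), ∃ g, IsSubgradientOn (X i) (f i) g (xk1 i) ∧
      g = ContinuousLinearMap.adjoint (A i) lamk1
          - γ • ContinuousLinearMap.adjoint (A i) (s i) := by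
    intro i hi
    simp only [mem_Icc] at hi
    rcases eq_or_lt_of_le hi.1 with h1 | h2
    · subst h1
      obtain ⟨g, hg1, hg2⟩ := hopt1
      exact ⟨g, hg1, extract 1 g hg2⟩
    · obtain ⟨g, hg1, hg2⟩ := hopti i (by simp only [mem_Icc]; omega)
      exact ⟨g, hg1, extract i g hg2⟩
  have hineq : ∀ i ∈ Icc 1 (N - 1),
      -(γ * ⟪A i (xs i - xk1 i), s i⟫) ≤
        f i (xs i) - f i (xk1 i)
          + ⟪xs i - xk1 i, -(ContinuousLinearMap.adjoint (A i) lamk1)⟫ := by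
    intro i hi
    obtain ⟨g, ⟨hmem, hsg⟩, hg⟩ := hsub i hi
    have h1 := hsg (xs i) (hfeas i hi)
    rw [hg] at h1
    have e1 : ⟪ContinuousLinearMap.adjoint (A i) lamk1
          - γ • ContinuousLinearMap.adjoint (A i) (s i), xs i - xk1 i⟫
        = -⟪xs i - xk1 i, -(ContinuousLinearMap.adjoint (A i) lamk1)⟫
          - γ * ⟪A i (xs i - xk1 i), s i⟫ := by
      rw [inner_sub_left, real_inner_smul_left, ContinuousLinearMap.adjoint_inner_left,
        ContinuousLinearMap.adjoint_inner_left, inner_neg_right, neg_neg,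
        ContinuousLinearMap.adjoint_inner_right,
        real_inner_comm (A i (xs i - xk1 i)) lamk1, real_inner_comm (A i (xs i - xk1 i)) (s i)]
    rw [e1] at h1
    linarith
  have hsum1 : -(γ * ∑ i ∈ Icc 1 (N - 1), ⟪A i (xs i - xk1 i), s i⟫) ≤
      (∑ i ∈ Icc 1 (N - 1), f i (xs i)) - (∑ i ∈ Icc 1 (N - 1), f i (xk1 i))
        + ∑ i ∈ Icc 1 (N - 1), ⟪xs i - xk1 i, -(ContinuousLinearMap.adjoint (A i) lamk1)⟫ := by
    calc -(γ * ∑ i ∈ Icc 1 (N - 1), ⟪A i (xs i - xk1 i), s i⟫)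
        = ∑ i ∈ Icc 1 (N - 1), -(γ * ⟪A i (xs i - xk1 i), s i⟫) := by
          rw [Finset.mul_sum, Finset.sum_neg_distrib]
      _ ≤ ∑ i ∈ Icc 1 (N - 1), (f i (xs i) - f i (xk1 i)
            + ⟪xs i - xk1 i, -(ContinuousLinearMap.adjoint (A i) lamk1)⟫) :=
          Finset.sum_le_sum hineq
      _ = _ := by rw [Finset.sum_add_distrib, Finset.sum_sub_distrib]
  have hlam1 : lamk1 = gradfN xNk1 := (sub_eq_zero.mp hoptN).symm
  have hfNineq : 0 ≤ fN xNs - fN xNk1 + ⟪xNs - xNk1, -lamk1⟫ := by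
    have h1 := convexOn_gradient_ineq fN hfN (hgrad xNk1) xNs
    have h2 : ⟪xNs - xNk1, -lamk1⟫ = -⟪gradfN xNk1, xNs - xNk1⟫ := by
      rw [hlam1, inner_neg_right, real_inner_comm]
    rw [h2]; linarith
  have hgr : lamk = lamk1 + γ • r := by rw [hlam]; abel
  have hIdA : 1 / (2 * γ) * (‖lam - lamk‖ ^ 2 - ‖lam - lamk1‖ ^ 2) + ⟪lam - lamk1, r⟫
      = γ / 2 * ‖r‖ ^ 2 := by
    have h1 : lam - lamk = (lam - lamk1) - γ • r := by rw [hgr]; abel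
    rw [h1, norm_sub_sq_real, real_inner_smul_right, norm_smul, Real.norm_eq_abs,
      abs_of_pos hγ]
    field_simp
    ring
  have hsplit : Icc 1 (N - 1) = insert 1 (Icc 2 (N - 1)) := by
    ext j; simp only [mem_Icc, mem_insert]; omega
  have h1notin : (1 : ℕ) ∉ Icc 2 (N - 1) := by simp
  have hs1 : s 1 = (∑ j ∈ Icc 2 (N - 1), A j (xk j - xk1 j)) + (xNk - xNk1) := rfl
  have huk1 : A 1 (xs 1) + (∑ i ∈ Icc 2 (N - 1), A i (xk1 i)) + xNk1 - b
      = r + A 1 (xs 1 - xk1 1) := by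
    rw [hr, hsplit, Finset.sum_insert h1notin, map_sub]
    abel
  have hsumsub : (∑ j ∈ Icc 2 (N - 1), A j (xk j - xk1 j))
      = (∑ j ∈ Icc 2 (N - 1), A j (xk j)) - (∑ j ∈ Icc 2 (N - 1), A j (xk1 j)) := by
    rw [← Finset.sum_sub_distrib]; exact Finset.sum_congr rfl fun j _ => map_sub _ _ _
  have huk : A 1 (xs 1) + (∑ i ∈ Icc 2 (N - 1), A i (xk i)) + xNk - b
      = (A 1 (xs 1) + (∑ i ∈ Icc 2 (N - 1), A i (xk1 i)) + xNk1 - b) + s 1 := by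
    rw [hs1, hsumsub]; abel
  have hIdB : γ / 2 * (‖A 1 (xs 1) + (∑ i ∈ Icc 2 (N - 1), A i (xk i)) + xNk - b‖ ^ 2
        - ‖A 1 (xs 1) + (∑ i ∈ Icc 2 (N - 1), A i (xk1 i)) + xNk1 - b‖ ^ 2)
      + γ / 2 * ‖r‖ ^ 2 - γ * ⟪A 1 (xs 1 - xk1 1), s 1⟫ = γ / 2 * ‖r + s 1‖ ^ 2 := by
    rw [huk, huk1]
    simp only [norm_add_sq_real, inner_add_left]
    ring
  have hT0 : 0 ≤ T := by
    rw [hT]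
    exact add_nonneg (Finset.sum_nonneg fun i _ => norm_nonneg _) (norm_nonneg _)
  have hsbound : ∀ i ∈ Icc 2 (N - 1), ‖s i‖ ≤ T := by
    intro i hi
    simp only [mem_Icc] at hi
    have h1 : ‖s i‖ ≤ (∑ j ∈ Icc (i + 1) (N - 1), ‖A j (xk j - xk1 j)‖) + ‖xNk - xNk1‖ :=
      le_trans (norm_add_le _ _) (by gcongr; exact norm_sum_le _ _)
    have h2 : (∑ j ∈ Icc (i + 1) (N - 1), ‖A j (xk j - xk1 j)‖)
        ≤ ∑ j ∈ Icc 1 (N - 1), ‖A j (xk j) - A j (xk1 j)‖ := by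
      have he : ∀ j, ‖A j (xk j - xk1 j)‖ = ‖A j (xk j) - A j (xk1 j)‖ := fun j => by
        rw [map_sub]
      calc (∑ j ∈ Icc (i + 1) (N - 1), ‖A j (xk j - xk1 j)‖)
          = ∑ j ∈ Icc (i + 1) (N - 1), ‖A j (xk j) - A j (xk1 j)‖ :=
            Finset.sum_congr rfl fun j _ => he j
        _ ≤ _ := Finset.sum_le_sum_of_subset_of_nonneg
            (Finset.Icc_subset_Icc (by omega) le_rfl) (fun j _ _ => norm_nonneg _)
    rw [hT]
    linarith
  have hcard : (Icc 2 (N - 1)).card = N - 2 := by rw [Nat.card_Icc]; omega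
  have hcast : ((N - 2 : ℕ) : ℝ) = (N : ℝ) - 2 := by
    rw [Nat.cast_sub (by omega)]; norm_num
  have hboundC : γ * ∑ i ∈ Icc 1 (N - 1), ⟪A i (xs i - xk1 i), s i⟫
      ≤ γ * ⟪A 1 (xs 1 - xk1 1), s 1⟫ + γ * D * ((N : ℝ) - 2) * T := by
    have h2 : ∑ i ∈ Icc 2 (N - 1), ⟪A i (xs i - xk1 i), s i⟫ ≤ ((N : ℝ) - 2) * (D * T) := by
      have h3 : ∀ i ∈ Icc 2 (N - 1), ⟪A i (xs i - xk1 i), s i⟫ ≤ D * T := by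
        intro i hi
        calc ⟪A i (xs i - xk1 i), s i⟫ ≤ ‖A i (xs i - xk1 i)‖ * ‖s i‖ :=
              real_inner_le_norm _ _
          _ ≤ D * T := mul_le_mul (by rw [map_sub]; exact hDb i hi) (hsbound i hi)
              (norm_nonneg _) hD.le
      calc ∑ i ∈ Icc 2 (N - 1), ⟪A i (xs i - xk1 i), s i⟫
          ≤ (Icc 2 (N - 1)).card • (D * T) := Finset.sum_le_card_nsmul _ _ _ h3
        _ = ((N : ℝ) - 2) * (D * T) := by rw [hcard, nsmul_eq_mul, hcast]
    rw [hsplit, Finset.sum_insert h1notin, mul_add]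
    have h4 := mul_le_mul_of_nonneg_left h2 hγ.le
    nlinarith [h4]
  have hpos : 0 ≤ γ / 2 * ‖r + s 1‖ ^ 2 := by positivity
  generalize hg1 : (∑ i ∈ Icc 1 (N - 1), f i (xs i)) = Fv at hsum1 ⊢
  generalize hg2 : (∑ i ∈ Icc 1 (N - 1), f i (xk1 i)) = Gv at hsum1 ⊢
  generalize hg3 : (∑ i ∈ Icc 1 (N - 1), ⟪xs i - xk1 i, -(ContinuousLinearMap.adjoint (A i) lamk1)⟫) = E2v at hsum1 ⊢
  generalize hg4 : ⟪xNs - xNk1, -lamk1⟫ = E3v at hfNineq ⊢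
  generalize hg5 : ⟪lam - lamk1, r⟫ = E4v at hIdA ⊢
  generalize hg6 : ‖A 1 (xs 1) + (∑ i ∈ Icc 2 (N - 1), A i (xk i)) + xNk - b‖ ^ 2 = n1v at hIdB ⊢
  generalize hg7 : ‖A 1 (xs 1) + (∑ i ∈ Icc 2 (N - 1), A i (xk1 i)) + xNk1 - b‖ ^ 2 = n2v at hIdB ⊢
  generalize hg8 : ‖lam - lamk‖ ^ 2 = n3v at hIdA ⊢
  generalize hg9 : ‖lam - lamk1‖ ^ 2 = n4v at hIdA ⊢
  generalize hg10 : ‖r‖ ^ 2 = n5v at hIdA hIdB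
  generalize hg11 : ⟪A 1 (xs 1 - xk1 1), s 1⟫ = I1v at hIdB hboundC
  generalize hg12 : (∑ i ∈ Icc 1 (N - 1), ⟪A i (xs i - xk1 i), s i⟫) = Sv at hsum1 hboundC
  generalize hg13 : ‖r + s 1‖ ^ 2 = Pv at hIdB hpos
  clear_value T
  linarith only [hsum1, hfNineq, hIdA, hIdB, hboundC, hpos]
end

section
/- (Theorem 4.3, ergodic bound) Under the Scenario-2 setup, suppose the per-iteration inequality of Lemma 4.2 holds for every k = 0,1,…,t (with the same point (x_1^*,…,x_N^*) and constant D), that (x_1^*,…,x_N^*,λ^*) satisfies the KKT conditions (x_i^* ∈ X_i, Σ_{i<N} A_i x_i^* + x_N^* = b, and the variational inequalities with multiplier λ^*), and that Σ_{k=0}^{t} (Σ_{i=1}^{N-1} ‖A_i x_i^k − A_i x_i^{k+1}‖ + ‖x_N^k − x_N^{k+1}‖) ≤ G for a constant G. Define the ergodic averages x̄_i^t = (1/(t+1)) Σ_{k=0}^{t} x_i^{k+1}, ū^t = (x̄_1^t,…,x̄_N^t), f(u) = Σ_i f_i(x_i), and ρ = ‖λ^*‖ + 1. Then 0 ≤ f(ū^t)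 − f(u^*) + ρ‖Σ_{i=1}^{N-1} A_i x̄_i^t + x̄_N^t − b‖ ≤ (ρ² + ‖λ^0‖²)/(γ(t+1)) + (γ/(2(t+1)))‖Σ_{i=2}^{N-1} A_i(x_i^0 − x_i^*) + (x_N^0 − x_N^*)‖² + γ D G (N−2)/(t+1). -/
open Finset
open scoped RealInnerProductSpace

set_option maxHeartbeats 1000000 in
theorem stmt_18 (N p : ℕ) (hN : 3 ≤ N) (n : ℕ → ℕ)
    (f : (i : ℕ) → EuclideanSpace ℝ (Fin (n i)) → ℝ)
    (hf : ∀ i, ConvexOn ℝ Set.univ (f i))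
    (X : (i : ℕ) → Set (EuclideanSpace ℝ (Fin (n i))))
    (hXc : ∀ i, Convex ℝ (X i)) (hXcl : ∀ i, IsClosed (X i))
    (fN : EuclideanSpace ℝ (Fin p) → ℝ) (hfN : ConvexOn ℝ Set.univ fN)
    (A : (i : ℕ) → EuclideanSpace ℝ (Fin (n i)) →L[ℝ] EuclideanSpace ℝ (Fin p))
    (b : EuclideanSpace ℝ (Fin p)) (γ : ℝ) (hγ : 0 < γ)
    (t : ℕ)
    -- ADMM iterates
    (x : ℕ → (i : ℕ) → EuclideanSpace ℝ (Fin (n i)))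
    (xN lam : ℕ → EuclideanSpace ℝ (Fin p))
    (hmem : ∀ k ≤ t, ∀ i ∈ Icc 1 (N - 1), x (k + 1) i ∈ X i)
    -- KKT point
    (xs : (i : ℕ) → EuclideanSpace ℝ (Fin (n i))) (xNs lams : EuclideanSpace ℝ (Fin p))
    (hfeas : ∀ i ∈ Icc 1 (N - 1), xs i ∈ X i)
    (hsum : (∑ i ∈ Icc 1 (N - 1), A i (xs i)) + xNs = b)
    (hkkt : ∀ i ∈ Icc 1 (N - 1), ∃ g, IsSubgradientAt (f i) g (xs i) ∧ ∀ xi ∈ X i,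
      0 ≤ ⟪xi - xs i, g - ContinuousLinearMap.adjoint (A i) lams⟫)
    (hkktN : IsSubgradientAt fN lams xNs)
    (D : ℝ) (hD : 0 < D)
    -- the per-iteration inequality of Lemma 4.2, for k = 0, 1, …, t
    (hiter : ∀ k ≤ t, ∀ lamv : EuclideanSpace ℝ (Fin p),
      0 ≤ ((∑ i ∈ Icc 1 (N - 1), f i (xs i)) + fN xNs)
          - ((∑ i ∈ Icc 1 (N - 1), f i (x (k + 1) i)) + fN (xN (k + 1)))
        + (∑ i ∈ Icc 1 (N - 1),
            ⟪xs i - x (k + 1) i, -(ContinuousLinearMap.adjoint (A i) (lam (k + 1)))⟫)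
        + ⟪xNs - xN (k + 1), -(lam (k + 1))⟫
        + ⟪lamv - lam (k + 1), (∑ i ∈ Icc 1 (N - 1), A i (x (k + 1) i)) + xN (k + 1) - b⟫
        + γ / 2 * (‖A 1 (xs 1) + (∑ i ∈ Icc 2 (N - 1), A i (x k i)) + xN k - b‖ ^ 2
            - ‖A 1 (xs 1) + (∑ i ∈ Icc 2 (N - 1), A i (x (k + 1) i)) + xN (k + 1) - b‖ ^ 2)
        + 1 / (2 * γ) * (‖lamv - lam k‖ ^ 2 - ‖lamv - lam (k + 1)‖ ^ 2)
        + γ * D * ((N : ℝ) - 2) *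
            ((∑ i ∈ Icc 1 (N - 1), ‖A i (x k i) - A i (x (k + 1) i)‖)
              + ‖xN k - xN (k + 1)‖))
    -- finite length bound
    (G : ℝ)
    (hG : (∑ k ∈ range (t + 1), ((∑ i ∈ Icc 1 (N - 1), ‖A i (x k i) - A i (x (k + 1) i)‖)
        + ‖xN k - xN (k + 1)‖)) ≤ G)
    -- ergodic averages
    (xbar : (i : ℕ) → EuclideanSpace ℝ (Fin (n i))) (xbarN : EuclideanSpace ℝ (Fin p))
    (hxbar : ∀ i, xbar i = ((t : ℝ) + 1)⁻¹ • ∑ k ∈ range (t + 1), x (k + 1) i)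
    (hxbarN : xbarN = ((t : ℝ) + 1)⁻¹ • ∑ k ∈ range (t + 1), xN (k + 1))
    (ρ : ℝ) (hρ : ρ = ‖lams‖ + 1) :
    0 ≤ ((∑ i ∈ Icc 1 (N - 1), f i (xbar i)) + fN xbarN)
        - ((∑ i ∈ Icc 1 (N - 1), f i (xs i)) + fN xNs)
        + ρ * ‖(∑ i ∈ Icc 1 (N - 1), A i (xbar i)) + xbarN - b‖
    ∧ ((∑ i ∈ Icc 1 (N - 1), f i (xbar i)) + fN xbarN)
        - ((∑ i ∈ Icc 1 (N - 1), f i (xs i)) + fN xNs)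
        + ρ * ‖(∑ i ∈ Icc 1 (N - 1), A i (xbar i)) + xbarN - b‖ ≤
      (ρ ^ 2 + ‖lam 0‖ ^ 2) / (γ * ((t : ℝ) + 1))
      + γ / (2 * ((t : ℝ) + 1)) *
          ‖(∑ i ∈ Icc 2 (N - 1), A i (x 0 i - xs i)) + (xN 0 - xNs)‖ ^ 2
      + γ * D * G * ((N : ℝ) - 2) / ((t : ℝ) + 1) := by
  
  have hM : (0:ℝ) < (t:ℝ) + 1 := by positivity
  have hMne : ((t:ℝ) + 1) ≠ 0 := ne_of_gt hM
  have h1N : 1 ≤ N - 1 := by omega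
  have hN2 : (1:ℝ) ≤ (N:ℝ) - 2 := by
    have : (3:ℝ) ≤ (N:ℝ) := by exact_mod_cast hN
    linarith
  have hρpos : 0 < ρ := by rw [hρ]; positivity
  -- weights
  have hw : ∀ k ∈ range (t+1), (0:ℝ) ≤ ((t:ℝ)+1)⁻¹ := fun _ _ => by positivity
  have hwsum : ∑ _k ∈ range (t+1), ((t:ℝ)+1)⁻¹ = 1 := by
    rw [Finset.sum_const, card_range, nsmul_eq_mul]
    push_cast
    field_simp
  have hxbar' : ∀ i, xbar i = ∑ k ∈ range (t+1), ((t:ℝ)+1)⁻¹ • x (k+1) i := by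
    intro i; rw [hxbar, Finset.smul_sum]
  have hxbarN' : xbarN = ∑ k ∈ range (t+1), ((t:ℝ)+1)⁻¹ • xN (k+1) := by
    rw [hxbarN, Finset.smul_sum]
  -- membership of averages
  have hxbarmem : ∀ i ∈ Icc 1 (N-1), xbar i ∈ X i := by
    intro i hi
    rw [hxbar' i]
    exact (hXc i).sum_mem hw hwsum
      (fun k hk => hmem k (Finset.mem_range_succ_iff.mp hk) i hi)
  -- Jensen
  have hJ : ∀ i ∈ Icc 1 (N-1),
      f i (xbar i) ≤ ∑ k ∈ range (t+1), ((t:ℝ)+1)⁻¹ * f i (x (k+1) i) := by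
    intro i _
    rw [hxbar' i]
    simpa [smul_eq_mul] using (hf i).map_sum_le hw hwsum (fun k _ => Set.mem_univ _)
  have hJN : fN xbarN ≤ ∑ k ∈ range (t+1), ((t:ℝ)+1)⁻¹ * fN (xN (k+1)) := by
    rw [hxbarN']
    simpa [smul_eq_mul] using hfN.map_sum_le hw hwsum (fun k _ => Set.mem_univ _)
  -- residuals
  set rb : EuclideanSpace ℝ (Fin p) :=
    (∑ i ∈ Icc 1 (N - 1), A i (xbar i)) + xbarN - b with hrb
  have hAbar : ∀ i, A i (xbar i) = ((t:ℝ)+1)⁻¹ • ∑ k ∈ range (t+1), A i (x (k+1) i) := by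
    intro i; rw [hxbar i, map_smul, map_sum]
  have key1 : ((t:ℝ)+1) • (∑ i ∈ Icc 1 (N-1), A i (xbar i))
      = ∑ k ∈ range (t+1), ∑ i ∈ Icc 1 (N-1), A i (x (k+1) i) := by
    rw [Finset.smul_sum, Finset.sum_comm]
    refine Finset.sum_congr rfl fun i _ => ?_
    rw [hAbar i, smul_smul, mul_inv_cancel₀ hMne, one_smul]
  have key2 : ((t:ℝ)+1) • xbarN = ∑ k ∈ range (t+1), xN (k+1) := by
    rw [hxbarN, smul_smul, mul_inv_cancel₀ hMne, one_smul]
  have key3 : ((t:ℝ)+1) • b = ∑ _k ∈ range (t+1), b := by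
    rw [Finset.sum_const, card_range, ← Nat.cast_smul_eq_nsmul ℝ]
    norm_num
  have hrsum : ∑ k ∈ range (t+1),
      ((∑ i ∈ Icc 1 (N - 1), A i (x (k+1) i)) + xN (k+1) - b) = ((t:ℝ)+1) • rb := by
    rw [hrb, smul_sub, smul_add, key1, key2, key3]
    rw [Finset.sum_sub_distrib, Finset.sum_add_distrib]
  -- Part 1
  have hlow : ∀ i ∈ Icc 1 (N-1),
      ⟪lams, A i (xbar i) - A i (xs i)⟫ ≤ f i (xbar i) - f i (xs i) := by
    intro i hi
    obtain ⟨g, hg, hvi⟩ := hkkt i hi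
    have h1 := hg (xbar i)
    have h2 := hvi (xbar i) (hxbarmem i hi)
    have h4 : ⟪xbar i - xs i, ContinuousLinearMap.adjoint (A i) lams⟫
        = ⟪lams, A i (xbar i) - A i (xs i)⟫ := by
      rw [ContinuousLinearMap.adjoint_inner_right, map_sub, real_inner_comm]
    rw [inner_sub_right, h4] at h2
    have h5 : ⟪g, xbar i - xs i⟫ = ⟪xbar i - xs i, g⟫ := real_inner_comm _ _
    linarith
  have hlowN : ⟪lams, xbarN - xNs⟫ ≤ fN xbarN - fN xNs := by
    have := hkktN xbarN
    linarith
  have hsum1 : ⟪lams, rb⟫ ≤ ((∑ i ∈ Icc 1 (N-1), f i (xbar i)) + fN xbarN)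
      - ((∑ i ∈ Icc 1 (N-1), f i (xs i)) + fN xNs) := by
    have h5 := Finset.sum_le_sum hlow
    rw [← inner_sum, Finset.sum_sub_distrib, Finset.sum_sub_distrib] at h5
    have h7 : ⟪lams, rb⟫
        = ⟪lams, (∑ i ∈ Icc 1 (N-1), A i (xbar i)) - ∑ i ∈ Icc 1 (N-1), A i (xs i)⟫
          + ⟪lams, xbarN - xNs⟫ := by
      rw [← inner_add_right, hrb, ← hsum]
      congr 1
      abel
    rw [h7]
    linarith
  have habs := abs_real_inner_le_norm lams rb
  have hpart1 : 0 ≤ ((∑ i ∈ Icc 1 (N-1), f i (xbar i)) + fN xbarN)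
      - ((∑ i ∈ Icc 1 (N-1), f i (xs i)) + fN xNs) + ρ * ‖rb‖ := by
    have h8 : -(‖lams‖ * ‖rb‖) ≤ ⟪lams, rb⟫ := neg_le_of_abs_le habs
    have h9 : (0:ℝ) ≤ ‖rb‖ := norm_nonneg _
    rw [hρ]
    nlinarith [h8, h9, hsum1]
  refine ⟨hpart1, ?_⟩
  -- Part 2: choose the multiplier
  obtain ⟨lamv, hlv1, hlv2⟩ : ∃ lamv : EuclideanSpace ℝ (Fin p),
      ⟪lamv, rb⟫ = -(ρ * ‖rb‖) ∧ ‖lamv‖ ≤ ρ := by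
    by_cases h : rb = 0
    · refine ⟨0, by simp [h], by simp; linarith⟩
    · have hnrb : 0 < ‖rb‖ := norm_pos_iff.mpr h
      refine ⟨-((ρ / ‖rb‖) • rb), ?_, ?_⟩
      · rw [inner_neg_left, real_inner_smul_left, real_inner_self_eq_norm_sq]
        field_simp
      · rw [norm_neg, norm_smul, Real.norm_eq_abs, abs_of_pos (div_pos hρpos hnrb),
          div_mul_cancel₀ _ (ne_of_gt hnrb)]
  -- telescoping functions
  obtain ⟨av, hav⟩ : ∃ av : ℕ → ℝ, ∀ k, av k
      = ‖A 1 (xs 1) + (∑ i ∈ Icc 2 (N - 1), A i (x k i)) + xN k - b‖ ^ 2 :=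
    ⟨_, fun _ => rfl⟩
  obtain ⟨bv, hbv⟩ : ∃ bv : ℕ → ℝ, ∀ k, bv k = ‖lamv - lam k‖ ^ 2 := ⟨_, fun _ => rfl⟩
  obtain ⟨sv, hsv⟩ : ∃ sv : ℕ → ℝ, ∀ k, sv k
      = (∑ i ∈ Icc 1 (N - 1), ‖A i (x k i) - A i (x (k + 1) i)‖) + ‖xN k - xN (k + 1)‖ :=
    ⟨_, fun _ => rfl⟩
  -- the T2 identity
  have hT2 : ∀ k : ℕ,
      (∑ i ∈ Icc 1 (N - 1),
          ⟪xs i - x (k + 1) i, -(ContinuousLinearMap.adjoint (A i) (lam (k + 1)))⟫)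
        + ⟪xNs - xN (k + 1), -(lam (k + 1))⟫
        + ⟪lamv - lam (k + 1), (∑ i ∈ Icc 1 (N - 1), A i (x (k + 1) i)) + xN (k + 1) - b⟫
      = ⟪lamv, (∑ i ∈ Icc 1 (N - 1), A i (x (k + 1) i)) + xN (k + 1) - b⟫ := by
    intro k
    have e1 : ∀ i ∈ Icc 1 (N-1),
        ⟪xs i - x (k + 1) i, -(ContinuousLinearMap.adjoint (A i) (lam (k + 1)))⟫
        = ⟪lam (k+1), A i (x (k+1) i) - A i (xs i)⟫ := by
      intro i _
      rw [inner_neg_right, ContinuousLinearMap.adjoint_inner_right, map_sub,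
        ← inner_neg_left, neg_sub, real_inner_comm]
    have e1N : ⟪xNs - xN (k+1), -(lam (k+1))⟫ = ⟪lam (k+1), xN (k+1) - xNs⟫ := by
      rw [inner_neg_right, ← inner_neg_left, neg_sub, real_inner_comm]
    rw [Finset.sum_congr rfl e1, e1N]
    have e2 : (∑ i ∈ Icc 1 (N-1), ⟪lam (k+1), A i (x (k+1) i) - A i (xs i)⟫)
        + ⟪lam (k+1), xN (k+1) - xNs⟫
        = ⟪lam (k+1), (∑ i ∈ Icc 1 (N - 1), A i (x (k + 1) i)) + xN (k + 1) - b⟫ := by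
      rw [← inner_sum, ← inner_add_right]
      congr 1
      rw [Finset.sum_sub_distrib, ← hsum]
      abel
    rw [e2, inner_sub_left]
    ring
  -- per-iteration inequality, rearranged
  have hiter2 : ∀ k ∈ range (t+1),
      ((∑ i ∈ Icc 1 (N - 1), f i (x (k + 1) i)) + fN (xN (k + 1)))
        - ((∑ i ∈ Icc 1 (N - 1), f i (xs i)) + fN xNs)
        - ⟪lamv, (∑ i ∈ Icc 1 (N - 1), A i (x (k + 1) i)) + xN (k + 1) - b⟫
      ≤ γ / 2 * (av k - av (k+1)) + 1 / (2 * γ) * (bv k - bv (k+1))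
        + γ * D * ((N:ℝ) - 2) * sv k := by
    intro k hk
    have h0 := hiter k (Finset.mem_range_succ_iff.mp hk) lamv
    have hT := hT2 k
    rw [hav, hav, hbv, hbv, hsv]
    linarith
  have hsum2 := Finset.sum_le_sum hiter2
  -- compute both sides of the summed inequality
  have hLHS : ∑ k ∈ range (t+1),
      (((∑ i ∈ Icc 1 (N - 1), f i (x (k + 1) i)) + fN (xN (k + 1)))
        - ((∑ i ∈ Icc 1 (N - 1), f i (xs i)) + fN xNs)
        - ⟪lamv, (∑ i ∈ Icc 1 (N - 1), A i (x (k + 1) i)) + xN (k + 1) - b⟫)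
      = (∑ k ∈ range (t+1), ((∑ i ∈ Icc 1 (N - 1), f i (x (k + 1) i)) + fN (xN (k + 1))))
        - ((t:ℝ)+1) * ((∑ i ∈ Icc 1 (N - 1), f i (xs i)) + fN xNs)
        - ((t:ℝ)+1) * ⟪lamv, rb⟫ := by
    rw [Finset.sum_sub_distrib, Finset.sum_sub_distrib, ← inner_sum, hrsum,
      real_inner_smul_right, Finset.sum_const, card_range, nsmul_eq_mul]
    push_cast
    ring
  have hRHS : ∑ k ∈ range (t+1),
      (γ / 2 * (av k - av (k+1)) + 1 / (2 * γ) * (bv k - bv (k+1))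
        + γ * D * ((N:ℝ) - 2) * sv k)
      = γ / 2 * (av 0 - av (t+1)) + 1 / (2 * γ) * (bv 0 - bv (t+1))
        + γ * D * ((N:ℝ) - 2) * ∑ k ∈ range (t+1), sv k := by
    rw [Finset.sum_add_distrib, Finset.sum_add_distrib, ← Finset.mul_sum, ← Finset.mul_sum,
      ← Finset.mul_sum, Finset.sum_range_sub', Finset.sum_range_sub']
  rw [hLHS, hRHS] at hsum2
  -- Jensen bound on the sum of function values
  have hJensen : ((t:ℝ)+1) * ((∑ i ∈ Icc 1 (N-1), f i (xbar i)) + fN xbarN)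
      ≤ ∑ k ∈ range (t+1), ((∑ i ∈ Icc 1 (N - 1), f i (x (k + 1) i)) + fN (xN (k + 1))) := by
    have h1 := Finset.sum_le_sum hJ
    have h2 : ∑ i ∈ Icc 1 (N-1), ∑ k ∈ range (t+1), ((t:ℝ)+1)⁻¹ * f i (x (k+1) i)
        = ((t:ℝ)+1)⁻¹ * ∑ k ∈ range (t+1), ∑ i ∈ Icc 1 (N-1), f i (x (k+1) i) := by
      rw [Finset.sum_comm, Finset.mul_sum]
      exact Finset.sum_congr rfl fun k _ => (Finset.mul_sum _ _ _).symm
    rw [h2] at h1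
    rw [← Finset.mul_sum] at hJN
    rw [Finset.sum_add_distrib]
    have h3 := add_le_add h1 hJN
    rw [← mul_add] at h3
    calc ((t:ℝ)+1) * ((∑ i ∈ Icc 1 (N-1), f i (xbar i)) + fN xbarN)
        ≤ ((t:ℝ)+1) * (((t:ℝ)+1)⁻¹ * ((∑ k ∈ range (t+1), ∑ i ∈ Icc 1 (N-1), f i (x (k+1) i))
            + ∑ k ∈ range (t+1), fN (xN (k+1)))) := by
          exact mul_le_mul_of_nonneg_left h3 (le_of_lt hM)
      _ = (∑ k ∈ range (t+1), ∑ i ∈ Icc 1 (N-1), f i (x (k+1) i))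
            + ∑ k ∈ range (t+1), fN (xN (k+1)) := by
          rw [← mul_assoc, mul_inv_cancel₀ hMne, one_mul]
  -- bounds on remaining pieces
  have hsvG : ∑ k ∈ range (t+1), sv k ≤ G := by
    calc ∑ k ∈ range (t+1), sv k
        = ∑ k ∈ range (t + 1), ((∑ i ∈ Icc 1 (N - 1), ‖A i (x k i) - A i (x (k + 1) i)‖)
            + ‖xN k - xN (k + 1)‖) := Finset.sum_congr rfl fun k _ => hsv k
      _ ≤ G := hG
  have havt : 0 ≤ av (t+1) := by rw [hav]; positivity
  have hbvt : 0 ≤ bv (t+1) := by rw [hbv]; positivity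
  have hbv0 : bv 0 ≤ 2 * ρ^2 + 2 * ‖lam 0‖^2 := by
    rw [hbv]
    have h := norm_sub_le lamv (lam 0)
    have h1 : (0:ℝ) ≤ ‖lamv - lam 0‖ := norm_nonneg _
    have h2 : (0:ℝ) ≤ ‖lamv‖ := norm_nonneg _
    have h3 : (0:ℝ) ≤ ‖lam 0‖ := norm_nonneg _
    nlinarith [sq_nonneg (‖lamv‖ - ‖lam 0‖)]
  -- rewrite av 0
  have hsplit : ∑ i ∈ Icc 1 (N-1), A i (xs i)
      = A 1 (xs 1) + ∑ i ∈ Icc 2 (N-1), A i (xs i) := by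
    rw [show Icc 2 (N-1) = Ioc 1 (N-1) from Finset.Icc_add_one_left_eq_Ioc 1 (N-1),
      Finset.Icc_eq_cons_Ioc h1N, Finset.sum_cons]
  have hav0 : av 0 = ‖(∑ i ∈ Icc 2 (N - 1), A i (x 0 i - xs i)) + (xN 0 - xNs)‖ ^ 2 := by
    rw [hav]
    congr 2
    have hds : ∑ i ∈ Icc 2 (N-1), A i (x 0 i - xs i)
        = (∑ i ∈ Icc 2 (N-1), A i (x 0 i)) - ∑ i ∈ Icc 2 (N-1), A i (xs i) := by
      rw [← Finset.sum_sub_distrib]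
      exact Finset.sum_congr rfl fun i _ => map_sub _ _ _
    rw [hds, ← hsum, hsplit]
    abel
  -- combine everything
  have hγD : 0 ≤ γ * D * ((N:ℝ) - 2) := by positivity
  have hkey : ((t:ℝ)+1) * (((∑ i ∈ Icc 1 (N-1), f i (xbar i)) + fN xbarN)
      - ((∑ i ∈ Icc 1 (N-1), f i (xs i)) + fN xNs) + ρ * ‖rb‖)
      ≤ (ρ^2 + ‖lam 0‖^2) / γ
        + γ / 2 * ‖(∑ i ∈ Icc 2 (N - 1), A i (x 0 i - xs i)) + (xN 0 - xNs)‖ ^ 2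
        + γ * D * ((N:ℝ) - 2) * G := by
    have hg1 : γ * D * ((N:ℝ) - 2) * (∑ k ∈ range (t+1), sv k)
        ≤ γ * D * ((N:ℝ) - 2) * G := mul_le_mul_of_nonneg_left hsvG hγD
    have hb : 1 / (2 * γ) * (bv 0 - bv (t+1)) ≤ (ρ^2 + ‖lam 0‖^2) / γ := by
      have h1 : bv 0 - bv (t+1) ≤ 2 * ρ^2 + 2 * ‖lam 0‖^2 := by linarith
      have h2 : (0:ℝ) < 1 / (2*γ) := by positivity
      have h3 : 1 / (2 * γ) * (bv 0 - bv (t+1)) ≤ 1 / (2*γ) * (2 * ρ^2 + 2 * ‖lam 0‖^2) :=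
        mul_le_mul_of_nonneg_left h1 (le_of_lt h2)
      have h4 : 1 / (2*γ) * (2 * ρ^2 + 2 * ‖lam 0‖^2) = (ρ^2 + ‖lam 0‖^2) / γ := by
        field_simp
      linarith
    have ha : γ / 2 * (av 0 - av (t+1))
        ≤ γ / 2 * ‖(∑ i ∈ Icc 2 (N - 1), A i (x 0 i - xs i)) + (xN 0 - xNs)‖ ^ 2 := by
      rw [← hav0]
      have : av 0 - av (t+1) ≤ av 0 := by linarith
      have h2 : (0:ℝ) ≤ γ / 2 := by positivity
      exact mul_le_mul_of_nonneg_left this h2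
    have hmain : ((t:ℝ)+1) * (((∑ i ∈ Icc 1 (N-1), f i (xbar i)) + fN xbarN)
        - ((∑ i ∈ Icc 1 (N-1), f i (xs i)) + fN xNs)) - ((t:ℝ)+1) * ⟪lamv, rb⟫
        ≤ γ / 2 * (av 0 - av (t+1)) + 1 / (2 * γ) * (bv 0 - bv (t+1))
          + γ * D * ((N:ℝ) - 2) * ∑ k ∈ range (t+1), sv k := by
      linarith [hsum2, hJensen]
    rw [hlv1] at hmain
    linarith [hmain, ha, hb, hg1]
  -- finish: divide by t+1
  rw [show (∑ i ∈ Icc 1 (N - 1), A i (xbar i)) + xbarN - b = rb from hrb.symm] at *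
  rw [← mul_le_mul_iff_right₀ hM]
  have hexp : ((t:ℝ)+1) * ((ρ ^ 2 + ‖lam 0‖ ^ 2) / (γ * ((t : ℝ) + 1))
      + γ / (2 * ((t : ℝ) + 1)) *
          ‖(∑ i ∈ Icc 2 (N - 1), A i (x 0 i - xs i)) + (xN 0 - xNs)‖ ^ 2
      + γ * D * G * ((N : ℝ) - 2) / ((t : ℝ) + 1))
      = (ρ^2 + ‖lam 0‖^2) / γ
        + γ / 2 * ‖(∑ i ∈ Icc 2 (N - 1), A i (x 0 i - xs i)) + (xN 0 - xNs)‖ ^ 2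
        + γ * D * ((N:ℝ) - 2) * G := by
    field_simp
  rw [hexp]
  exact hkey
end

section
/- (Theorem 4.2, finite length, abstract KL argument) Let (d_k)_{k≥0} be a sequence of nonnegative reals, (ℓ_k)_{k≥0} a nonincreasing sequence of reals, ℓ^* ∈ ℝ, c > 0, M > 0, and η ∈ (0, +∞]. Assume: (i) ℓ_k − ℓ_{k+1} ≥ c·d_k² for all k ≥ 0; (ii) ℓ^* < ℓ_k < ℓ^* + η for all k ≥ 1; (iii) φ : [0, η) → [0, ∞) is concave, continuous, continuously differentiable on (0, η) with φ(0) = 0 and φ'(s) > 0 for all s ∈ (0, η); and (iv) φ'(ℓ_k − ℓ^*)·M·d_{k-1} ≥ 1 for all k ≥ 1. Then Σ_{k=0}^{∞} d_k ≤ 2 d_0 + (M/c)·φ(ℓ_1 − ℓ^*); in particular the series Σ_k d_k converges. -/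
theorem stmt_19 (d : ℕ → ℝ) (hd : ∀ k, 0 ≤ d k)
    (l : ℕ → ℝ) (hmono : ∀ k, l (k + 1) ≤ l k)
    (lstar c M : ℝ) (hc : 0 < c) (hM : 0 < M)
    (η : EReal) (hη : 0 < η)
    (φ φ' : ℝ → ℝ)
    -- (i) sufficient decrease
    (hdec : ∀ k, c * d k ^ 2 ≤ l k - l (k + 1))
    -- (ii) the values stay in the KL window
    (hwin : ∀ k, 1 ≤ k → lstar < l k ∧ ((l k : ℝ) : EReal) < (lstar : EReal) + η)
    -- (iii) φ is a desingularizing function on [0, η)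
    (hφ0 : φ 0 = 0)
    (hφnonneg : ∀ s : ℝ, 0 ≤ s → ((s : ℝ) : EReal) < η → 0 ≤ φ s)
    (hφcont : ContinuousOn φ {s : ℝ | 0 ≤ s ∧ ((s : ℝ) : EReal) < η})
    (hφconc : ConcaveOn ℝ {s : ℝ | 0 ≤ s ∧ ((s : ℝ) : EReal) < η} φ)
    (hφderiv : ∀ s : ℝ, 0 < s → ((s : ℝ) : EReal) < η → HasDerivAt φ (φ' s) s ∧ 0 < φ' s)
    -- (iv) the KL-type inequality
    (hKL : ∀ k, 1 ≤ k → 1 ≤ φ' (l k - lstar) * M * d (k - 1)) :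
    Summable d ∧ (∑' k, d k) ≤ 2 * d 0 + M / c * φ (l 1 - lstar) := by
  -- window facts for the errors e k = l k - lstar
  have hwin' : ∀ k, 1 ≤ k → 0 < l k - lstar ∧ ((l k - lstar : ℝ) : EReal) < η := by
    intro k hk
    obtain ⟨h1, h2⟩ := hwin k hk
    refine ⟨by linarith, ?_⟩
    have : ((l k : ℝ) : EReal) - (lstar : EReal) < η := by
      rw [EReal.sub_lt_iff (Or.inl (EReal.coe_ne_bot lstar))
        (Or.inl (EReal.coe_ne_top lstar))]
      rwa [add_comm] at h2
    rwa [← EReal.coe_sub] at this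
  have hmem : ∀ k, 1 ≤ k →
      l k - lstar ∈ {s : ℝ | 0 ≤ s ∧ ((s : ℝ) : EReal) < η} := by
    intro k hk
    obtain ⟨h1, h2⟩ := hwin' k hk
    exact ⟨le_of_lt h1, h2⟩
  have hφ1 : 0 ≤ φ (l 1 - lstar) :=
    hφnonneg _ (hmem 1 le_rfl).1 (hmem 1 le_rfl).2
  -- the key per-step bound
  have key : ∀ k : ℕ, 2 * d (k + 1) ≤
      d k + M / c * (φ (l (k + 1) - lstar) - φ (l (k + 2) - lstar)) := by
    intro k
    have h1 := hmem (k + 1) (by omega)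
    have h2 := hmem (k + 2) (by omega)
    have hder := hφderiv (l (k + 1) - lstar) (hwin' (k + 1) (by omega)).1 h1.2
    have hKL' := hKL (k + 1) (by omega)
    simp only [Nat.add_sub_cancel] at hKL'
    have hdk : 0 < d k := by
      by_contra h
      push_neg at h
      have : d k = 0 := le_antisymm h (hd k)
      rw [this, mul_zero] at hKL'
      linarith
    have hdiff : c * d (k + 1) ^ 2 ≤ (l (k + 1) - lstar) - (l (k + 2) - lstar) := by
      have := hdec (k + 1)
      linarith
    have hle : l (k + 2) - lstar ≤ l (k + 1) - lstar := by
      have := hmono (k + 1); linarith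
    rcases eq_or_lt_of_le hle with heq | hlt
    · -- no decrease: d (k+1) = 0
      have hsq : d (k + 1) ^ 2 ≤ 0 := by nlinarith
      have hdk1 : d (k + 1) = 0 :=
        le_antisymm (by nlinarith [hd (k + 1)]) (hd (k + 1))
      rw [hdk1, heq]
      simp [hd k]
    · -- strict decrease: use concavity
      have hslope := hφconc.le_slope_of_hasDerivAt h2 h1 hlt hder.1
      rw [slope_def_field] at hslope
      have hgap : 0 < (l (k + 1) - lstar) - (l (k + 2) - lstar) := by linarith
      have htan : φ' (l (k + 1) - lstar) * ((l (k + 1) - lstar) - (l (k + 2) - lstar)) ≤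
          φ (l (k + 1) - lstar) - φ (l (k + 2) - lstar) := by
        rw [le_div_iff₀ hgap] at hslope
        linarith [hslope]
      -- chain the inequalities
      have hchain : c * d (k + 1) ^ 2 ≤
          (φ (l (k + 1) - lstar) - φ (l (k + 2) - lstar)) * (M * d k) := by
        have h3 : (l (k + 1) - lstar) - (l (k + 2) - lstar) ≤
            ((l (k + 1) - lstar) - (l (k + 2) - lstar)) *
              (φ' (l (k + 1) - lstar) * M * d k) := by
          nlinarith
        nlinarith [hder.2, mul_pos hM hdk]
      have hΔ : 0 ≤ φ (l (k + 1) - lstar) - φ (l (k + 2) - lstar) := by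
        nlinarith [hder.2, mul_pos hM hdk]
      -- AM-GM: 2 d_{k+1} ≤ d_k + (M/c) Δ
      set b : ℝ := M / c * (φ (l (k + 1) - lstar) - φ (l (k + 2) - lstar)) with hbdef
      have hbnn : 0 ≤ b := mul_nonneg (div_pos hM hc).le hΔ
      have hb : d (k + 1) ^ 2 ≤ b * d k := by
        rw [hbdef, div_mul_eq_mul_div, div_mul_eq_mul_div, le_div_iff₀ hc]
        nlinarith
      nlinarith [sq_nonneg (d k - b), hb, hd (k + 1), hd k, hbnn]
  -- telescoped partial-sum bound
  have tel : ∀ n : ℕ, 2 * (∑ k ∈ Finset.range n, d (k + 1)) ≤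
      (∑ k ∈ Finset.range n, d k) +
        M / c * (φ (l 1 - lstar) - φ (l (n + 1) - lstar)) := by
    intro n
    induction n with
    | zero => simp
    | succ n ih =>
      rw [Finset.sum_range_succ, Finset.sum_range_succ]
      have := key n
      have harr : (n : ℕ) + 1 + 1 = n + 2 := by ring
      calc 2 * ((∑ k ∈ Finset.range n, d (k + 1)) + d (n + 1))
          = 2 * (∑ k ∈ Finset.range n, d (k + 1)) + 2 * d (n + 1) := by ring
        _ ≤ ((∑ k ∈ Finset.range n, d k) +
              M / c * (φ (l 1 - lstar) - φ (l (n + 1) - lstar))) +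
            (d n + M / c * (φ (l (n + 1) - lstar) - φ (l (n + 2) - lstar))) := by
            exact add_le_add ih this
        _ = ((∑ k ∈ Finset.range n, d k) + d n) +
            M / c * (φ (l 1 - lstar) - φ (l (n + 1 + 1) - lstar)) := by
            rw [show n + 1 + 1 = n + 2 from rfl]; ring
  have hMc : 0 ≤ M / c := le_of_lt (div_pos hM hc)
  -- bound on all partial sums
  have bound : ∀ n : ℕ, (∑ k ∈ Finset.range n, d k) ≤ 2 * d 0 + M / c * φ (l 1 - lstar) := by
    intro n
    cases n with
    | zero =>
      simp only [Finset.range_zero, Finset.sum_empty]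
      have := hd 0
      nlinarith
    | succ n =>
      have hT := tel n
      have hφn : 0 ≤ φ (l (n + 1) - lstar) :=
        hφnonneg _ (hmem (n + 1) (by omega)).1 (hmem (n + 1) (by omega)).2
      have hsum : (∑ k ∈ Finset.range (n + 1), d k) =
          d 0 + ∑ k ∈ Finset.range n, d (k + 1) := by
        rw [Finset.sum_range_succ']
        ring
      have hS : (∑ k ∈ Finset.range n, d k) ≤
          d 0 + ∑ k ∈ Finset.range n, d (k + 1) := by
        rw [← hsum, Finset.sum_range_succ]
        have := hd n
        have hle : (∑ k ∈ Finset.range n, d k) ≤ (∑ k ∈ Finset.range n, d k) + d n := by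
          linarith
        exact hle
      have hφdrop : M / c * (φ (l 1 - lstar) - φ (l (n + 1) - lstar)) ≤
          M / c * φ (l 1 - lstar) := by
        have : φ (l 1 - lstar) - φ (l (n + 1) - lstar) ≤ φ (l 1 - lstar) := by linarith
        nlinarith
      rw [hsum]
      linarith
  have hsummable : Summable d :=
    summable_of_sum_range_le hd bound
  exact ⟨hsummable, Summable.tsum_le_of_sum_range_le hsummable bound⟩
end
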